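/- arXiv:2109.10426 — 15 statements merged into one kernel-verified Lean document; each statement's English description precedes it below -/
import Mathlib

section
/- Let a ∈ ℝ and w ∈ ℂ. Then the following are equivalent: (i) for every τ > 0, every z ∈ ℂ with z + a − w·exp(−τ·z) = 0 satisfies Re(z) < 0; (ii) |w| ≤ a and Re(w) < a. (This characterizes the delay-independent stability region of equation (*).) -/
/-!
Sufficiency: a root with `0 ≤ re z` satisfies `‖z + a‖ = ‖w‖ e^{-τ re z} ≤ a`, which for `a ≥ 0`
forces `z = 0`, and then `w = a`, contradicting `re w < a`.

Necessity, by producing a root in the closed right half-plane for some delay. If `|a| < ‖w‖`, the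
point `a + iy` with `y = √(‖w‖² - a²)` has the same norm as `w`, so a suitable delay rotates `w`
onto it and `iy` is a root. If `‖w‖ + a ≤ 0`, the map `z ↦ -a + w e^{-τz}` sends the right
half-plane into itself and, since `exp` is 1-Lipschitz on the left half-plane, is a contraction
for small `τ`; its fixed point is a root. In the remaining case `w = a ≥ 0` and `0` is a root.
-/

open Complex

theorem Complex.norm_exp_sub_exp_le {u v : ℂ} (hu : u.re ≤ 0) (hv : v.re ≤ 0) :
    ‖exp u - exp v‖ ≤ ‖u - v‖ := by
  have hconv : Convex ℝ {z : ℂ | z.re ≤ 0} :=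
    convex_halfSpace_le reLm.isLinear 0
  simpa using hconv.norm_image_sub_le_of_norm_hasDerivWithin_le
    (fun z _ => (hasDerivAt_exp z).hasDerivWithinAt) (C := 1)
    (fun z hz => by simpa [norm_exp] using hz) hv hu

theorem exists_pos_exp_neg_mul_I_eq {c : ℂ} (hc : ‖c‖ = 1) {y : ℝ} (hy : 0 < y) :
    ∃ τ : ℝ, 0 < τ ∧ exp (-(τ : ℂ) * (y * I)) = c := by
  refine ⟨(2 * Real.pi - arg c) / y, div_pos (by linarith [arg_le_pi c, Real.pi_pos]) hy, ?_⟩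
  have hτy : -(((2 * Real.pi - arg c) / y : ℝ) : ℂ) * (y * I) = arg c * I - 2 * Real.pi * I := by
    have : (y : ℂ) ≠ 0 := by exact_mod_cast hy.ne'
    push_cast
    field_simp
    ring
  rw [hτy, exp_sub, exp_two_pi_mul_I, div_one]
  simpa [hc] using norm_mul_exp_arg_mul_I c

theorem exists_root_re_eq_zero_of_abs_lt_norm {a : ℝ} {w : ℂ} (h : |a| < ‖w‖) :
    ∃ τ : ℝ, 0 < τ ∧ ∃ z : ℂ, z.re = 0 ∧ z + a - w * exp (-τ * z) = 0 := by
  have hw : w ≠ 0 := norm_pos_iff.mp ((abs_nonneg a).trans_lt h)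
  set y := √(‖w‖ ^ 2 - a ^ 2)
  have hy : 0 < y := Real.sqrt_pos.mpr (by nlinarith [sq_abs a, abs_nonneg a])
  have hnorm : ‖(a + y * I : ℂ)‖ = ‖w‖ := by
    rw [norm_add_mul_I, Real.sq_sqrt (by nlinarith [sq_abs a, abs_nonneg a]), add_sub_cancel,
      Real.sqrt_sq (norm_nonneg w)]
  obtain ⟨τ, hτ, hexp⟩ := exists_pos_exp_neg_mul_I_eq (c := (a + y * I) / w)
    (by rw [norm_div, hnorm, div_self (norm_ne_zero_iff.mpr hw)]) hy
  refine ⟨τ, hτ, y * I, by simp, ?_⟩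
  rw [hexp, mul_div_cancel₀ _ hw]
  ring

theorem exists_root_re_nonneg_of_norm_add_nonpos {a : ℝ} {w : ℂ} (h : ‖w‖ + a ≤ 0) {τ : ℝ}
    (hτ : 0 ≤ τ) (hτw : τ * ‖w‖ < 1) :
    ∃ z : ℂ, 0 ≤ z.re ∧ z + a - w * exp (-τ * z) = 0 := by
  set S : Set ℂ := {z | 0 ≤ z.re}
  set g : ℂ → ℂ := fun z => -a + w * exp (-τ * z)
  have hre : ∀ z ∈ S, (-τ * z).re ≤ 0 := fun z hz => by
    simpa using mul_nonneg hτ hz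
  have hmaps : Set.MapsTo g S S := fun z hz => by
    have hbound : ‖w * exp (-τ * z)‖ ≤ ‖w‖ := by
      rw [norm_mul, norm_exp]
      exact mul_le_of_le_one_right (norm_nonneg w) (Real.exp_le_one_iff.mpr (hre z hz))
    have := neg_le_of_abs_le (abs_re_le_norm (w * exp (-τ * z)))
    change 0 ≤ (-(a : ℂ) + w * exp (-τ * z)).re
    rw [add_re, neg_re, ofReal_re]
    linarith
  have hcontr : ContractingWith ⟨τ * ‖w‖, by positivity⟩ (hmaps.restrict g S S) := by
    refine ⟨hτw, LipschitzWith.of_dist_le_mul fun x y => ?_⟩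
    simp only [Subtype.dist_eq, Set.MapsTo.val_restrict_apply, dist_eq_norm, g]
    calc ‖-a + w * exp (-τ * x) - (-a + w * exp (-τ * y))‖
        = ‖w‖ * ‖exp (-τ * x) - exp (-τ * y)‖ := by rw [← norm_mul]; ring_nf
      _ ≤ ‖w‖ * ‖-τ * (x : ℂ) - -τ * y‖ :=
          mul_le_mul_of_nonneg_left (norm_exp_sub_exp_le (hre x x.2) (hre y y.2)) (norm_nonneg w)
      _ = τ * ‖w‖ * ‖(x : ℂ) - y‖ := by
          rw [← mul_sub_left_distrib, norm_mul, norm_neg, norm_real, Real.norm_of_nonneg hτ]; ring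
  obtain ⟨z, hzS, hfix, -⟩ := hcontr.exists_fixedPoint'
    (isClosed_le continuous_const continuous_re).isComplete hmaps (x := 0) (by simp)
    (edist_ne_top _ _)
  exact ⟨z, hzS, by linear_combination -hfix.eq⟩

theorem re_neg_of_root {a : ℝ} {w z : ℂ} {τ : ℝ} (hw : ‖w‖ ≤ a) (hwre : w.re < a) (hτ : 0 ≤ τ)
    (hz : z + a - w * exp (-τ * z) = 0) : z.re < 0 := by
  by_contra! hzre
  have ha : 0 ≤ a := (norm_nonneg w).trans hw
  have hle : ‖z + a‖ ≤ a := calc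
    ‖z + a‖ = ‖w‖ * Real.exp (-(τ * z.re)) := by
      rw [eq_of_sub_eq_zero hz, norm_mul, norm_exp]; simp
    _ ≤ a * 1 := mul_le_mul hw (Real.exp_le_one_iff.mpr (by nlinarith)) (by positivity) ha
    _ = a := mul_one a
  have hsq : (z.re + a) ^ 2 + z.im ^ 2 ≤ a ^ 2 := by
    have := pow_le_pow_left₀ (norm_nonneg _) hle 2
    rwa [Complex.sq_norm, normSq_apply, add_re, add_im, ofReal_re, ofReal_im, add_zero, ← sq,
      ← sq] at this
  have hz0 : z = 0 := Complex.ext (by rw [zero_re]; nlinarith) (by rw [zero_im]; nlinarith)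
  subst hz0
  have : w.re = a := by simpa [sub_eq_zero, eq_comm] using congrArg re hz
  linarith

/-- Delay-independent stability region of `z + a - w * exp (-τ z) = 0`:
all roots have negative real parts for every delay `τ > 0` iff `|w| ≤ a` and `Re w < a`. -/
theorem delay_independent_stability (a : ℝ) (w : ℂ) :
    (∀ τ : ℝ, 0 < τ → ∀ z : ℂ, z + (a : ℂ) - w * Complex.exp (-(τ : ℂ) * z) = 0 → z.re < 0) ↔
      (‖w‖ ≤ a ∧ w.re < a) := by
  refine ⟨fun H => ?_, fun ⟨hw, hwre⟩ τ hτ z hz => re_neg_of_root hw hwre hτ.le hz⟩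
  by_contra hunstable
  suffices ∃ τ : ℝ, 0 < τ ∧ ∃ z : ℂ, 0 ≤ z.re ∧ z + a - w * exp (-τ * z) = 0 by
    obtain ⟨τ, hτ, z, hzre, hz⟩ := this
    exact (H τ hτ z hz).not_ge hzre
  rcases lt_or_ge |a| ‖w‖ with hlt | hle
  · obtain ⟨τ, hτ, z, hzre, hz⟩ := exists_root_re_eq_zero_of_abs_lt_norm hlt
    exact ⟨τ, hτ, z, hzre.ge, hz⟩
  rcases lt_or_ge a 0 with ha | ha
  · have hτ : 0 < 1 / (‖w‖ + 1) := by positivity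
    have hτw : 1 / (‖w‖ + 1) * ‖w‖ < 1 := by
      rw [one_div_mul_eq_div, div_lt_one (by positivity)]
      linarith
    exact ⟨_, hτ, exists_root_re_nonneg_of_norm_add_nonpos
      (by linarith [abs_of_neg ha]) hτ.le hτw⟩
  · rw [abs_of_nonneg ha] at hle
    have hawre : a ≤ w.re := not_lt.mp fun h => hunstable ⟨hle, h⟩
    have hnorm : ‖w‖ = a := le_antisymm hle (hawre.trans (re_le_norm w))
    have hw : w = a := hnorm ▸ RCLike.norm_le_re_iff_eq_norm.mp (hle.trans hawre)
    exact ⟨1, one_pos, 0, le_rfl, by simp [hw]⟩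
end

section
/- Let a ∈ ℝ and w ∈ ℂ with w ≠ 0 and Re(w) < a < |w|. Then τ_c(a,w) > 0, and for every τ > 0: every z ∈ ℂ with z + a − w·exp(−τ·z) = 0 satisfies Re(z) < 0 if and only if τ < τ_c(a,w). -/
/-!
Roots in the closed right half-plane satisfy `‖z + a‖ = ‖w‖ exp (-τ re z) ≤ ‖w‖`, so they stay
in a compact set and the set of delays admitting such a root is closed. A root in the open right
half-plane persists under small changes of `τ` (a Rouché-type argument via the maximum modulus
principle). A root `iy` on the imaginary axis forces `|y| = ω := √(‖w‖² - a²)` and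
`cos (arg w) = cos (arccos (a / ‖w‖) + τ ω)`, hence `τ ≥ τ_c`, and such a root exists at
`τ = τ_c`. There the root is simple and `dz/dτ = -z (z + a) / (1 + τ (z + a))` has real part
`y² / |1 + τ (z + a)|² > 0`, so roots cross the axis only from left to right. At `τ = 0` the only
root `w - a` lies in the left half-plane. Connectedness of `[0, τ]` gives stability for
`τ < τ_c`, and continuous induction upwards from `τ_c` gives instability for `τ ≥ τ_c`.
-/

open Complex Filter Metric Set Topology

theorem exists_zero_of_norm_sub_lt_norm {f g : ℂ → ℂ} {c : ℂ} {ρ : ℝ} (hρ : 0 < ρ)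
    (hf : DiffContOnCl ℂ f (ball c ρ)) (hg : DiffContOnCl ℂ g (ball c ρ)) (hfc : f c = 0)
    (hfg : ∀ z ∈ sphere c ρ, ‖f z - g z‖ < ‖g z‖) : ∃ z ∈ ball c ρ, g z = 0 := by
  by_contra! hg₀
  have hg₀' : ∀ z ∈ closure (ball c ρ), g z ≠ 0 := by
    rw [closure_ball c hρ.ne']
    intro z hz
    rcases (mem_closedBall.mp hz).lt_or_eq with h | h
    · exact hg₀ z (mem_ball.mpr h)
    · exact norm_pos_iff.mp ((norm_nonneg _).trans_lt (hfg z (mem_sphere.mpr h)))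
  -- `(f - g) / g` is `-1` at the centre but has modulus `< 1` on the boundary sphere.
  obtain ⟨z, hz, hmax⟩ := Complex.exists_mem_frontier_isMaxOn_norm isBounded_ball
    (nonempty_ball.mpr hρ) ((hg.inv hg₀').smul (hf.sub hg))
  have hcz : ‖(g c)⁻¹ • (f c - g c)‖ ≤ ‖(g z)⁻¹ • (f z - g z)‖ :=
    hmax (subset_closure (mem_ball_self hρ))
  have hc : (g c)⁻¹ • (f c - g c) = -1 := by
    rw [hfc, zero_sub, smul_eq_mul, mul_neg, inv_mul_cancel₀ (hg₀' c (subset_closure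
      (mem_ball_self hρ)))]
  rw [hc, norm_neg, norm_one, smul_eq_mul, norm_mul, norm_inv, inv_mul_eq_div,
    one_le_div₀ (norm_pos_iff.mpr (hg₀' z (frontier_subset_closure hz)))] at hcz
  rw [frontier_ball c hρ.ne'] at hz
  exact (hfg z hz).not_ge hcz

theorem Differentiable.eventually_nhdsNE_ne_zero {f : ℂ → ℂ} (hf : Differentiable ℂ f) {z₁ : ℂ}
    (hz₁ : f z₁ ≠ 0) (z₀ : ℂ) : ∀ᶠ z in 𝓝[≠] z₀, f z ≠ 0 := by
  refine (hf.analyticAt z₀).eventually_eq_zero_or_eventually_ne_zero.resolve_left fun h ↦ hz₁ ?_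
  exact (hf.differentiableOn.analyticOnNhd isOpen_univ)
    |>.eqOn_zero_of_preconnected_of_eventuallyEq_zero isPreconnected_univ (mem_univ z₀) h
    (mem_univ z₁)

theorem eventually_exists_zero_mem {X : Type*} [TopologicalSpace X] {F : X → ℂ → ℂ}
    (hF : Continuous ↿F) (hFd : ∀ x, Differentiable ℂ (F x)) {x₀ : X} {z₀ : ℂ}
    (hz₀ : F x₀ z₀ = 0) (hiso : ∀ᶠ z in 𝓝[≠] z₀, F x₀ z ≠ 0) {U : Set ℂ} (hU : U ∈ 𝓝 z₀) :
    ∀ᶠ x in 𝓝 x₀, ∃ z ∈ U, F x z = 0 := by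
  obtain ⟨ε, hε, hball⟩ := eventually_nhds_iff_ball.mp
    (eventually_nhdsWithin_iff.mp (hiso.and (mem_nhdsWithin_of_mem_nhds hU)))
  have hε₂ : 0 < ε / 2 := half_pos hε
  have hsphere : ∀ z ∈ sphere z₀ (ε / 2), F x₀ z ≠ 0 := fun z hz ↦
    (hball z (sphere_subset_ball (half_lt_self hε) hz)
      (ne_of_mem_sphere hz hε₂.ne')).1
  have hsub : ball z₀ (ε / 2) ⊆ U := fun z hz ↦ by
    rcases eq_or_ne z z₀ with rfl | hne
    · exact mem_of_mem_nhds hU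
    · exact (hball z (ball_subset_ball (half_le_self hε.le) hz) hne).2
  have hF₀ : Continuous fun p : X × ℂ ↦ F x₀ p.2 :=
    hF.comp (continuous_const.prodMk continuous_snd)
  have hnear : ∀ᶠ x in 𝓝 x₀, ∀ z ∈ sphere z₀ (ε / 2), ‖F x₀ z - F x z‖ < ‖F x z‖ :=
    (isCompact_sphere z₀ (ε / 2)).eventually_forall_of_forall_eventually fun z hz ↦
      ContinuousAt.eventually_lt (hF₀.sub hF).norm.continuousAt hF.norm.continuousAt
        (by simpa using hsphere z hz)
  filter_upwards [hnear] with x hx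
  obtain ⟨z, hz, hFz⟩ := exists_zero_of_norm_sub_lt_norm hε₂ (hFd x₀).diffContOnCl
    (hFd x).diffContOnCl hz₀ hx
  exact ⟨z, hsub hz, hFz⟩

theorem HasDerivAt.eventually_nhdsGT_lt {g : ℝ → ℝ} {g' t : ℝ} (hg : HasDerivAt g g' t)
    (hg' : 0 < g') : ∀ᶠ s in 𝓝[>] t, g t < g s := by
  have hslope : ∀ᶠ s in 𝓝[>] t, 0 < slope g t s :=
    ((hasDerivAt_iff_tendsto_slope.mp hg).mono_left
      (nhdsWithin_mono t fun s hs ↦ ne_of_gt hs)).eventually (lt_mem_nhds hg')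
  filter_upwards [hslope, self_mem_nhdsWithin] with s hs hts
  rw [slope_def_field, div_pos_iff_of_pos_right (sub_pos.mpr hts)] at hs
  linarith

theorem exists_hasDerivAt_implicit {𝕜 : Type*} [RCLike 𝕜] {f f₁ f₂ : 𝕜 → 𝕜 → 𝕜} {t z₀ : 𝕜}
    (hf₁ : ∀ τ z, HasDerivAt (f · z) (f₁ τ z) τ) (hf₂ : ∀ τ z, HasDerivAt (f τ ·) (f₂ τ z) z)
    (hc₁ : ContinuousAt ↿f₁ (t, z₀)) (hc₂ : ContinuousAt ↿f₂ (t, z₀)) (h₂ : f₂ t z₀ ≠ 0) :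
    ∃ ψ : 𝕜 → 𝕜, ψ t = z₀ ∧ HasDerivAt ψ (-(f₁ t z₀ / f₂ t z₀)) t ∧
      ∀ᶠ τ in 𝓝 t, f τ (ψ τ) = f t z₀ := by
  let L : 𝕜 ≃ₗᵢ[𝕜] (𝕜 →L[𝕜] 𝕜) := ContinuousLinearMap.toSpanSingletonLIE 𝕜 𝕜
  let F₁ τ z := L (f₁ τ z)
  let F₂ τ z := L (f₂ τ z)
  have hinv : (F₂ t z₀).IsInvertible :=
    .of_inverse (g := L (f₂ t z₀)⁻¹) (by ext; simp [F₂, L, h₂]) (by ext; simp [F₂, L, h₂])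
  have df₁ : ∀ᶠ v in 𝓝 (t, z₀), HasFDerivAt (f · v.2) (F₁ v.1 v.2) v.1 :=
    .of_forall fun v ↦ hf₁ v.1 v.2
  have df₂ : ∀ᶠ v in 𝓝 (t, z₀), HasFDerivAt (f v.1 ·) (F₂ v.1 v.2) v.2 :=
    .of_forall fun v ↦ hf₂ v.1 v.2
  have cf₁ : ContinuousAt ↿F₁ (t, z₀) := L.continuous.continuousAt.comp hc₁
  have cf₂ : ContinuousAt ↿F₂ (t, z₀) := L.continuous.continuousAt.comp hc₂
  refine ⟨implicitFunctionOfBivariate df₁ df₂ cf₁ cf₂ hinv,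
    (eventually_apply_eq_iff_implicitFunctionOfBivariate df₁ df₂ cf₁ cf₂ hinv).self_of_nhds.mp
      rfl,
    ?_, eventually_apply_implicitFunctionOfBivariate df₁ df₂ cf₁ cf₂ hinv⟩
  have hval : (F₂ t z₀).inverse (F₁ t z₀ 1) = f₁ t z₀ / f₂ t z₀ :=
    hinv.inverse_apply_eq.mpr (by simp [F₁, F₂, L, h₂])
  simpa [hval] using
    (hasStrictFDerivAt_implicitFunctionOfBivariate df₁ df₂ cf₁ cf₂ hinv).hasFDerivAt.hasDerivAt

theorem Real.mul_cos_arccos_div {a r : ℝ} (ha : |a| ≤ r) (hr : 0 < r) :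
    r * Real.cos (Real.arccos (a / r)) = a := by
  obtain ⟨h₁, h₂⟩ := abs_le.mp ha
  rw [Real.cos_arccos (by rwa [le_div_iff₀ hr, neg_one_mul]) (by rwa [div_le_one hr])]
  field_simp

theorem Real.mul_sin_arccos_div {a r : ℝ} (hr : 0 < r) :
    r * Real.sin (Real.arccos (a / r)) = √(r ^ 2 - a ^ 2) := by
  rw [Real.sin_arccos, ← Real.sqrt_sq hr.le, ← Real.sqrt_mul (sq_nonneg r), Real.sqrt_sq hr.le]
  congr 1
  field_simp

theorem Real.sqrt_sq_sub_sq_pos {a r : ℝ} (ha : |a| < r) : 0 < √(r ^ 2 - a ^ 2) :=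
  Real.sqrt_pos.mpr (sub_pos.mpr (sq_lt_sq' (abs_lt.mp ha).1 (abs_lt.mp ha).2))

noncomputable def delayChar (a : ℝ) (w τ z : ℂ) : ℂ := z + a - w * exp (-τ * z)

def unstableDelays (a : ℝ) (w : ℂ) : Set ℝ := {τ | ∃ z, delayChar a w τ z = 0 ∧ 0 ≤ z.re}

noncomputable def criticalDelay (a : ℝ) (w : ℂ) : ℝ :=
  (|w.arg| - Real.arccos (a / ‖w‖)) / √(‖w‖ ^ 2 - a ^ 2)

section
variable {a : ℝ} {w z : ℂ}

theorem delayChar_eq_zero_iff {τ : ℂ} : delayChar a w τ z = 0 ↔ z + a = w * exp (-τ * z) :=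
  sub_eq_zero

theorem delayChar_eq_zero_iff_mul_exp {τ : ℂ} :
    delayChar a w τ z = 0 ↔ (z + a) * exp (τ * z) = w := by
  rw [delayChar_eq_zero_iff, ← eq_div_iff (exp_ne_zero _), div_eq_mul_inv, ← exp_neg, neg_mul]

theorem continuous_delayChar : Continuous fun p : ℂ × ℂ ↦ delayChar a w p.1 p.2 := by
  unfold delayChar; fun_prop

theorem differentiable_delayChar (τ : ℂ) : Differentiable ℂ (delayChar a w τ) := by
  unfold delayChar; fun_prop

theorem hasDerivAt_delayChar_delay (τ z : ℂ) :
    HasDerivAt (delayChar a w · z) (w * z * exp (-τ * z)) τ := by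
  have := ((((hasDerivAt_id τ).neg.mul_const z).cexp.const_mul w).const_sub (z + a))
  exact this.congr_deriv (by simp; ring)

theorem hasDerivAt_delayChar (τ z : ℂ) :
    HasDerivAt (delayChar a w τ) (1 + τ * w * exp (-τ * z)) z := by
  have := ((hasDerivAt_id z).add_const (a : ℂ)).sub
    ((((hasDerivAt_id z).const_mul (-τ)).cexp).const_mul w)
  exact this.congr_deriv (by simp; ring)

theorem delayChar_neg_ne_zero (hw : w ≠ 0) (τ : ℂ) : delayChar a w τ (-a) ≠ 0 := by
  simp [delayChar, hw, exp_ne_zero]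

theorem norm_add_eq_of_delayChar_eq_zero {τ : ℝ} (h : delayChar a w τ z = 0) :
    ‖z + a‖ = ‖w‖ * Real.exp (-(τ * z.re)) := by
  rw [delayChar_eq_zero_iff.mp h, norm_mul, norm_exp]
  simp

theorem isClosed_unstableDelays_inter_Icc {c d : ℝ} (hc : 0 ≤ c) :
    IsClosed (unstableDelays a w ∩ Icc c d) := by
  let K : Set (ℝ × ℂ) := (Icc c d ×ˢ closedBall (-(a : ℂ)) ‖w‖) ∩
    {p | delayChar a w p.1 p.2 = 0 ∧ 0 ≤ p.2.re}
  have hK : IsCompact K := (isCompact_Icc.prod (isCompact_closedBall _ _)).inter_right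
    ((isClosed_eq (continuous_delayChar.comp (continuous_ofReal.prodMap continuous_id))
      continuous_const).inter (isClosed_le continuous_const (continuous_re.comp continuous_snd)))
  suffices unstableDelays a w ∩ Icc c d = Prod.fst '' K from
    this ▸ (hK.image continuous_fst).isClosed
  ext τ
  constructor
  · rintro ⟨⟨z, hz, hre⟩, hτ⟩
    refine ⟨(τ, z), ⟨⟨hτ, ?_⟩, hz, hre⟩, rfl⟩
    rw [mem_closedBall, dist_eq_norm, sub_neg_eq_add, norm_add_eq_of_delayChar_eq_zero hz]
    exact mul_le_of_le_one_right (norm_nonneg w) (Real.exp_le_one_iff.mpr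
      (neg_nonpos.mpr (mul_nonneg (hc.trans hτ.1) hre)))
  · rintro ⟨⟨τ, z⟩, ⟨⟨hτ, -⟩, hz, hre⟩, rfl⟩
    exact ⟨⟨z, hz, hre⟩, hτ⟩

theorem zero_notMem_unstableDelays (h₁ : w.re < a) : 0 ∉ unstableDelays a w := by
  rintro ⟨z, hz, hre⟩
  rw [delayChar_eq_zero_iff] at hz
  have := congrArg re hz
  simp only [add_re, ofReal_re, ofReal_zero, neg_zero, zero_mul, exp_zero, mul_one] at this
  linarith

theorem eventually_exists_root_re_pos (hw : w ≠ 0) {t : ℝ} (h : delayChar a w t z = 0)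
    (hre : 0 < z.re) : ∀ᶠ τ : ℝ in 𝓝 t, ∃ z, delayChar a w τ z = 0 ∧ 0 < z.re := by
  have hiso := (differentiable_delayChar (a := a) (w := w) t).eventually_nhdsNE_ne_zero
    (delayChar_neg_ne_zero hw t) z
  filter_upwards [eventually_exists_zero_mem (F := fun τ : ℝ ↦ delayChar a w τ)
    (continuous_delayChar.comp (continuous_ofReal.prodMap continuous_id))
    (fun τ ↦ differentiable_delayChar τ) h hiso
    ((isOpen_lt continuous_const continuous_re).mem_nhds hre)] with τ ⟨z, hz, hτz⟩
  exact ⟨z, hτz, hz⟩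

theorem eventually_nhdsGT_exists_root_re_pos {t : ℝ} (h : delayChar a w t z = 0)
    (hre : z.re = 0) (him : z.im ≠ 0) :
    ∀ᶠ τ : ℝ in 𝓝[>] t, ∃ z, delayChar a w τ z = 0 ∧ 0 < z.re := by
  have hz := delayChar_eq_zero_iff.mp h
  have hB : 1 + t * (z + a) ≠ 0 := by
    intro h0
    have him0 : t * z.im = 0 := by simpa [hre] using congrArg im h0
    rcases mul_eq_zero.mp him0 with rfl | h0'
    · simp at h0
    · exact him h0'
  obtain ⟨ψ, hψt, hψ, hψroot⟩ := exists_hasDerivAt_implicit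
    (hasDerivAt_delayChar_delay (a := a) (w := w)) hasDerivAt_delayChar
    (by unfold Function.HasUncurry.uncurry; fun_prop)
    (by unfold Function.HasUncurry.uncurry; fun_prop) (by rwa [mul_assoc, ← hz])
  have hd : 0 < (-(w * z * exp (-t * z) / (1 + t * w * exp (-t * z)))).re := by
    -- using `w exp (-t z) = z + a`, the real part becomes `z.im ^ 2 / normSq (1 + t (z + a))`
    rw [mul_right_comm, mul_assoc (t : ℂ), ← hz]
    simp only [neg_re, div_re, mul_re, mul_im, add_re, add_im, one_re, one_im, ofReal_re,
      ofReal_im, hre]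
    rw [← add_div, ← neg_div]
    exact div_pos (by nlinarith [mul_self_pos.mpr him]) (normSq_pos.mpr hB)
  have hroots : ∀ᶠ τ : ℝ in 𝓝 t, delayChar a w τ (ψ τ) = 0 := by
    rw [h] at hψroot
    exact continuous_ofReal.continuousAt.eventually hψroot
  filter_upwards [hψ.real_of_complex.eventually_nhdsGT_lt hd, nhdsWithin_le_nhds hroots]
    with τ hτ hτroot
  rw [hψt, hre] at hτ
  exact ⟨ψ τ, hτroot, hτ⟩

theorem abs_im_eq_and_cos_arg_eq {τ : ℝ} (ha : |a| < ‖w‖) (h : delayChar a w τ z = 0)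
    (hre : z.re = 0) : |z.im| = √(‖w‖ ^ 2 - a ^ 2) ∧
      Real.cos w.arg = Real.cos (Real.arccos (a / ‖w‖) + τ * √(‖w‖ ^ 2 - a ^ 2)) := by
  have hr : 0 < ‖w‖ := (abs_nonneg a).trans_lt ha
  have hnorm : ‖z + a‖ ^ 2 = a ^ 2 + z.im ^ 2 := by
    rw [Complex.sq_norm, normSq_apply]
    simp only [add_re, hre, ofReal_re, zero_add, add_im, ofReal_im, add_zero]
    ring
  have hy : |z.im| = √(‖w‖ ^ 2 - a ^ 2) := by
    rw [← Real.sqrt_sq_eq_abs, ← add_sub_cancel_left (a ^ 2) (z.im ^ 2), ← hnorm,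
      norm_add_eq_of_delayChar_eq_zero h, hre]
    simp
  refine ⟨hy, mul_left_cancel₀ hr.ne' ?_⟩
  have hwre : w.re = a * Real.cos (τ * z.im) - z.im * Real.sin (τ * z.im) := by
    rw [← delayChar_eq_zero_iff_mul_exp.mp h]
    simp [exp_re, exp_im, hre]
  have heven : a * Real.cos (τ * z.im) - z.im * Real.sin (τ * z.im) =
      a * Real.cos (τ * |z.im|) - |z.im| * Real.sin (τ * |z.im|) := by
    rcases abs_cases z.im with ⟨hy, -⟩ | ⟨hy, -⟩ <;> simp [hy]
  rw [norm_mul_cos_arg, hwre, heven, Real.cos_add, mul_sub, ← mul_assoc, ← mul_assoc,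
    Real.mul_cos_arccos_div ha.le hr, Real.mul_sin_arccos_div hr, hy]

theorem arccos_lt_abs_arg (h₁ : w.re < a) (ha : |a| < ‖w‖) :
    Real.arccos (a / ‖w‖) < |w.arg| := by
  have hr : 0 < ‖w‖ := (abs_nonneg a).trans_lt ha
  by_contra! h
  have := Real.strictAntiOn_cos.antitoneOn ⟨abs_nonneg _, abs_arg_le_pi w⟩
    ⟨Real.arccos_nonneg _, Real.arccos_le_pi _⟩ h
  rw [Real.cos_abs] at this
  have := mul_le_mul_of_nonneg_left this hr.le
  rw [norm_mul_cos_arg, Real.mul_cos_arccos_div ha.le hr] at this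
  linarith

theorem criticalDelay_pos (h₁ : w.re < a) (ha : |a| < ‖w‖) : 0 < criticalDelay a w :=
  div_pos (sub_pos.mpr (arccos_lt_abs_arg h₁ ha)) (Real.sqrt_sq_sub_sq_pos ha)

theorem abs_arg_sub_arccos_le {τ : ℝ} (hτ : 0 ≤ τ) (ha : |a| < ‖w‖)
    (h : delayChar a w τ z = 0) (hre : z.re = 0) :
    |w.arg| - Real.arccos (a / ‖w‖) ≤ τ * √(‖w‖ ^ 2 - a ^ 2) := by
  by_contra! hlt
  have hnonneg : 0 ≤ Real.arccos (a / ‖w‖) + τ * √(‖w‖ ^ 2 - a ^ 2) :=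
    add_nonneg (Real.arccos_nonneg _) (mul_nonneg hτ (Real.sqrt_nonneg _))
  have := Real.strictAntiOn_cos ⟨hnonneg, by linarith [abs_arg_le_pi w]⟩
    ⟨abs_nonneg _, abs_arg_le_pi w⟩ (by linarith)
  rw [Real.cos_abs, (abs_im_eq_and_cos_arg_eq ha h hre).2] at this
  exact this.false

theorem exists_root_re_eq_zero_criticalDelay (ha : |a| < ‖w‖) :
    ∃ z, delayChar a w (criticalDelay a w) z = 0 ∧ z.re = 0 := by
  have hr : 0 < ‖w‖ := (abs_nonneg a).trans_lt ha
  have hτc : criticalDelay a w * √(‖w‖ ^ 2 - a ^ 2) = |w.arg| - Real.arccos (a / ‖w‖) :=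
    div_mul_cancel₀ _ (Real.sqrt_sq_sub_sq_pos ha).ne'
  have key : ∀ σ : ℝ, (σ = 1 ∨ σ = -1) → σ * |w.arg| = w.arg →
      delayChar a w (criticalDelay a w) (σ * √(‖w‖ ^ 2 - a ^ 2) * I) = 0 := by
    intro σ hσ hθ
    have hpolar : (σ * √(‖w‖ ^ 2 - a ^ 2) * I : ℂ) + a =
        ‖w‖ * exp (σ * Real.arccos (a / ‖w‖) * I) := by
      rcases hσ with rfl | rfl <;> apply Complex.ext <;>
        simp [exp_re, exp_im, Real.mul_cos_arccos_div ha.le hr, Real.mul_sin_arccos_div hr]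
    rw [delayChar_eq_zero_iff_mul_exp, hpolar, mul_assoc, ← exp_add]
    conv_rhs => rw [← norm_mul_exp_arg_mul_I w]
    congr 2
    have : σ * (Real.arccos (a / ‖w‖) + criticalDelay a w * √(‖w‖ ^ 2 - a ^ 2)) = w.arg := by
      rw [hτc, add_sub_cancel, hθ]
    rw [← this]
    push_cast
    ring
  rcases le_or_gt 0 w.arg with h | h
  · exact ⟨_, key 1 (.inl rfl) (by simp [abs_of_nonneg h]), by simp⟩
  · exact ⟨_, key (-1) (.inr rfl) (by simp [abs_of_neg h]), by simp⟩

theorem Icc_criticalDelay_subset_unstableDelays (h₁ : w.re < a) (ha : |a| < ‖w‖) (τ : ℝ) :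
    Icc (criticalDelay a w) τ ⊆ unstableDelays a w := by
  have hw : w ≠ 0 := norm_pos_iff.mp ((abs_nonneg a).trans_lt ha)
  refine IsClosed.Icc_subset_of_forall_mem_nhdsWithin
    (isClosed_unstableDelays_inter_Icc (criticalDelay_pos h₁ ha).le)
    ((exists_root_re_eq_zero_criticalDelay ha).imp fun z hz ↦ ⟨hz.1, hz.2.ge⟩) ?_
  rintro t ⟨⟨z, hz, hre⟩, -⟩
  have hpos : ∀ᶠ τ : ℝ in 𝓝[>] t, ∃ z, delayChar a w τ z = 0 ∧ 0 < z.re := by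
    rcases hre.lt_or_eq with hre | hre
    · exact nhdsWithin_le_nhds (eventually_exists_root_re_pos hw hz hre)
    · refine eventually_nhdsGT_exists_root_re_pos hz hre.symm (abs_pos.mp ?_)
      rw [(abs_im_eq_and_cos_arg_eq ha hz hre.symm).1]
      exact Real.sqrt_sq_sub_sq_pos ha
  exact hpos.mono fun τ ⟨z, hz, hre⟩ ↦ ⟨z, hz, hre.le⟩

theorem notMem_unstableDelays_of_lt_criticalDelay (h₁ : w.re < a) (ha : |a| < ‖w‖) {τ : ℝ}
    (hτ₀ : 0 ≤ τ) (hτ : τ < criticalDelay a w) : τ ∉ unstableDelays a w := by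
  have hw : w ≠ 0 := norm_pos_iff.mp ((abs_nonneg a).trans_lt ha)
  let C := unstableDelays a w ∩ Icc 0 τ
  let P := {t : ℝ | ∃ z, delayChar a w t z = 0 ∧ 0 < z.re}
  have hP : IsOpen P := isOpen_iff_mem_nhds.mpr fun t ⟨z, hz, hre⟩ ↦
    eventually_exists_root_re_pos hw hz hre
  have hcover : Icc 0 τ ⊆ Cᶜ ∪ P := by
    intro t ht
    by_cases htC : t ∈ C
    · obtain ⟨⟨z, hz, hre⟩, -⟩ := htC
      refine .inr ⟨z, hz, hre.lt_of_ne fun h0 ↦ ?_⟩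
      have hω := Real.sqrt_sq_sub_sq_pos ha
      have : t * √(‖w‖ ^ 2 - a ^ 2) < criticalDelay a w * √(‖w‖ ^ 2 - a ^ 2) :=
        mul_lt_mul_of_pos_right (ht.2.trans_lt hτ) hω
      rw [criticalDelay, div_mul_cancel₀ _ hω.ne'] at this
      exact (abs_arg_sub_arccos_le ht.1 ha hz h0.symm).not_gt this
    · exact .inl htC
  have hdisj : Icc 0 τ ∩ (Cᶜ ∩ P) = ∅ :=
    eq_empty_iff_forall_notMem.mpr fun t ⟨ht, htC, z, hz, hre⟩ ↦ htC ⟨⟨z, hz, hre.le⟩, ht⟩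
  rcases isPreconnected_iff_subset_of_disjoint.mp isPreconnected_Icc _ _
    (isClosed_unstableDelays_inter_Icc le_rfl).isOpen_compl hP hcover hdisj with h | h
  · exact fun hτU ↦ h (right_mem_Icc.mpr hτ₀) ⟨hτU, hτ₀, le_rfl⟩
  · obtain ⟨z, hz, hre⟩ := h (left_mem_Icc.mpr hτ₀)
    exact (zero_notMem_unstableDelays h₁ ⟨z, hz, hre.le⟩).elim

end

theorem critical_delay_characterization_general (a : ℝ) (w : ℂ)
    (h₁ : w.re < a) (h₂ : a < ‖w‖) :
    0 < (|w.arg| - Real.arccos (a / ‖w‖)) / Real.sqrt ((‖w‖) ^ 2 - a ^ 2) ∧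
      ∀ τ : ℝ, 0 < τ →
        ((∀ z : ℂ, z + (a : ℂ) - w * Complex.exp (-(τ : ℂ) * z) = 0 → z.re < 0) ↔
          τ < (|w.arg| - Real.arccos (a / ‖w‖)) /
              Real.sqrt ((‖w‖) ^ 2 - a ^ 2)) := by
  have ha : |a| < ‖w‖ := abs_lt.mpr ⟨by linarith [neg_abs_le w.re, abs_re_le_norm w], h₂⟩
  refine ⟨criticalDelay_pos h₁ ha, fun τ hτ ↦ ⟨fun hstable ↦ ?_, fun hlt z hz ↦ ?_⟩⟩
  · by_contra! hge
    obtain ⟨z, hz, hre⟩ := Icc_criticalDelay_subset_unstableDelays h₁ ha τ ⟨hge, le_rfl⟩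
    exact (hstable z hz).not_ge hre
  · by_contra! hre
    exact notMem_unstableDelays_of_lt_criticalDelay h₁ ha hτ.le hlt ⟨z, hz, hre⟩

/-- For `a ∈ ℝ`, `w ∈ ℂ` with `w ≠ 0` and `Re w < a < |w|`, the critical delay
`τ_c(a,w) = (|Arg w| − arccos(a/|w|)) / √(|w|² − a²)` is positive, and for every `τ > 0`
all roots of `z + a − w e^{−τz} = 0` have negative real parts iff `τ < τ_c(a,w)`. -/
theorem critical_delay_characterization (a : ℝ) (w : ℂ) (hw : w ≠ 0)
    (h₁ : w.re < a) (h₂ : a < ‖w‖) :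
    0 < (|w.arg| - Real.arccos (a / ‖w‖)) / Real.sqrt ((‖w‖) ^ 2 - a ^ 2) ∧
      ∀ τ : ℝ, 0 < τ →
        ((∀ z : ℂ, z + (a : ℂ) - w * Complex.exp (-(τ : ℂ) * z) = 0 → z.re < 0) ↔
          τ < (|w.arg| - Real.arccos (a / ‖w‖)) /
              Real.sqrt ((‖w‖) ^ 2 - a ^ 2)) :=
  critical_delay_characterization_general a w h₁ h₂
end

section
/- Let a ∈ ℝ and w ∈ ℂ. Then the following are equivalent: (i) for every τ > 0 there exists z ∈ ℂ with z + a − w·exp(−τ·z) = 0 and Re(z) ≥ 0; (ii) a ≤ Re(w). (This characterizes the delay-independent instability region of equation (*).) -/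
lemma aux_neg_mul_exp_le {x : ℝ} (hx : x ≤ 0) : -x * Real.exp x ≤ Real.exp (-1) := by
  have h1 := Real.add_one_le_exp (-1 - x)
  have h2 : Real.exp (-1 - x) * Real.exp x = Real.exp (-1) := by
    rw [← Real.exp_add]; ring_nf
  nlinarith [Real.exp_pos x]

lemma aux_anti {s t : ℝ} (hs : -1 ≤ s) (hst : s ≤ t) (ht : t ≤ 0) :
    -t * Real.exp t ≤ -s * Real.exp s := by
  have h1 := Real.add_one_le_exp (s - t)
  have h2 : Real.exp (s - t) * Real.exp t = Real.exp s := by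
    rw [← Real.exp_add]; ring_nf
  nlinarith [Real.exp_pos t, Real.exp_pos s,
    mul_nonneg (by linarith : (0:ℝ) ≤ t - s) (by linarith : (0:ℝ) ≤ 1 + s),
    mul_nonneg (by linarith : (0:ℝ) ≤ -s) (Real.exp_pos t).le]

lemma aux_arccos_anti {x y : ℝ} (h : x ≤ y) : Real.arccos y ≤ Real.arccos x := by
  unfold Real.arccos
  have := Real.monotone_arcsin h
  linarith


noncomputable def Gfun (R x : ℝ) : ℝ :=
  Real.arccos (x * Real.exp x / R) + Real.sqrt ((R * Real.exp (-x))^2 - x^2)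

lemma polar_point {R x : ℝ} (hR : 0 < R) (hx : |x| * Real.exp x ≤ R) :
    ((x : ℂ) + (Real.sqrt ((R * Real.exp (-x))^2 - x^2) : ℝ) * Complex.I) =
      ((R * Real.exp (-x) : ℝ) : ℂ) *
        Complex.exp ((Real.arccos (x * Real.exp x / R) : ℝ) * Complex.I) := by
  have hex := Real.exp_pos x
  have hb : |x * Real.exp x / R| ≤ 1 := by
    rw [abs_div, abs_mul, abs_of_pos hex, abs_of_pos hR, div_le_one hR]
    exact hx
  have hb' := abs_le.mp hb
  have hcos : Real.cos (Real.arccos (x * Real.exp x / R)) = x * Real.exp x / R :=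
    Real.cos_arccos hb'.1 hb'.2
  have hsin : Real.sin (Real.arccos (x * Real.exp x / R)) =
      Real.sqrt (1 - (x * Real.exp x / R)^2) := Real.sin_arccos _
  have hpolar : ((R * Real.exp (-x) : ℝ) : ℂ) *
        Complex.exp ((Real.arccos (x * Real.exp x / R) : ℝ) * Complex.I)
      = ((R * Real.exp (-x) * Real.cos (Real.arccos (x * Real.exp x / R)) : ℝ) : ℂ)
        + ((R * Real.exp (-x) * Real.sin (Real.arccos (x * Real.exp x / R)) : ℝ) : ℂ)
          * Complex.I := by
    rw [Complex.exp_mul_I, ← Complex.ofReal_cos, ← Complex.ofReal_sin]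
    push_cast
    ring
  rw [hpolar, hcos, hsin]
  have hre : R * Real.exp (-x) * (x * Real.exp x / R) = x := by
    rw [Real.exp_neg]; field_simp
  have him : R * Real.exp (-x) * Real.sqrt (1 - (x * Real.exp x / R)^2)
      = Real.sqrt ((R * Real.exp (-x))^2 - x^2) := by
    rw [show R * Real.exp (-x) * Real.sqrt (1 - (x * Real.exp x / R)^2)
        = Real.sqrt ((R * Real.exp (-x))^2 * (1 - (x * Real.exp x / R)^2)) from ?_]
    · congr 1
      rw [Real.exp_neg]
      field_simp
    · rw [Real.sqrt_mul (by positivity), Real.sqrt_sq (by positivity)]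
  rw [hre, him]

lemma root_eq {R x : ℝ} (hR : 0 < R) (hx : |x| * Real.exp x ≤ R) :
    (((x : ℂ) + (Real.sqrt ((R * Real.exp (-x))^2 - x^2) : ℝ) * Complex.I) *
      Complex.exp ((x : ℂ) + (Real.sqrt ((R * Real.exp (-x))^2 - x^2) : ℝ) * Complex.I)) =
      (R : ℂ) * Complex.exp ((Gfun R x : ℝ) * Complex.I) := by
  rw [show Complex.exp ((x : ℂ) + (Real.sqrt ((R * Real.exp (-x))^2 - x^2) : ℝ) * Complex.I)
      = Complex.exp ((x:ℝ) : ℂ) *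
        Complex.exp ((Real.sqrt ((R * Real.exp (-x))^2 - x^2) : ℝ) * Complex.I) from by
    rw [← Complex.exp_add]]
  rw [polar_point hR hx]
  rw [show ((Gfun R x : ℝ) : ℂ) * Complex.I
      = (Real.arccos (x * Real.exp x / R) : ℝ) * Complex.I
        + (Real.sqrt ((R * Real.exp (-x))^2 - x^2) : ℝ) * Complex.I from by
    unfold Gfun; push_cast; ring]
  rw [Complex.exp_add, ← Complex.ofReal_exp]
  have hkey : ((R * Real.exp (-x) : ℝ) : ℂ) * ((Real.exp x : ℝ) : ℂ) = (R : ℂ) := by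
    push_cast [Real.exp_neg]
    have : (Real.exp x : ℂ) ≠ 0 := by
      exact_mod_cast (Real.exp_pos x).ne'
    field_simp
  linear_combination (Complex.exp ((Real.arccos (x * Real.exp x / R) : ℝ) * Complex.I) *
    Complex.exp ((Real.sqrt ((R * Real.exp (-x))^2 - x^2) : ℝ) * Complex.I)) * hkey

lemma core (A : ℝ) (V : ℂ) (hV : V ≠ 0) (hIm : 0 ≤ V.im) (hA : A ≤ V.re) :
    ∃ u : ℂ, u * Complex.exp u = V * Complex.exp ((A : ℝ) : ℂ) ∧ A ≤ u.re := by
  have hρ : 0 < ‖V‖ := norm_pos_iff.mpr hV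
  set ρ := ‖V‖ with hρdef
  set R := ρ * Real.exp A with hRdef
  have hR : 0 < R := mul_pos hρ (Real.exp_pos A)
  set φ := Real.arccos (V.re / ρ) with hφdef
  have hφ0 : 0 ≤ φ := Real.arccos_nonneg _
  have hφπ : φ ≤ Real.pi := Real.arccos_le_pi _
  have hreρ : |V.re| ≤ ρ := Complex.abs_re_le_norm V
  have hVpolar : V = (ρ : ℂ) * Complex.exp ((φ : ℝ) * Complex.I) := by
    have hcos : Real.cos φ = V.re / ρ := by
      apply Real.cos_arccos
      · rw [neg_le, ← neg_div]
        apply div_le_one_of_le₀ (by cases abs_le.mp hreρ; linarith) hρ.le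
      · apply div_le_one_of_le₀ (by cases abs_le.mp hreρ; linarith) hρ.le
    have hsq : ρ^2 = V.re^2 + V.im^2 := by
      rw [hρdef, Complex.sq_norm, Complex.normSq_apply]; ring
    have hsin : Real.sin φ = V.im / ρ := by
      rw [hφdef, Real.sin_arccos]
      rw [show 1 - (V.re/ρ)^2 = (V.im/ρ)^2 from by field_simp; nlinarith]
      exact Real.sqrt_sq (by positivity)
    rw [Complex.exp_mul_I, ← Complex.ofReal_cos, ← Complex.ofReal_sin, hcos, hsin]
    apply Complex.ext <;> push_cast <;> simp <;> field_simp
  -- the right endpoint p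
  obtain ⟨p, hp_mem, hp⟩ : ∃ p ∈ Set.Icc (0:ℝ) R, p * Real.exp p = R := by
    have hcont : ContinuousOn (fun x : ℝ => x * Real.exp x) (Set.Icc 0 R) := by fun_prop
    have hsub := intermediate_value_Icc hR.le hcont
    have hmem : R ∈ Set.Icc ((0:ℝ) * Real.exp 0) (R * Real.exp R) := by
      constructor
      · simpa using hR.le
      · nlinarith [Real.one_le_exp hR.le]
    obtain ⟨q, hq1, hq2⟩ := hsub hmem
    exact ⟨q, hq1, hq2⟩
  have hp0 : 0 ≤ p := hp_mem.1
  have hAp : A ≤ p := by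
    by_contra hc
    push_neg at hc
    have hA0 : 0 ≤ A := le_trans hp0 hc.le
    have h1 : A ≤ ρ := le_trans hA (Complex.re_le_norm V)
    have h2 : A * Real.exp A ≤ R := by
      rw [hRdef]; nlinarith [Real.exp_pos A]
    have h3 : p * Real.exp p < A * Real.exp A := by
      nlinarith [Real.exp_lt_exp.mpr hc, Real.exp_pos p]
    rw [hp] at h3; linarith
  have hGcont : Continuous (Gfun R) := by
    unfold Gfun
    exact (Real.continuous_arccos.comp
        ((continuous_id.mul Real.continuous_exp).div_const R)).add
      (Real.continuous_sqrt.comp (((continuous_const.mul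
        (Real.continuous_exp.comp continuous_neg)).pow 2).sub (continuous_id.pow 2)))
  have main : ∃ x : ℝ, A ≤ x ∧ |x| * Real.exp x ≤ R ∧ Gfun R x = φ := by
    have hmono0 : ∀ x : ℝ, 0 ≤ x → x ≤ p → |x| * Real.exp x ≤ R := by
      intro x h0 hxp
      rw [abs_of_nonneg h0, ← hp]
      exact mul_le_mul hxp (Real.exp_le_exp.mpr hxp) (Real.exp_pos x).le hp0
    suffices h : ∃ ℓ, A ≤ ℓ ∧ ℓ ≤ p ∧ (∀ x ∈ Set.Icc ℓ p, |x| * Real.exp x ≤ R) ∧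
        φ ≤ Gfun R ℓ by
      obtain ⟨ℓ, hAl, hlp, hmem, hGl⟩ := h
      have hGp : Gfun R p = 0 := by
        unfold Gfun
        rw [show p * Real.exp p / R = 1 from by rw [hp, div_self hR.ne']]
        rw [show (R * Real.exp (-p))^2 - p^2 = 0 from by
          rw [show R * Real.exp (-p) = p from by
            rw [← hp, Real.exp_neg]
            field_simp]
          ring]
        rw [Real.arccos_one, Real.sqrt_zero, add_zero]
      have hsub := intermediate_value_Icc' hlp hGcont.continuousOn
      have hφmem : φ ∈ Set.Icc (Gfun R p) (Gfun R ℓ) := by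
        rw [hGp]; exact ⟨hφ0, hGl⟩
      obtain ⟨x, hx_mem, hx⟩ := hsub hφmem
      exact ⟨x, le_trans hAl hx_mem.1, hmem x hx_mem, hx⟩
    by_cases hcase : ∀ x ∈ Set.Icc A (0:ℝ), -x * Real.exp x ≤ R
    · refine ⟨A, le_refl _, hAp, ?_, ?_⟩
      · rintro x ⟨hx1, hx2⟩
        rcases le_or_gt 0 x with h0 | h0
        · exact hmono0 x h0 hx2
        · rw [abs_of_neg h0]
          have := hcase x ⟨hx1, h0.le⟩
          linarith
      · have harg : A * Real.exp A / R = A / ρ := by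
          rw [hRdef]
          rw [mul_comm ρ (Real.exp A), ← div_div]
          congr 1
          field_simp
        unfold Gfun
        rw [harg]
        have h1 : Real.arccos (V.re / ρ) ≤ Real.arccos (A / ρ) :=
          aux_arccos_anti (by gcongr)
        have h2 := Real.sqrt_nonneg ((R * Real.exp (-A))^2 - A^2)
        rw [hφdef]; linarith
    · push_neg at hcase
      obtain ⟨x₁, hx₁mem, hx₁⟩ := hcase
      have hx₁0 : x₁ ≤ 0 := hx₁mem.2
      have hRe : R ≤ Real.exp (-1) := le_trans hx₁.le (aux_neg_mul_exp_le hx₁0)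
      obtain ⟨x₀, hx₀mem, hx₀⟩ : ∃ x₀ ∈ Set.Icc (-1:ℝ) 0, -x₀ * Real.exp x₀ = R := by
        have hcont : ContinuousOn (fun x : ℝ => -x * Real.exp x) (Set.Icc (-1:ℝ) 0) := by
          fun_prop
        have hsub := intermediate_value_Icc' (by norm_num : (-1:ℝ) ≤ 0) hcont
        apply hsub
        constructor
        · simpa using hR.le
        · simpa using hRe
      have hAx₀ : A ≤ x₀ := by
        by_contra hc
        push_neg at hc
        have := aux_anti hx₀mem.1 (le_trans hc.le hx₁mem.1) hx₁0
        rw [hx₀] at this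
        linarith
      refine ⟨x₀, hAx₀, le_trans hx₀mem.2 hp0, ?_, ?_⟩
      · rintro x ⟨hxl, hxr⟩
        rcases le_or_gt 0 x with h0 | h0
        · exact hmono0 x h0 hxr
        · rw [abs_of_neg h0]
          have := aux_anti hx₀mem.1 hxl h0.le
          rw [hx₀] at this
          linarith
      · unfold Gfun
        have harg : x₀ * Real.exp x₀ / R = -1 := by
          have hv : x₀ * Real.exp x₀ = -R := by linarith
          rw [hv]
          field_simp
        rw [harg, Real.arccos_neg_one]
        have := Real.sqrt_nonneg ((R * Real.exp (-x₀))^2 - x₀^2)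
        linarith
  obtain ⟨x, hAx, hxR, hGx⟩ := main
  refine ⟨(x : ℂ) + (Real.sqrt ((R * Real.exp (-x))^2 - x^2) : ℝ) * Complex.I, ?_, by
    simpa using hAx⟩
  rw [root_eq hR hxR, hGx, hVpolar, hRdef]
  rw [show ((ρ * Real.exp A : ℝ) : ℂ) = (ρ : ℂ) * ((Real.exp A : ℝ) : ℂ) from by push_cast; ring]
  rw [Complex.ofReal_exp]
  ring

lemma core' (A : ℝ) (V : ℂ) (hV : V ≠ 0) (hA : A ≤ V.re) :
    ∃ u : ℂ, u * Complex.exp u = V * Complex.exp ((A : ℝ) : ℂ) ∧ A ≤ u.re := by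
  rcases le_or_gt 0 V.im with h | h
  · exact core A V hV h hA
  · obtain ⟨u, hu, hur⟩ := core A ((starRingEnd ℂ) V)
      (by simpa using hV) (by simpa using h.le) (by simpa using hA)
    refine ⟨(starRingEnd ℂ) u, ?_, by simpa using hur⟩
    have hc := congrArg (starRingEnd ℂ) hu
    simp only [map_mul, ← Complex.exp_conj, Complex.conj_conj, Complex.conj_ofReal] at hc
    exact hc

/-- Delay-independent instability region of `z + a - w * exp (-τ z) = 0`:
for every delay `τ > 0` there is a root with nonnegative real part iff `a ≤ Re w`. -/
theorem delay_independent_instability (a : ℝ) (w : ℂ) :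
    (∀ τ : ℝ, 0 < τ →
        ∃ z : ℂ, z + (a : ℂ) - w * Complex.exp (-(τ : ℂ) * z) = 0 ∧ 0 ≤ z.re) ↔
      a ≤ w.re := by
  constructor
  · intro h
    refine le_of_forall_pos_le_add ?_
    intro ε hε
    set C := |a| + ‖w‖ with hC
    have hC0 : 0 ≤ C := by positivity
    set τ := min (1/(C+1)) (ε/(2*(C+1)*(‖w‖ + 1))) with hτdef
    have hτ0 : 0 < τ := lt_min (by positivity) (by positivity)
    obtain ⟨z, hz, hzre⟩ := h τ hτ0
    have hre : (-(τ:ℂ) * z).re = -(τ * z.re) := by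
      simp [Complex.mul_re]
    have habs : ‖z‖ ≤ C := by
      have hzeq : z = w * Complex.exp (-(τ:ℂ) * z) - (a:ℂ) := by linear_combination hz
      rw [hzeq]
      calc ‖w * Complex.exp (-(τ:ℂ) * z) - (a:ℂ)‖
          ≤ ‖w * Complex.exp (-(τ:ℂ) * z)‖ + ‖(a:ℂ)‖ :=
            norm_sub_le _ _
        _ ≤ ‖w‖ * 1 + |a| := by
            rw [norm_mul, Complex.norm_exp, Complex.norm_real, Real.norm_eq_abs, hre]
            gcongr
            · exact Real.exp_le_one_iff.mpr (by nlinarith)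
        _ = C := by rw [hC]; ring
    have hτz : ‖-(τ:ℂ) * z‖ ≤ 1 := by
      rw [norm_mul, norm_neg, Complex.norm_real, Real.norm_eq_abs, abs_of_pos hτ0]
      have h1 : τ ≤ 1/(C+1) := min_le_left _ _
      have h1' : τ * (C+1) ≤ 1 := (le_div_iff₀ (by positivity)).mp h1
      have p1 : τ * ‖z‖ ≤ τ * C := mul_le_mul_of_nonneg_left habs hτ0.le
      linarith
    have hexp : ‖Complex.exp (-(τ:ℂ) * z) - 1‖ ≤ 2 * (τ * C) := by
      calc ‖Complex.exp (-(τ:ℂ) * z) - 1‖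
          ≤ 2 * ‖-(τ:ℂ) * z‖ := Complex.norm_exp_sub_one_le hτz
        _ = 2 * (τ * ‖z‖) := by
            rw [norm_mul, norm_neg, Complex.norm_real, Real.norm_eq_abs, abs_of_pos hτ0]
        _ ≤ 2 * (τ * C) := by gcongr
    have h2 : z + (a:ℂ) - w = w * (Complex.exp (-(τ:ℂ) * z) - 1) := by
      linear_combination hz
    have h3 : ‖z + (a:ℂ) - w‖ ≤ ‖w‖ * (2 * (τ * C)) := by
      rw [h2, norm_mul]
      exact mul_le_mul_of_nonneg_left hexp (norm_nonneg w)
    have h4 : ‖w‖ * (2 * (τ * C)) ≤ ε := by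
      have hτ2 : τ ≤ ε/(2*(C+1)*(‖w‖ + 1)) := min_le_right _ _
      have hpos : (0:ℝ) < 2*(C+1)*(‖w‖ + 1) := by positivity
      have h5 : τ * (2*(C+1)*(‖w‖ + 1)) ≤ ε := by
        rw [← le_div_iff₀ hpos]; exact hτ2
      nlinarith [norm_nonneg w, hτ0.le]
    have h6 : (z + (a:ℂ) - w).re ≤ ‖z + (a:ℂ) - w‖ := Complex.re_le_norm _
    have h7 : (z + (a:ℂ) - w).re = z.re + a - w.re := by simp
    linarith
  · intro h τ hτ
    by_cases hw : w = 0
    · refine ⟨((-a : ℝ) : ℂ), by simp [hw], by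
        simp only [Complex.ofReal_re]
        have : w.re = 0 := by simp [hw]
        linarith⟩
    · have hV : (τ:ℂ) * w ≠ 0 := by
        apply mul_ne_zero _ hw
        exact_mod_cast hτ.ne'
      have hA : τ * a ≤ ((τ:ℂ) * w).re := by
        have : ((τ:ℂ) * w).re = τ * w.re := by simp [Complex.mul_re]
        rw [this]
        nlinarith
      obtain ⟨u, hu, hur⟩ := core' (τ * a) ((τ:ℂ) * w) hV hA
      rw [show ((τ * a : ℝ) : ℂ) = (τ:ℂ) * (a:ℂ) from by push_cast; ring] at hu
      have hτne : (τ:ℂ) ≠ 0 := by exact_mod_cast hτ.ne'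
      have hexpne : Complex.exp u ≠ 0 := Complex.exp_ne_zero u
      refine ⟨u / (τ:ℂ) - (a:ℂ), ?_, ?_⟩
      · have h1 : -(τ:ℂ) * (u/(τ:ℂ) - (a:ℂ)) = -u + (τ:ℂ) * (a:ℂ) := by
          field_simp
          ring
        rw [h1, Complex.exp_add, Complex.exp_neg]
        field_simp
        linear_combination hu
      · have hre : (u / (τ:ℂ) - (a:ℂ)).re = u.re / τ - a := by
          simp [Complex.div_ofReal_re]
        rw [hre]
        rw [sub_nonneg, le_div_iff₀ hτ]
        linarith
end

section
/- Let a, w ∈ ℝ with w < −|a| and let τ > 0. Then every z ∈ ℂ with z + a − w·exp(−τ·z) = 0 satisfies Re(z) < 0 if and only if τ·√(w² − a²) < arccos(a/w). -/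
open Real

namespace StabAux


noncomputable def psi (a w τ x : ℝ) : ℝ := w^2 * Real.exp (-(2*τ*x)) - (x+a)^2
noncomputable def cc (a w τ x : ℝ) : ℝ := (x+a) * Real.exp (τ*x) / w
noncomputable def gg (a w τ x : ℝ) : ℝ := τ * Real.sqrt (psi a w τ x) - Real.arccos (cc a w τ x)

variable {a w τ : ℝ}

lemma exp_prod (τ x : ℝ) : Real.exp (-(2*τ*x)) * Real.exp (τ*x)^2 = 1 := by
  rw [sq, ← Real.exp_add, ← Real.exp_add, show -(2*τ*x) + (τ*x + τ*x) = 0 by ring,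
    Real.exp_zero]

lemma exp_prod' (τ x : ℝ) : Real.exp (-(τ*x)) * Real.exp (τ*x) = 1 := by
  rw [← Real.exp_add]; simp

lemma exp_sq (τ x : ℝ) : Real.exp (-(2*τ*x)) = Real.exp (-(τ*x))^2 := by
  rw [sq, ← Real.exp_add]; congr 1; ring

lemma psi_zero : psi a w τ 0 = w^2 - a^2 := by simp [psi]

lemma cc_zero : cc a w τ 0 = a / w := by simp [cc]

lemma continuous_psi : Continuous (psi a w τ) := by
  unfold psi; fun_prop

lemma continuous_cc : Continuous (cc a w τ) := by
  unfold cc; fun_prop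

lemma continuous_gg : Continuous (gg a w τ) := by
  unfold gg
  exact (continuous_const.mul ((continuous_psi).sqrt)).sub
    (Real.continuous_arccos.comp continuous_cc)

lemma cc_sq (hw : w ≠ 0) (x : ℝ) :
    1 - (cc a w τ x)^2 = psi a w τ x * Real.exp (τ*x)^2 / w^2 := by
  have h := exp_prod τ x
  unfold cc psi
  field_simp
  have h' : Real.exp (-(x*τ*2)) * Real.exp (x*τ)^2 = 1 := by
    rw [show x*τ*2 = 2*τ*x by ring, show x*τ = τ*x by ring]; exact h
  linear_combination (-w^2) * h'

lemma sqrt_one_sub_cc_sq (hw0 : w < 0) {x : ℝ} (hψ : 0 ≤ psi a w τ x) :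
    Real.sqrt (1 - (cc a w τ x)^2) = Real.sqrt (psi a w τ x) * Real.exp (τ*x) / (-w) := by
  rw [cc_sq hw0.ne]
  have h : psi a w τ x * Real.exp (τ*x)^2 / w^2
      = (Real.sqrt (psi a w τ x) * Real.exp (τ*x) / (-w))^2 := by
    rw [div_pow, mul_pow, Real.sq_sqrt hψ]; ring
  rw [h, Real.sqrt_sq]
  exact div_nonneg (by positivity) (by linarith)

lemma psi_hasDeriv (x : ℝ) :
    HasDerivAt (psi a w τ) (w^2 * (Real.exp (-(2*τ*x)) * (-(2*τ))) - 2*(x+a)) x := by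
  have h1 : HasDerivAt (fun x : ℝ => -(2*τ*x)) (-(2*τ)) x := by
    exact ((hasDerivAt_id x).const_mul (2*τ)).neg.congr_deriv (by simp)
  have h2 := (h1.exp).const_mul (w^2)
  have h3 : HasDerivAt (fun x : ℝ => (x+a)^2) (2*(x+a)) x := by
    exact (((hasDerivAt_id x).add_const a).pow 2).congr_deriv (by simp)
  have h := h2.sub h3
  have e : psi a w τ = fun x => w^2 * Real.exp (-(2*τ*x)) - (x+a)^2 := rfl
  rw [e]; exact h

lemma cc_hasDeriv (x : ℝ) :
    HasDerivAt (cc a w τ) ((Real.exp (τ*x) + (x+a) * (Real.exp (τ*x) * τ)) / w) x := by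
  have h1 : HasDerivAt (fun x : ℝ => τ*x) τ x := by
    simpa using (hasDerivAt_id x).const_mul τ
  have h2 := ((hasDerivAt_id x).add_const a).mul h1.exp
  have h := h2.div_const w
  have e : cc a w τ = fun x => (x+a) * Real.exp (τ*x) / w := rfl
  rw [e]
  refine h.congr_deriv ?_
  simp

lemma cc_lt_one (hw0 : w < 0) {x : ℝ} (hψ : 0 < psi a w τ x) :
    (cc a w τ x)^2 < 1 := by
  have h := cc_sq hw0.ne (a := a) (τ := τ) x
  have hw2 : (0:ℝ) < w^2 := by nlinarith
  have hpos : 0 < psi a w τ x * Real.exp (τ*x)^2 / w^2 :=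
    div_pos (mul_pos hψ (by positivity)) hw2
  linarith

lemma cc_bounds (hw0 : w < 0) {x : ℝ} (hψ : 0 < psi a w τ x) :
    -1 < cc a w τ x ∧ cc a w τ x < 1 := by
  have h := cc_lt_one hw0 hψ
  constructor <;> nlinarith

lemma gg_hasDeriv (hτ : 0 < τ) (hw0 : w < 0) {x : ℝ} (hψ : 0 < psi a w τ x) :
    HasDerivAt (gg a w τ)
      (-((τ^2 * psi a w τ x + (τ*(x+a)+1)^2) / Real.sqrt (psi a w τ x))) x := by
  have hcc2 := cc_lt_one hw0 hψ
  have hne1 : cc a w τ x ≠ -1 := by intro h; rw [h] at hcc2; norm_num at hcc2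
  have hne2 : cc a w τ x ≠ 1 := by intro h; rw [h] at hcc2; norm_num at hcc2
  have hsq := ((Real.hasDerivAt_sqrt hψ.ne').comp x (psi_hasDeriv x)).const_mul τ
  have harc := (Real.hasDerivAt_arccos hne1 hne2).comp x (cc_hasDeriv x)
  have h := hsq.sub harc
  have e : gg a w τ = fun x => τ * Real.sqrt (psi a w τ x) - Real.arccos (cc a w τ x) := rfl
  rw [e]
  refine h.congr_deriv ?_
  rw [sqrt_one_sub_cc_sq hw0 hψ.le]
  have hS : (0:ℝ) < Real.sqrt (psi a w τ x) := Real.sqrt_pos.mpr hψ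
  have hE : (0:ℝ) < Real.exp (τ*x) := Real.exp_pos _
  rw [show τ^2 * psi a w τ x = τ^2 * (w^2 * Real.exp (-(2*τ*x)) - (x+a)^2) from rfl]
  field_simp [hS.ne', hE.ne', hw0.ne]
  ring

lemma gg_anti (hτ : 0 < τ) (hw0 : w < 0) {s : ℝ}
    (hpos : ∀ x ∈ Set.Ioo (0:ℝ) s, 0 < psi a w τ x) :
    StrictAntiOn (gg a w τ) (Set.Icc 0 s) := by
  apply strictAntiOn_of_deriv_neg (convex_Icc 0 s) continuous_gg.continuousOn
  intro x hx
  rw [interior_Icc] at hx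
  have hψ := hpos x hx
  rw [(gg_hasDeriv hτ hw0 hψ).deriv]
  have num : 0 < τ^2 * psi a w τ x + (τ*(x+a)+1)^2 := by
    nlinarith [sq_nonneg (τ*(x+a)+1), mul_pos (mul_pos hτ hτ) hψ]
  have := div_pos num (Real.sqrt_pos.mpr hψ)
  linarith

lemma exists_s (hτ : 0 < τ) (hw0 : w < 0) (ha2 : a^2 < w^2) :
    ∃ s : ℝ, 0 < s ∧ psi a w τ s = 0 ∧ ∀ x, 0 ≤ x → x < s → 0 < psi a w τ x := by
  set T := |a| + |w| with hT
  have hw' : 0 < |w| := abs_pos.mpr hw0.ne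
  have hT0 : 0 < T := by have := abs_nonneg a; linarith
  have hTneg : psi a w τ T < 0 := by
    have h1 : Real.exp (-(2*τ*T)) < 1 := by
      rw [Real.exp_lt_one_iff]; nlinarith
    have h2 : |w| ≤ T + a := by have := neg_abs_le a; simp only [hT]; linarith
    have h3 : w^2 ≤ (T+a)^2 := by nlinarith [sq_abs w]
    have hw2 : (0:ℝ) < w^2 := by nlinarith
    unfold psi; nlinarith
  set K := Set.Icc 0 T ∩ psi a w τ ⁻¹' Set.Iic 0 with hK
  have hKne : K.Nonempty := ⟨T, ⟨hT0.le, le_refl T⟩, hTneg.le⟩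
  have hKcl : IsClosed K := isClosed_Icc.inter (isClosed_Iic.preimage continuous_psi)
  have hbdd : BddBelow K := ⟨0, fun x hx => hx.1.1⟩
  set s := sInf K with hs
  have hsK : s ∈ K := hKcl.csInf_mem hKne hbdd
  have hlt : ∀ x, 0 ≤ x → x < s → 0 < psi a w τ x := by
    intro x hx0 hxs
    by_contra hcon; push_neg at hcon
    have hxK : x ∈ K := ⟨⟨hx0, le_trans hxs.le hsK.1.2⟩, hcon⟩
    exact absurd (csInf_le hbdd hxK) (not_le.mpr hxs)
  have hs0 : 0 < s := by
    rcases (hsK.1.1).lt_or_eq with h|h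
    · exact h
    · exfalso
      have h2 : psi a w τ s ≤ 0 := hsK.2
      rw [← h] at h2
      rw [psi_zero] at h2
      linarith
  have hψs : psi a w τ s = 0 := by
    refine le_antisymm hsK.2 ?_
    have ht : Filter.Tendsto (psi a w τ) (nhdsWithin s (Set.Iio s)) (nhds (psi a w τ s)) :=
      (continuous_psi.tendsto s).mono_left nhdsWithin_le_nhds
    refine ge_of_tendsto ht ?_
    filter_upwards [Ioo_mem_nhdsLT_of_mem (show s ∈ Set.Ioc (0:ℝ) s from ⟨hs0, le_refl _⟩)]
      with x hx
    exact (hlt x hx.1.le hx.2).le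
  exact ⟨s, hs0, hψs, hlt⟩

lemma arccos_cos_le {t : ℝ} (ht : 0 ≤ t) : Real.arccos (Real.cos t) ≤ t := by
  rcases le_or_gt t π with h|h
  · rw [Real.arccos_cos ht h]
  · exact le_trans (Real.arccos_le_pi _) h.le



lemma root_iff (a w τ : ℝ) (z : ℂ) :
    z + (a : ℂ) - (w : ℂ) * Complex.exp (-(τ : ℂ) * z) = 0 ↔
    (z.re + a = w * Real.exp (-(τ*z.re)) * Real.cos (τ * z.im) ∧
     z.im = -(w * Real.exp (-(τ*z.re)) * Real.sin (τ * z.im))) := by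
  rw [Complex.ext_iff]
  simp only [Complex.add_re, Complex.sub_re, Complex.mul_re, Complex.mul_im,
    Complex.ofReal_re, Complex.ofReal_im, Complex.exp_re, Complex.exp_im,
    Complex.add_im, Complex.sub_im, Complex.neg_re, Complex.neg_im, Complex.zero_re,
    Complex.zero_im, neg_zero, zero_mul, mul_zero, sub_zero, add_zero, zero_add,
    neg_mul, Real.cos_neg, Real.sin_neg]
  constructor
  · rintro ⟨h1, h2⟩
    exact ⟨by linear_combination h1, by linear_combination h2⟩
  · rintro ⟨h1, h2⟩
    exact ⟨by linear_combination h1, by linear_combination h2⟩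

end StabAux


set_option maxHeartbeats 2000000 in
/-- For real `a, w` with `w < -|a|` and `τ > 0`, all roots of `z + a − w e^{−τz} = 0` have
negative real parts iff `τ √(w² − a²) < arccos(a/w)`. -/
theorem stability_real_coefficients (a w : ℝ) (hw : w < -|a|) (τ : ℝ) (hτ : 0 < τ) :
    (∀ z : ℂ, z + (a : ℂ) - (w : ℂ) * Complex.exp (-(τ : ℂ) * z) = 0 → z.re < 0) ↔
      τ * Real.sqrt (w ^ 2 - a ^ 2) < Real.arccos (a / w) := by
  have habs := abs_nonneg a
  have hw0 : w < 0 := lt_of_lt_of_le hw (by linarith)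
  have ha2 : a^2 < w^2 := by nlinarith [sq_abs a, neg_abs_le a, le_abs_self a]
  obtain ⟨s, hs0, hψs, hpos⟩ := StabAux.exists_s (a := a) hτ hw0 ha2
  have hanti : StrictAntiOn (StabAux.gg a w τ) (Set.Icc 0 s) :=
    StabAux.gg_anti hτ hw0 (fun x hx => hpos x hx.1.le hx.2)
  have hgg0 : StabAux.gg a w τ 0 = τ * Real.sqrt (w^2 - a^2) - Real.arccos (a/w) := by
    unfold StabAux.gg; rw [StabAux.psi_zero, StabAux.cc_zero]
  have hfactor : s + a = w * Real.exp (-(τ*s)) ∨ s + a = -(w * Real.exp (-(τ*s))) := by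
    have h := hψs
    unfold StabAux.psi at h
    rw [StabAux.exp_sq] at h
    have h2 : (s + a - w*Real.exp (-(τ*s))) * (s + a + w*Real.exp (-(τ*s))) = 0 := by
      linear_combination -h
    rcases mul_eq_zero.mp h2 with h3|h3
    · left; linarith
    · right; linarith
  have hee := StabAux.exp_prod' τ s
  constructor
  · intro hall
    by_contra hge
    push_neg at hge
    rcases hfactor with hA|hB
    · have hroot : ((⟨s, 0⟩ : ℂ)) + (a:ℂ) - w * Complex.exp (-(τ:ℂ) * ⟨s,0⟩) = 0 := by
        rw [StabAux.root_iff]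
        constructor
        · show s + a = w * Real.exp (-(τ*s)) * Real.cos (τ * 0)
          rw [mul_zero, Real.cos_zero, mul_one]; exact hA
        · show (0:ℝ) = -(w * Real.exp (-(τ*s)) * Real.sin (τ * 0))
          rw [mul_zero, Real.sin_zero, mul_zero, neg_zero]
      have := hall _ hroot
      exact absurd this (not_lt.mpr hs0.le)
    · have hccs : StabAux.cc a w τ s = -1 := by
        unfold StabAux.cc
        rw [hB]
        rw [show -(w * Real.exp (-(τ*s))) * Real.exp (τ*s) / w
            = -((Real.exp (-(τ*s)) * Real.exp (τ*s)) * (w/w)) by ring, hee, div_self hw0.ne]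
        norm_num
      have hggs : StabAux.gg a w τ s = -π := by
        unfold StabAux.gg
        rw [hψs, hccs, Real.sqrt_zero, Real.arccos_neg_one]; ring
      have h0mem : (0:ℝ) ∈ Set.Icc (StabAux.gg a w τ s) (StabAux.gg a w τ 0) := by
        constructor
        · rw [hggs]; linarith [Real.pi_pos]
        · rw [hgg0]; linarith
      obtain ⟨x₀, hx₀mem, hx₀⟩ :=
        intermediate_value_Icc' hs0.le (StabAux.continuous_gg).continuousOn h0mem
      have hx₀s : x₀ ≠ s := by
        intro h; rw [h, hggs] at hx₀; linarith [Real.pi_pos]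
      have hψx : 0 < StabAux.psi a w τ x₀ := hpos x₀ hx₀mem.1 (lt_of_le_of_ne hx₀mem.2 hx₀s)
      set y := Real.sqrt (StabAux.psi a w τ x₀) with hy
      have hy0 : 0 < y := Real.sqrt_pos.mpr hψx
      have harc : Real.arccos (StabAux.cc a w τ x₀) = τ * y := by
        unfold StabAux.gg at hx₀; rw [← hy] at hx₀; linarith
      obtain ⟨hcb1, hcb2⟩ := StabAux.cc_bounds hw0 hψx
      have hcos : Real.cos (τ*y) = StabAux.cc a w τ x₀ := by
        rw [← harc, Real.cos_arccos hcb1.le hcb2.le]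
      have hsin : Real.sin (τ*y) = y * Real.exp (τ*x₀) / (-w) := by
        rw [← harc, Real.sin_arccos, StabAux.sqrt_one_sub_cc_sq hw0 hψx.le, ← hy]
      have heex := StabAux.exp_prod' τ x₀
      have hroot : ((⟨x₀, y⟩ : ℂ)) + (a:ℂ) - w * Complex.exp (-(τ:ℂ) * ⟨x₀,y⟩) = 0 := by
        rw [StabAux.root_iff]
        constructor
        · show x₀ + a = w * Real.exp (-(τ*x₀)) * Real.cos (τ * y)
          rw [hcos]
          unfold StabAux.cc
          rw [show w * Real.exp (-(τ*x₀)) * ((x₀ + a) * Real.exp (τ*x₀) / w)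
            = (x₀ + a) * ((Real.exp (-(τ*x₀)) * Real.exp (τ*x₀)) * (w/w)) by ring,
            heex, div_self hw0.ne]
          ring
        · show y = -(w * Real.exp (-(τ*x₀)) * Real.sin (τ * y))
          rw [hsin]
          rw [show -(w * Real.exp (-(τ*x₀)) * (y * Real.exp (τ*x₀) / (-w)))
            = y * ((Real.exp (-(τ*x₀)) * Real.exp (τ*x₀)) * (w/w)) by ring,
            heex, div_self hw0.ne]
          ring
      have := hall _ hroot
      exact absurd this (not_lt.mpr hx₀mem.1)
  · intro hlt z hz
    by_contra hre
    push_neg at hre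
    obtain ⟨hxe, hye⟩ := (StabAux.root_iff a w τ z).mp hz
    set x := z.re with hxdef
    set y := |z.im| with hydef
    have hy0 : 0 ≤ y := abs_nonneg _
    have heqs : x + a = w * Real.exp (-(τ*x)) * Real.cos (τ*y) ∧
        y = -(w * Real.exp (-(τ*x)) * Real.sin (τ*y)) := by
      rcases abs_cases z.im with ⟨h1,h2⟩|⟨h1,h2⟩
      · rw [hydef, h1]; exact ⟨hxe, hye⟩
      · rw [hydef, h1]
        rw [show τ * -z.im = -(τ*z.im) by ring, Real.cos_neg, Real.sin_neg]
        exact ⟨hxe, by linarith [hye]⟩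
    obtain ⟨hx1, hy1⟩ := heqs
    have heex := StabAux.exp_prod' τ x
    have hψx : StabAux.psi a w τ x = y^2 := by
      unfold StabAux.psi
      rw [StabAux.exp_sq]
      have hsc := Real.sin_sq_add_cos_sq (τ*y)
      linear_combination (-(x + a + w * Real.exp (-(τ*x)) * Real.cos (τ*y))) * hx1
        + (-(y - w * Real.exp (-(τ*x)) * Real.sin (τ*y))) * hy1
        + (-(w^2 * Real.exp (-(τ*x))^2)) * hsc
    have hcc : StabAux.cc a w τ x = Real.cos (τ*y) := by
      unfold StabAux.cc
      rw [hx1]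
      rw [show w * Real.exp (-(τ*x)) * Real.cos (τ*y) * Real.exp (τ*x) / w
        = Real.cos (τ*y) * ((Real.exp (-(τ*x)) * Real.exp (τ*x)) * (w/w)) by ring,
        heex, div_self hw0.ne]
      ring
    rcases le_or_gt x s with hxs|hxs
    · have hgx : StabAux.gg a w τ x ≤ StabAux.gg a w τ 0 := by
        rcases eq_or_lt_of_le hre with h|h
        · rw [← h]
        · exact (hanti (Set.left_mem_Icc.mpr (by linarith)) ⟨hre, hxs⟩ h).le
      have hgxv : StabAux.gg a w τ x = τ * y - Real.arccos (Real.cos (τ*y)) := by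
        unfold StabAux.gg
        rw [hψx, hcc, Real.sqrt_sq hy0]
      have hle := StabAux.arccos_cos_le (mul_nonneg hτ.le hy0)
      rw [hgg0] at hgx
      rw [hgxv] at hgx
      linarith
    · rcases hfactor with hA|hB
      · have hccs : StabAux.cc a w τ s = 1 := by
          unfold StabAux.cc
          rw [hA]
          rw [show w * Real.exp (-(τ*s)) * Real.exp (τ*s) / w
            = (Real.exp (-(τ*s)) * Real.exp (τ*s)) * (w/w) by ring, hee, div_self hw0.ne]
          norm_num
        have hggs : StabAux.gg a w τ s = 0 := by
          unfold StabAux.gg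
          rw [hψs, hccs, Real.sqrt_zero, Real.arccos_one]; ring
        have hlt2 := hanti (Set.left_mem_Icc.mpr hs0.le) (Set.right_mem_Icc.mpr hs0.le) hs0
        rw [hgg0, hggs] at hlt2
        linarith
      · have hwE : 0 < -(w * Real.exp (-(τ*s))) := by
          have := Real.exp_pos (-(τ*s)); nlinarith
        have hEe : Real.exp (-(τ*x)) < Real.exp (-(τ*s)) := by
          apply Real.exp_lt_exp.mpr; nlinarith
        have hEx := Real.exp_pos (-(τ*x))
        have h1 : 0 < -(w * Real.exp (-(τ*x))) := by nlinarith
        have h2 : -(w * Real.exp (-(τ*x))) < -(w * Real.exp (-(τ*s))) := by nlinarith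
        have h3 : -(w * Real.exp (-(τ*x))) < x + a := by linarith [hB, hxs]
        have h4 : (-(w * Real.exp (-(τ*x)))) * (-(w * Real.exp (-(τ*x)))) < (x+a)*(x+a) :=
          mul_lt_mul'' h3 h3 h1.le h1.le
        have hψneg : StabAux.psi a w τ x < 0 := by
          unfold StabAux.psi
          rw [StabAux.exp_sq]
          nlinarith [h4]
        rw [hψx] at hψneg
        linarith [sq_nonneg y]
end

section
/- Let a ∈ ℂ, w ∈ ℂ with w ≠ 0, Ω₀ ∈ ℝ with Ω₀ ≠ 0, and s₀ ∈ ℝ. Suppose i·Ω₀ + a − w·exp(−s₀·i·Ω₀) = 0 and 1 + s₀·(i·Ω₀ + a) ≠ 0. Then there exist δ > 0 and a continuously differentiable function z : (s₀ − δ, s₀ + δ) → ℂ such that z(s₀) = i·Ω₀, z(s) + a − w·exp(−s·z(s)) = 0 for all s with |s − s₀| < δ, and the derivative satisfies z′(s₀) = Ω₀·(Ω₀ + Im(a))/D − i·Ω₀·(s₀·((Ω₀ + Im(a))² + Re(a)²) + Re(a))/D, where D := (1 + s₀·Re(a))² + (s₀·(Ω₀ + Im(a)))². -/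
open Complex ContinuousLinearMap

noncomputable section

/-- The auxiliary map `G(s, z) = (s, z + a − w e^{−s z})`. -/
def crossingG (a w : ℂ) : ℝ × ℂ → ℝ × ℂ :=
  fun p => (p.1, p.2 + a - w * Complex.exp (-(p.1 : ℂ) * p.2))

/-- The derivative of `crossingG`: `(u, v) ↦ (u, u • k + c * v)`. -/
def crossingLfwd (k c : ℂ) : (ℝ × ℂ) →L[ℝ] (ℝ × ℂ) :=
  (fst ℝ ℝ ℂ).prod ((fst ℝ ℝ ℂ).smulRight k + c • snd ℝ ℝ ℂ)

def crossingLinv (k c : ℂ) : (ℝ × ℂ) →L[ℝ] (ℝ × ℂ) :=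
  (fst ℝ ℝ ℂ).prod ((fst ℝ ℝ ℂ).smulRight (-(k / c)) + c⁻¹ • snd ℝ ℝ ℂ)

/-- The derivative of `crossingG` as a continuous linear equivalence (for `c ≠ 0`). -/
def crossingEqv (k c : ℂ) (hc : c ≠ 0) : (ℝ × ℂ) ≃L[ℝ] (ℝ × ℂ) :=
  ContinuousLinearEquiv.equivOfInverse (crossingLfwd k c) (crossingLinv k c)
    (fun p => by
      simp [crossingLfwd, crossingLinv, Prod.ext_iff, smul_eq_mul, real_smul]
      field_simp
      ring)
    (fun p => by
      simp [crossingLfwd, crossingLinv, Prod.ext_iff, smul_eq_mul, real_smul]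
      field_simp
      ring)

theorem crossingG_contDiff (a w : ℂ) : ContDiff ℝ (⊤ : ℕ∞) (crossingG a w) := by
  unfold crossingG
  apply ContDiff.prodMk contDiff_fst
  apply ContDiff.sub
  · exact ContDiff.add contDiff_snd contDiff_const
  · apply ContDiff.mul contDiff_const
    apply (Complex.contDiff_exp (𝕜 := ℝ)).comp
    exact ((Complex.ofRealCLM.contDiff.comp contDiff_fst).neg.mul contDiff_snd)

theorem crossingG_hasFDerivAt (a w : ℂ) (s₀ : ℝ) (z₀ : ℂ)
    (hroot : z₀ + a - w * Complex.exp (-(s₀ : ℂ) * z₀) = 0) :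
    HasFDerivAt (crossingG a w) (crossingLfwd (z₀ * (z₀ + a)) (1 + (s₀ : ℂ) * (z₀ + a)))
      (s₀, z₀) := by
  have hw : w * Complex.exp (-(s₀ : ℂ) * z₀) = z₀ + a := by linear_combination -hroot
  have hφ : HasFDerivAt (fun p : ℝ × ℂ => -(p.1 : ℂ) * p.2)
      ((-(s₀ : ℂ)) • snd ℝ ℝ ℂ + z₀ • (-(Complex.ofRealCLM.comp (fst ℝ ℝ ℂ)))) (s₀, z₀) := by
    have h1 : HasFDerivAt (fun p : ℝ × ℂ => -(p.1 : ℂ))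
        (-(Complex.ofRealCLM.comp (fst ℝ ℝ ℂ))) (s₀, z₀) :=
      (Complex.ofRealCLM.hasFDerivAt.comp (s₀, z₀) (fst ℝ ℝ ℂ).hasFDerivAt).neg
    have h2 : HasFDerivAt (fun p : ℝ × ℂ => p.2) (snd ℝ ℝ ℂ) (s₀, z₀) := (snd ℝ ℝ ℂ).hasFDerivAt
    simpa [Pi.mul_def] using h1.mul h2
  have hF : HasFDerivAt (fun p : ℝ × ℂ => p.2 + a - w * Complex.exp (-(p.1 : ℂ) * p.2))
      (snd ℝ ℝ ℂ - w • ((Complex.exp (-(s₀ : ℂ) * z₀)) •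
        ((-(s₀ : ℂ)) • snd ℝ ℝ ℂ + z₀ • (-(Complex.ofRealCLM.comp (fst ℝ ℝ ℂ)))))) (s₀, z₀) :=
    (((snd ℝ ℝ ℂ).hasFDerivAt.add_const a).sub (hφ.cexp.const_mul w))
  have h := ((fst ℝ ℝ ℂ).hasFDerivAt (x := (s₀, z₀))).prodMk hF
  refine h.congr_fderiv (Eq.symm ?_)
  refine ContinuousLinearMap.ext fun p => Prod.ext ?_ ?_
  · rfl
  · show p.1 • (z₀ * (z₀ + a)) + (1 + (s₀ : ℂ) * (z₀ + a)) • p.2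
      = p.2 - w • (Complex.exp (-(s₀ : ℂ) * z₀) • ((-(s₀ : ℂ)) • p.2 + z₀ • (-(p.1 : ℂ))))
    simp only [smul_eq_mul, real_smul]
    linear_combination (-((p.1 : ℂ) * z₀) - (s₀ : ℂ) * p.2) * hw

/-- Crossing direction of a purely imaginary root: if `iΩ₀` is a root of
`z + a − w e^{−s₀ z} = 0` and this root is simple, then the root extends to a `C¹` branch
`z(s)` near `s₀` with an explicit derivative `z'(s₀)`. -/
theorem crossing_direction (a w : ℂ) (hw : w ≠ 0) (Ω₀ : ℝ) (hΩ₀ : Ω₀ ≠ 0) (s₀ : ℝ)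
    (hroot : Complex.I * (Ω₀ : ℂ) + a - w * Complex.exp (-(s₀ : ℂ) * (Complex.I * (Ω₀ : ℂ))) = 0)
    (hsimple : 1 + (s₀ : ℂ) * (Complex.I * (Ω₀ : ℂ) + a) ≠ 0) :
    ∃ δ > 0, ∃ z : ℝ → ℂ,
      ContDiffOn ℝ 1 z (Set.Ioo (s₀ - δ) (s₀ + δ)) ∧
      z s₀ = Complex.I * (Ω₀ : ℂ) ∧
      (∀ s ∈ Set.Ioo (s₀ - δ) (s₀ + δ),
        z s + a - w * Complex.exp (-(s : ℂ) * z s) = 0) ∧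
      deriv z s₀ =
        ((Ω₀ * (Ω₀ + a.im) /
            ((1 + s₀ * a.re) ^ 2 + (s₀ * (Ω₀ + a.im)) ^ 2) : ℝ) : ℂ) -
        Complex.I * ((Ω₀ * (s₀ * ((Ω₀ + a.im) ^ 2 + a.re ^ 2) + a.re) /
            ((1 + s₀ * a.re) ^ 2 + (s₀ * (Ω₀ + a.im)) ^ 2) : ℝ) : ℂ) := by
  set z₀ : ℂ := Complex.I * (Ω₀ : ℂ) with hz₀
  set k : ℂ := z₀ * (z₀ + a) with hk
  set c : ℂ := 1 + (s₀ : ℂ) * (z₀ + a) with hcdef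
  have hc : c ≠ 0 := hsimple
  -- smoothness and derivative of G
  have hGcd : ContDiffAt ℝ 1 (crossingG a w) (s₀, z₀) :=
    ((crossingG_contDiff a w).contDiffAt).of_le (mod_cast le_top)
  have hf' : HasFDerivAt (crossingG a w)
      ((crossingEqv k c hc : (ℝ × ℂ) →L[ℝ] (ℝ × ℂ))) (s₀, z₀) :=
    crossingG_hasFDerivAt a w s₀ z₀ hroot
  -- the local inverse
  set Φ : ℝ × ℂ → ℝ × ℂ := hGcd.localInverse hf' one_ne_zero with hΦdef
  have hΦcd : ContDiffAt ℝ 1 Φ (crossingG a w (s₀, z₀)) :=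
    hGcd.to_localInverse hf' one_ne_zero
  have hGp : crossingG a w (s₀, z₀) = (s₀, 0) := by
    simp only [crossingG]
    exact Prod.ext rfl hroot
  set z : ℝ → ℂ := fun s => (Φ (s, 0)).2 with hzdef
  -- C¹ smoothness of z near s₀
  have hincl : ContDiff ℝ 1 (fun s : ℝ => ((s, 0) : ℝ × ℂ)) := contDiff_id.prodMk contDiff_const
  have hz : ContDiffAt ℝ 1 z s₀ := by
    have h1 : ContDiffAt ℝ 1 (fun s : ℝ => Φ (s, 0)) s₀ := by
      have h : ContDiffAt ℝ 1 Φ ((s₀ : ℝ), (0 : ℂ)) := hGp ▸ hΦcd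
      exact h.comp s₀ hincl.contDiffAt
    exact (contDiff_snd.contDiffAt).comp s₀ h1
  obtain ⟨u, hu, hcd⟩ := hz.contDiffOn le_rfl (by simp)
  -- the root equation holds near s₀
  have hGstrict := hGcd.hasStrictFDerivAt' hf' one_ne_zero
  have hri : ∀ᶠ y in nhds (crossingG a w (s₀, z₀)),
      crossingG a w (Φ y) = y := hGstrict.eventually_right_inverse
  rw [hGp] at hri
  have htend : Filter.Tendsto (fun s : ℝ => ((s, 0) : ℝ × ℂ)) (nhds s₀) (nhds (s₀, 0)) :=
    (hincl.continuous.tendsto s₀)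
  have hev : ∀ᶠ s in nhds s₀, crossingG a w (Φ (s, 0)) = (s, 0) := htend.eventually hri
  -- choose δ
  obtain ⟨δ, hδpos, hδ⟩ := Metric.eventually_nhds_iff_ball.1
    (hev.and (Filter.eventually_of_mem hu fun s hs => hs))
  refine ⟨δ, hδpos, z, ?_, ?_, ?_, ?_⟩
  · -- ContDiffOn on the interval
    rw [← Real.ball_eq_Ioo]
    exact hcd.mono fun s hs => (hδ s hs).2
  · -- value at s₀
    have : Φ (crossingG a w (s₀, z₀)) = (s₀, z₀) := hGcd.localInverse_apply_image hf' one_ne_zero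
    rw [hGp] at this
    show (Φ (s₀, 0)).2 = z₀
    rw [this]
  · -- the root equation
    intro s hs
    rw [← Real.ball_eq_Ioo] at hs
    have h := (hδ s hs).1
    have h1 : (Φ (s, 0)).1 = s := congrArg Prod.fst h
    have h2 : (Φ (s, 0)).2 + a - w * Complex.exp (-((Φ (s, 0)).1 : ℂ) * (Φ (s, 0)).2) = 0 :=
      congrArg Prod.snd h
    rw [h1] at h2
    exact h2
  · -- the derivative
    have hΦ' : HasStrictFDerivAt Φ
        (((crossingEqv k c hc).symm : (ℝ × ℂ) →L[ℝ] (ℝ × ℂ))) (crossingG a w (s₀, z₀)) :=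
      hGstrict.to_localInverse
    rw [hGp] at hΦ'
    have h2 : HasFDerivAt (fun s : ℝ => Φ (s, 0))
        ((((crossingEqv k c hc).symm : (ℝ × ℂ) →L[ℝ] (ℝ × ℂ))).comp (inl ℝ ℝ ℂ)) s₀ :=
      hΦ'.hasFDerivAt.comp s₀ (inl ℝ ℝ ℂ).hasFDerivAt
    have h3 : HasFDerivAt z ((snd ℝ ℝ ℂ).comp
        ((((crossingEqv k c hc).symm : (ℝ × ℂ) →L[ℝ] (ℝ × ℂ))).comp (inl ℝ ℝ ℂ))) s₀ :=
      (snd ℝ ℝ ℂ).hasFDerivAt.comp s₀ h2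
    have h4 : HasDerivAt z (((crossingEqv k c hc).symm ((1 : ℝ), (0 : ℂ))).2) s₀ := h3.hasDerivAt
    have h5 : (crossingEqv k c hc).symm ((1 : ℝ), (0 : ℂ)) = ((1 : ℝ), -(k / c)) := by
      simp [crossingEqv, crossingLinv]
    rw [h5] at h4
    rw [h4.deriv]
    -- final algebra
    have hD : ((1 + s₀ * a.re) ^ 2 + (s₀ * (Ω₀ + a.im)) ^ 2 : ℝ) ≠ 0 := by
      have h := Complex.normSq_pos.mpr hc
      have he : Complex.normSq c = (1 + s₀ * a.re) ^ 2 + (s₀ * (Ω₀ + a.im)) ^ 2 := by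
        rw [hcdef, hz₀]
        simp only [Complex.normSq_apply, Complex.add_re, Complex.add_im, Complex.mul_re,
          Complex.mul_im, Complex.one_re, Complex.one_im, Complex.I_re, Complex.I_im,
          Complex.ofReal_re, Complex.ofReal_im]
        ring
      rw [he] at h
      exact ne_of_gt h
    show -(k / c) = _
    rw [← neg_div, div_eq_iff hc, hk, hcdef, hz₀, Complex.ext_iff]
    constructor <;>
    · simp only [Complex.add_re, Complex.add_im, Complex.mul_re, Complex.mul_im, Complex.sub_re,
        Complex.sub_im, Complex.one_re, Complex.one_im, Complex.I_re, Complex.I_im,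
        Complex.ofReal_re, Complex.ofReal_im, Complex.neg_re, Complex.neg_im]
      simp only [mul_zero, zero_mul, sub_zero, zero_add, add_zero, one_mul, zero_sub]
      field_simp
      rw [eq_div_iff (by convert hD using 1; ring)]
      ring
end
end

section
/- Let a ∈ ℝ, w ∈ ℂ with w ≠ 0 and |a| < |w|, let τ > 0, k ∈ ℤ, and Ω ∈ ℝ with Ω ≠ 0. Then the following are equivalent: (i) a = |w|·cos(Arg(w) − τ·Ω), Ω = |w|·sin(Arg(w) − τ·Ω), and Arg(w) − τ·Ω ∈ [2kπ, π + 2kπ]; (ii) Ω = √(|w|² − a²) and τ·Ω = Arg(w) − arccos(a/|w|) − 2kπ. -/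
/-! Writing `θ = Arg w - τΩ` and shifting by `2kπ` reduces to an angle `φ ∈ [0, π]`. There
`arccos` inverts `cos`, and `sin φ ≥ 0` makes `|w| sin φ` the nonnegative root `√(|w|² - a²)`
of `|w|² = a² + Ω²`. -/

open Real Set

theorem eq_mul_cos_and_eq_mul_sin_and_mem_Icc_zero_pi_iff {r a b φ : ℝ} (hr : 0 < r)
    (ha : |a| ≤ r) :
    (a = r * cos φ ∧ b = r * sin φ ∧ φ ∈ Icc 0 π) ↔ (b = √(r ^ 2 - a ^ 2) ∧ φ = arccos (a / r)) := by
  constructor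
  · rintro ⟨rfl, rfl, hφ0, hφπ⟩
    have hsin : 0 ≤ sin φ := sin_nonneg_of_nonneg_of_le_pi hφ0 hφπ
    refine ⟨?_, ?_⟩
    · rw [show r ^ 2 - (r * cos φ) ^ 2 = (r * sin φ) ^ 2 by nlinarith [sin_sq_add_cos_sq φ],
        sqrt_sq (mul_nonneg hr.le hsin)]
    · rw [mul_div_cancel_left₀ _ hr.ne', arccos_cos hφ0 hφπ]
  · rintro ⟨rfl, rfl⟩
    obtain ⟨hla, hau⟩ := abs_le.mp ha
    have hx1 : -1 ≤ a / r := by rw [le_div_iff₀ hr]; linarith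
    have hx2 : a / r ≤ 1 := by rw [div_le_one hr]; linarith
    refine ⟨?_, ?_, arccos_nonneg _, arccos_le_pi _⟩
    · rw [cos_arccos hx1 hx2, mul_div_cancel₀ _ hr.ne']
    · rw [sin_arccos, show r ^ 2 - a ^ 2 = r ^ 2 * (1 - (a / r) ^ 2) by field_simp,
        sqrt_mul (sq_nonneg r), sqrt_sq hr.le]

theorem eq_mul_cos_and_eq_mul_sin_and_mem_Icc_iff {r a b θ : ℝ} (k : ℤ) (hr : 0 < r)
    (ha : |a| ≤ r) :
    (a = r * cos θ ∧ b = r * sin θ ∧ θ ∈ Icc (2 * k * π) (π + 2 * k * π)) ↔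
      (b = √(r ^ 2 - a ^ 2) ∧ θ = arccos (a / r) + 2 * k * π) := by
  have hIcc : θ ∈ Icc (2 * k * π) (π + 2 * k * π) ↔ θ - k * (2 * π) ∈ Icc 0 π := by
    simp only [mem_Icc]
    constructor <;> rintro ⟨h0, hπ⟩ <;> constructor <;> linarith
  have harccos : θ = arccos (a / r) + 2 * k * π ↔ θ - k * (2 * π) = arccos (a / r) := by
    constructor <;> intro h <;> linarith
  rw [hIcc, harccos, ← cos_sub_int_mul_two_pi θ k, ← sin_sub_int_mul_two_pi θ k]
  exact eq_mul_cos_and_eq_mul_sin_and_mem_Icc_zero_pi_iff hr ha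

theorem angular_frequency_upper_general (a : ℝ) (w : ℂ) (hab : |a| < ‖w‖)
    (τ : ℝ) (k : ℤ) (Ω : ℝ) :
    (a = ‖w‖ * Real.cos (w.arg - τ * Ω) ∧
        Ω = ‖w‖ * Real.sin (w.arg - τ * Ω) ∧
        w.arg - τ * Ω ∈ Set.Icc (2 * (k : ℝ) * Real.pi) (Real.pi + 2 * (k : ℝ) * Real.pi)) ↔
      (Ω = Real.sqrt ((‖w‖) ^ 2 - a ^ 2) ∧
        τ * Ω = w.arg - Real.arccos (a / ‖w‖) - 2 * (k : ℝ) * Real.pi) := by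
  have hw : 0 < ‖w‖ := (abs_nonneg a).trans_lt hab
  rw [eq_mul_cos_and_eq_mul_sin_and_mem_Icc_iff k hw hab.le]
  refine and_congr_right fun _ => ?_
  constructor <;> intro h <;> linarith

/-- Angular frequency equations with `Arg(w) − τΩ ∈ [2kπ, π + 2kπ]` are equivalent to
`Ω = √(|w|² − a²)` and `τΩ = Arg(w) − arccos(a/|w|) − 2kπ`. -/
theorem angular_frequency_upper (a : ℝ) (w : ℂ) (hw : w ≠ 0) (hab : |a| < ‖w‖)
    (τ : ℝ) (hτ : 0 < τ) (k : ℤ) (Ω : ℝ) (hΩ : Ω ≠ 0) :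
    (a = ‖w‖ * Real.cos (w.arg - τ * Ω) ∧
        Ω = ‖w‖ * Real.sin (w.arg - τ * Ω) ∧
        w.arg - τ * Ω ∈ Set.Icc (2 * (k : ℝ) * Real.pi) (Real.pi + 2 * (k : ℝ) * Real.pi)) ↔
      (Ω = Real.sqrt ((‖w‖) ^ 2 - a ^ 2) ∧
        τ * Ω = w.arg - Real.arccos (a / ‖w‖) - 2 * (k : ℝ) * Real.pi) :=
  angular_frequency_upper_general a w hab τ k Ω
end

section
/- Let a ∈ ℝ, w ∈ ℂ with w ≠ 0 and |a| < |w|, let τ > 0, k ∈ ℤ, and Ω ∈ ℝ with Ω ≠ 0. Then the following are equivalent: (i) a = |w|·cos(Arg(w) − τ·Ω), Ω = |w|·sin(Arg(w) − τ·Ω), and Arg(w) − τ·Ω ∈ (−π + 2kπ, 2kπ); (ii) Ω = −√(|w|² − a²) and τ·Ω = Arg(w) + arccos(a/|w|) − 2kπ. -/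
/-!
Writing `θ = Arg(w) − τΩ`, the condition on `θ` says that `θ − 2kπ ∈ (−π, 0)`; there `cos` is a
bijection onto `(−1, 1)` with inverse `x ↦ 2kπ − arccos x`, and `sin θ < 0`. So `a = |w| cos θ`
pins down `θ = 2kπ − arccos(a/|w|)`, and then `Ω = |w| sin θ` is the negative square root of
`|w|² − a²`.
-/

open Real Set

theorem sin_neg_of_mem_Ioo_neg_pi_add {θ : ℝ} (k : ℤ)
    (hθ : θ ∈ Ioo (-π + 2 * k * π) (2 * k * π)) : sin θ < 0 := by
  rw [← sin_sub_int_mul_two_pi θ k]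
  exact sin_neg_of_neg_of_neg_pi_lt (by linarith [hθ.2]) (by linarith [hθ.1])

theorem cos_eq_and_mem_Ioo_iff_eq_sub_arccos {x θ : ℝ} (k : ℤ) (hx₁ : -1 < x) (hx₂ : x < 1) :
    (cos θ = x ∧ θ ∈ Ioo (-π + 2 * k * π) (2 * k * π)) ↔ θ = 2 * k * π - arccos x := by
  constructor
  · rintro ⟨hcos, hθ₁, hθ₂⟩
    have : arccos x = k * (2 * π) - θ := by
      rw [← hcos, ← cos_int_mul_two_pi_sub θ k]
      exact arccos_cos (by linarith) (by linarith)
    linarith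
  · rintro rfl
    have h₀ : 0 < arccos x := arccos_pos.2 hx₂
    have hπ : arccos x < π := arccos_lt_pi.2 hx₁
    refine ⟨?_, by linarith, by linarith⟩
    rw [show 2 * k * π - arccos x = k * (2 * π) - arccos x by ring, cos_int_mul_two_pi_sub,
      cos_arccos hx₁.le hx₂.le]

theorem mul_sin_eq_neg_sqrt {r θ : ℝ} (hr : 0 ≤ r) (hθ : sin θ ≤ 0) :
    r * sin θ = -√(r ^ 2 - (r * cos θ) ^ 2) := by
  have hsq : r ^ 2 - (r * cos θ) ^ 2 = (r * sin θ) ^ 2 := by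
    linear_combination -r ^ 2 * sin_sq_add_cos_sq θ
  rw [hsq, sqrt_sq_eq_abs, abs_of_nonpos (mul_nonpos_of_nonneg_of_nonpos hr hθ), neg_neg]

theorem angular_frequency_lower_general (a : ℝ) (w : ℂ) (hab : |a| < ‖w‖)
    (τ : ℝ) (k : ℤ) (Ω : ℝ) :
    (a = ‖w‖ * Real.cos (w.arg - τ * Ω) ∧
        Ω = ‖w‖ * Real.sin (w.arg - τ * Ω) ∧
        w.arg - τ * Ω ∈ Set.Ioo (-Real.pi + 2 * (k : ℝ) * Real.pi) (2 * (k : ℝ) * Real.pi)) ↔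
      (Ω = -Real.sqrt (‖w‖ ^ 2 - a ^ 2) ∧
        τ * Ω = w.arg + Real.arccos (a / ‖w‖) - 2 * (k : ℝ) * Real.pi) := by
  set θ := w.arg - τ * Ω
  set r := ‖w‖
  have hr : 0 < r := (abs_nonneg a).trans_lt hab
  obtain ⟨hra, har⟩ := abs_lt.mp hab
  have hx₁ : -1 < a / r := by rwa [lt_div_iff₀ hr, neg_one_mul]
  have hx₂ : a / r < 1 := by rwa [div_lt_one hr]
  have ha : a = r * cos θ ↔ cos θ = a / r := by rw [eq_div_iff hr.ne', mul_comm, eq_comm]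
  have hτΩ : τ * Ω = w.arg + arccos (a / r) - 2 * k * π ↔ θ = 2 * k * π - arccos (a / r) := by
    constructor <;> intro h <;> linarith
  have hsin (hθ : θ ∈ Ioo (-π + 2 * k * π) (2 * k * π)) (hcos : cos θ = a / r) :
      r * sin θ = -√(r ^ 2 - a ^ 2) := by
    rw [mul_sin_eq_neg_sqrt hr.le (sin_neg_of_mem_Ioo_neg_pi_add k hθ).le, hcos,
      mul_div_cancel₀ a hr.ne']
  rw [ha, hτΩ, ← cos_eq_and_mem_Ioo_iff_eq_sub_arccos k hx₁ hx₂]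
  constructor
  · rintro ⟨hcos, hΩ, hθ⟩
    exact ⟨hΩ.trans (hsin hθ hcos), hcos, hθ⟩
  · rintro ⟨hΩ, hcos, hθ⟩
    exact ⟨hcos, hΩ.trans (hsin hθ hcos).symm, hθ⟩

/-- Angular frequency equations with `Arg(w) − τΩ ∈ (−π + 2kπ, 2kπ)` are equivalent to
`Ω = −√(|w|² − a²)` and `τΩ = Arg(w) + arccos(a/|w|) − 2kπ`. -/
theorem angular_frequency_lower (a : ℝ) (w : ℂ) (hw : w ≠ 0) (hab : |a| < ‖w‖)
    (τ : ℝ) (hτ : 0 < τ) (k : ℤ) (Ω : ℝ) (hΩ : Ω ≠ 0) :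
    (a = ‖w‖ * Real.cos (w.arg - τ * Ω) ∧
        Ω = ‖w‖ * Real.sin (w.arg - τ * Ω) ∧
        w.arg - τ * Ω ∈ Set.Ioo (-Real.pi + 2 * (k : ℝ) * Real.pi) (2 * (k : ℝ) * Real.pi)) ↔
      (Ω = -Real.sqrt (‖w‖ ^ 2 - a ^ 2) ∧
        τ * Ω = w.arg + Real.arccos (a / ‖w‖) - 2 * (k : ℝ) * Real.pi) :=
  angular_frequency_lower_general a w hab τ k Ω
end

section
/- Let a ∈ ℝ, w ∈ ℂ with w ≠ 0 and |a| < |w|, and let τ > 0. Then there exists Ω ∈ ℝ such that i·Ω + a − w·exp(−τ·i·Ω) = 0 if and only if at least one of the following holds: (i) Re(w) < a and τ = τ_c(a,w); (ii) there is an integer n ≥ 1 with τ = τ_n^+(a,w); (iii) there is an integer n ≥ 1 with τ = τ_n^−(a,w). -/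
/-!
On the imaginary axis the equation reads `a + iΩ = w e^{-iτΩ}`. Comparing moduli forces
`Ω = ±Ω₀` with `Ω₀ = √(|w|² - a²)`; then `a ± iΩ₀ = |w| e^{±iφ}` with `φ = arccos (a / |w|)`, and
comparing arguments leaves `τ Ω₀ = ±Arg w - φ + 2πn` for some `n ∈ ℤ`. Since `τ Ω₀ > 0`, `n` is
nonnegative, and `n = 0` occurs exactly when `φ < |Arg w|`, which is the condition `Re w < a`.
-/

open Complex Real

lemma exp_mul_I_eq_exp_mul_I_iff (s t : ℝ) :
    exp (s * I) = exp (t * I) ↔ ∃ n : ℤ, s = t + 2 * π * n := by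
  rw [exp_eq_exp_iff_exists_int]
  refine exists_congr fun n => ⟨fun h => ?_, fun h => by rw [h]; push_cast; ring⟩
  have h_im := congrArg im h
  simp only [mul_im, ofReal_re, I_im, ofReal_im, I_re, add_im, mul_re] at h_im
  simpa [mul_comm] using h_im

lemma eq_mul_exp_mul_I_iff {z w : ℂ} (hw : w ≠ 0) (t : ℝ) :
    z = w * exp (t * I) ↔ ‖z‖ = ‖w‖ ∧ ∃ n : ℤ, arg z = arg w + t + 2 * π * n := by
  have hpolar : w * exp (t * I) = ‖w‖ * exp ((arg w + t : ℝ) * I) := by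
    conv_lhs => rw [← norm_mul_exp_arg_mul_I w]
    push_cast
    rw [mul_assoc, ← Complex.exp_add, add_mul]
  have hw' : (‖w‖ : ℂ) ≠ 0 := by exact_mod_cast norm_ne_zero_iff.mpr hw
  rw [hpolar, ← exp_mul_I_eq_exp_mul_I_iff]
  constructor
  · intro h
    have hnorm : ‖z‖ = ‖w‖ := by
      rw [h, norm_mul, norm_exp_ofReal_mul_I, mul_one, norm_real, norm_norm]
    refine ⟨hnorm, (mul_right_inj' hw').mp ?_⟩
    rw [← h, ← hnorm, norm_mul_exp_arg_mul_I]
  · rintro ⟨hnorm, h⟩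
    rw [← h, ← hnorm, norm_mul_exp_arg_mul_I]

lemma norm_add_mul_I_eq_iff {a Ω R : ℝ} (hR : 0 ≤ R) (ha : a ^ 2 ≤ R ^ 2) :
    ‖(a + Ω * I : ℂ)‖ = R ↔ Ω = √(R ^ 2 - a ^ 2) ∨ Ω = -√(R ^ 2 - a ^ 2) := by
  rw [norm_add_mul_I, sqrt_eq_iff_eq_sq (by positivity) hR, ← sq_eq_sq_iff_eq_or_eq_neg,
    sq_sqrt (by linarith)]
  constructor <;> intro h <;> linarith

lemma arg_add_sqrt_mul_I {a R : ℝ} (ha : |a| < R) :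
    arg (a + √(R ^ 2 - a ^ 2) * I) = arccos (a / R) := by
  have hR : 0 < R := (abs_nonneg a).trans_lt ha
  have ha2 : a ^ 2 < R ^ 2 := sq_lt_sq' (abs_lt.mp ha).1 (abs_lt.mp ha).2
  have hnorm : ‖(a + √(R ^ 2 - a ^ 2) * I : ℂ)‖ = R :=
    (norm_add_mul_I_eq_iff hR.le ha2.le).mpr (Or.inl rfl)
  have hz : (a + √(R ^ 2 - a ^ 2) * I : ℂ) ≠ 0 := norm_pos_iff.mp (by rw [hnorm]; exact hR)
  rw [arg_of_im_nonneg_of_ne_zero (by simp [sqrt_nonneg]) hz, hnorm]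
  simp

lemma arg_add_neg_sqrt_mul_I {a R : ℝ} (ha : |a| < R) :
    arg (a + (-√(R ^ 2 - a ^ 2) : ℝ) * I) = -arccos (a / R) := by
  have hR : 0 < R := (abs_nonneg a).trans_lt ha
  have ha2 : a ^ 2 < R ^ 2 := sq_lt_sq' (abs_lt.mp ha).1 (abs_lt.mp ha).2
  have hnorm : ‖(a + (-√(R ^ 2 - a ^ 2) : ℝ) * I : ℂ)‖ = R :=
    (norm_add_mul_I_eq_iff hR.le ha2.le).mpr (Or.inr rfl)
  rw [arg_of_im_neg (by simp [sqrt_pos.mpr (sub_pos.mpr ha2)]), hnorm]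
  simp

lemma abs_arg_eq_arccos {z : ℂ} (hz : z ≠ 0) : |arg z| = arccos (z.re / ‖z‖) := by
  rcases le_or_gt 0 z.im with him | him
  · rw [arg_of_im_nonneg_of_ne_zero him hz, abs_of_nonneg (arccos_nonneg _)]
  · rw [arg_of_im_neg him, abs_neg, abs_of_nonneg (arccos_nonneg _)]

lemma arccos_div_norm_lt_abs_arg_iff {z : ℂ} (hz : z ≠ 0) {a : ℝ} (ha : |a| ≤ ‖z‖) :
    arccos (a / ‖z‖) < |arg z| ↔ z.re < a := by
  have hz' : 0 < ‖z‖ := norm_pos_iff.mpr hz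
  rw [abs_arg_eq_arccos hz, strictAntiOn_arccos.lt_iff_gt, div_lt_div_iff_of_pos_right hz']
  · exact abs_le.mp (by rwa [abs_div, abs_norm, div_le_one hz'])
  · exact abs_le.mp (abs_re_div_norm_le_one z)

lemma exists_int_eq_add_two_mul_pi_iff {x β : ℝ} (hx : 0 < x) (hβ : β < 2 * π) :
    (∃ n : ℤ, x = β + 2 * n * π) ↔ x = β ∨ ∃ n : ℕ, 1 ≤ n ∧ x = β + 2 * n * π := by
  constructor
  · rintro ⟨n, rfl⟩
    rcases lt_trichotomy n 0 with hn | rfl | hn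
    · have : (n : ℝ) ≤ -1 := by exact_mod_cast Int.le_sub_one_of_lt hn
      nlinarith [pi_pos]
    · simp
    · lift n to ℕ using hn.le
      exact Or.inr ⟨n, by exact_mod_cast hn, by push_cast; ring⟩
  · rintro (rfl | ⟨n, -, rfl⟩)
    · exact ⟨0, by simp⟩
    · exact ⟨n, by push_cast; ring⟩

lemma eq_sub_or_eq_neg_sub_iff {x θ φ : ℝ} (hx : 0 < x) (hφ : 0 ≤ φ) :
    x = θ - φ ∨ x = -θ - φ ↔ φ < |θ| ∧ x = |θ| - φ := by
  rcases le_total 0 θ with hθ | hθ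
  · rw [abs_of_nonneg hθ]
    refine ⟨fun h => ?_, fun h => Or.inl h.2⟩
    rcases h with h | h <;> constructor <;> linarith
  · rw [abs_of_nonpos hθ]
    refine ⟨fun h => ?_, fun h => Or.inr h.2⟩
    rcases h with h | h <;> constructor <;> linarith

lemma imaginary_root_iff (a : ℝ) (w : ℂ) (τ Ω : ℝ) :
    I * Ω + a - w * exp (-τ * (I * Ω)) = 0 ↔ (a + Ω * I : ℂ) = w * exp ((-(τ * Ω) : ℝ) * I) := by
  rw [sub_eq_zero, show -(τ : ℂ) * (I * Ω) = (-(τ * Ω) : ℝ) * I by push_cast; ring]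
  constructor <;> intro h <;> linear_combination h

lemma exists_imaginary_root_iff {a : ℝ} {w : ℂ} (hab : |a| < ‖w‖) (τ : ℝ) :
    (∃ Ω : ℝ, I * Ω + a - w * exp (-τ * (I * Ω)) = 0) ↔
      (∃ n : ℤ, τ * √(‖w‖ ^ 2 - a ^ 2) = arg w - arccos (a / ‖w‖) + 2 * n * π) ∨
      (∃ n : ℤ, τ * √(‖w‖ ^ 2 - a ^ 2) = -arg w - arccos (a / ‖w‖) + 2 * n * π) := by
  have hR : 0 < ‖w‖ := (abs_nonneg a).trans_lt hab
  have ha2 : a ^ 2 ≤ ‖w‖ ^ 2 := sq_le_sq' (abs_le.mp hab.le).1 (abs_le.mp hab.le).2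
  simp only [imaginary_root_iff, eq_mul_exp_mul_I_iff (norm_pos_iff.mp hR),
    norm_add_mul_I_eq_iff hR.le ha2, or_and_right, exists_or, exists_eq_left,
    arg_add_sqrt_mul_I hab, arg_add_neg_sqrt_mul_I hab]
  refine or_congr (exists_congr fun n => ?_) ⟨fun ⟨n, h⟩ => ⟨-n, ?_⟩, fun ⟨n, h⟩ => ⟨-n, ?_⟩⟩
  · constructor <;> intro h <;> linarith
  · push_cast; linarith
  · push_cast; linarith

theorem purely_imaginary_roots_general (a : ℝ) (w : ℂ) (hab : |a| < ‖w‖)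
    (τ : ℝ) (hτ : 0 < τ) :
    (∃ Ω : ℝ, Complex.I * (Ω : ℂ) + (a : ℂ)
        - w * Complex.exp (-(τ : ℂ) * (Complex.I * (Ω : ℂ))) = 0) ↔
      ((w.re < a ∧
          τ = (|w.arg| - Real.arccos (a / ‖w‖)) /
              Real.sqrt ((‖w‖) ^ 2 - a ^ 2)) ∨
        (∃ n : ℕ, 1 ≤ n ∧
          τ = (w.arg - Real.arccos (a / ‖w‖) + 2 * (n : ℝ) * Real.pi) /
              Real.sqrt ((‖w‖) ^ 2 - a ^ 2)) ∨
        (∃ n : ℕ, 1 ≤ n ∧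
          τ = (-w.arg - Real.arccos (a / ‖w‖) + 2 * (n : ℝ) * Real.pi) /
              Real.sqrt ((‖w‖) ^ 2 - a ^ 2))) := by
  have hR : 0 < ‖w‖ := (abs_nonneg a).trans_lt hab
  have hΩ₀ : 0 < √(‖w‖ ^ 2 - a ^ 2) :=
    sqrt_pos.mpr (sub_pos.mpr (sq_lt_sq' (abs_lt.mp hab).1 (abs_lt.mp hab).2))
  have hφ : 0 ≤ arccos (a / ‖w‖) := arccos_nonneg _
  have hθ := neg_pi_lt_arg w
  have hθ' := arg_le_pi w
  have hx : 0 < τ * √(‖w‖ ^ 2 - a ^ 2) := mul_pos hτ hΩ₀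
  rw [exists_imaginary_root_iff hab,
    exists_int_eq_add_two_mul_pi_iff hx (by linarith [pi_pos]),
    exists_int_eq_add_two_mul_pi_iff hx (by linarith [pi_pos]),
    ← arccos_div_norm_lt_abs_arg_iff (norm_pos_iff.mp hR) hab.le]
  simp only [eq_div_iff hΩ₀.ne']
  rw [or_or_or_comm, eq_sub_or_eq_neg_sub_iff hx hφ]

/-- The equation `z + a − w e^{−τ z} = 0` has a root on the imaginary axis iff `τ` equals
the critical delay `τ_c(a,w)` (when `Re w < a`) or one of the values `τ_n^±(a,w)`, `n ≥ 1`. -/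
theorem purely_imaginary_roots (a : ℝ) (w : ℂ) (hw : w ≠ 0) (hab : |a| < ‖w‖)
    (τ : ℝ) (hτ : 0 < τ) :
    (∃ Ω : ℝ, Complex.I * (Ω : ℂ) + (a : ℂ)
        - w * Complex.exp (-(τ : ℂ) * (Complex.I * (Ω : ℂ))) = 0) ↔
      ((w.re < a ∧
          τ = (|w.arg| - Real.arccos (a / ‖w‖)) /
              Real.sqrt ((‖w‖) ^ 2 - a ^ 2)) ∨
        (∃ n : ℕ, 1 ≤ n ∧
          τ = (w.arg - Real.arccos (a / ‖w‖) + 2 * (n : ℝ) * Real.pi) /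
              Real.sqrt ((‖w‖) ^ 2 - a ^ 2)) ∨
        (∃ n : ℕ, 1 ≤ n ∧
          τ = (-w.arg - Real.arccos (a / ‖w‖) + 2 * (n : ℝ) * Real.pi) /
              Real.sqrt ((‖w‖) ^ 2 - a ^ 2))) :=
  purely_imaginary_roots_general a w hab τ hτ
end

section
/- Let a, w ∈ ℝ with w < −|a|. Then arccos(a/w) / √(w² − a²) > 1 if and only if a > −1 and there exists θ ∈ (0, π) such that θ·cot(θ) = −a and w² < a² + θ². (Here arccos(a/w)/√(w² − a²) is the critical delay τ_c(a,w) for real a and w.) -/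
private lemma sincos_lt (x : ℝ) (hx : 0 < x) : Real.sin x * Real.cos x < x := by
  have h := Real.sin_lt (show (0:ℝ) < 2 * x by linarith)
  rw [Real.sin_two_mul] at h
  linarith

private lemma gAnti : StrictAntiOn (fun x : ℝ => x * Real.cos x / Real.sin x)
    (Set.Ioo 0 Real.pi) := by
  apply strictAntiOn_of_deriv_neg (convex_Ioo _ _)
  · apply ContinuousOn.div (by fun_prop) (by fun_prop)
    intro x hx
    exact (Real.sin_pos_of_pos_of_lt_pi hx.1 hx.2).ne'
  · intro x hx
    rw [interior_Ioo] at hx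
    have hs : 0 < Real.sin x := Real.sin_pos_of_pos_of_lt_pi hx.1 hx.2
    have hd : HasDerivAt (fun x : ℝ => x * Real.cos x / Real.sin x)
        (((1 * Real.cos x + x * -Real.sin x) * Real.sin x - x * Real.cos x * Real.cos x) /
          Real.sin x ^ 2) x :=
      ((hasDerivAt_id x).mul (Real.hasDerivAt_cos x)).div (Real.hasDerivAt_sin x) hs.ne'
    rw [hd.deriv]
    apply div_neg_of_neg_of_pos _ (by positivity)
    nlinarith [sincos_lt x hx.1, Real.sin_sq_add_cos_sq x, hx.1]

private lemma kcont (a : ℝ) :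
    ContinuousOn (fun x : ℝ => x * Real.cos x + a * Real.sin x) (Set.Icc 0 Real.pi) := by
  fun_prop

private lemma sq_bound (a t θ : ℝ) (h3 : (t * Real.cos θ) ^ 2 < a ^ 2)
    (h4 : (t * Real.sin θ) ^ 2 < θ ^ 2) : t ^ 2 < a ^ 2 + θ ^ 2 := by
  nlinarith [Real.sin_sq_add_cos_sq θ]

private lemma cot_val (a θ : ℝ) (hs : Real.sin θ ≠ 0)
    (heq : θ * Real.cos θ = -a * Real.sin θ) : θ * Real.cot θ = -a := by
  rw [Real.cot_eq_cos_div_sin]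
  field_simp
  linarith [heq]

private lemma fwd_neg (a t φ : ℝ) (hA : a < 0) (ht0 : 0 < t)
    (hφ0 : 0 < φ) (hφπ : φ < Real.pi) (hsφ : 0 < Real.sin φ)
    (htcos : t * Real.cos φ = -a) (hL : t * Real.sin φ < φ) :
    ∃ θ ∈ Set.Ioo (0 : ℝ) Real.pi, θ * Real.cot θ = -a ∧ t ^ 2 < a ^ 2 + θ ^ 2 := by
  have hkφ : 0 < φ * Real.cos φ + a * Real.sin φ := by
    have hh : t * (φ * Real.cos φ + a * Real.sin φ) = a * (t * Real.sin φ - φ) := by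
      linear_combination φ * htcos
    have h0 : 0 < a * (t * Real.sin φ - φ) := mul_pos_of_neg_of_neg hA (by linarith)
    nlinarith
  have hkπ : Real.pi * Real.cos Real.pi + a * Real.sin Real.pi < 0 := by
    rw [Real.cos_pi, Real.sin_pi]
    nlinarith [Real.pi_pos]
  obtain ⟨θ, ⟨hθ1, hθ2⟩, hθeq⟩ :=
    intermediate_value_Ioo' hφπ.le ((kcont a).mono (Set.Icc_subset_Icc hφ0.le le_rfl))
      (Set.mem_Ioo.2 ⟨hkπ, hkφ⟩)
  have hθ0 : 0 < θ := lt_trans hφ0 hθ1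
  have hsθ : 0 < Real.sin θ := Real.sin_pos_of_pos_of_lt_pi hθ0 hθ2
  have heq : θ * Real.cos θ = -a * Real.sin θ := by
    simp only at hθeq
    linarith
  have hcosθpos : 0 < Real.cos θ := by nlinarith
  refine ⟨θ, ⟨hθ0, hθ2⟩, cot_val a θ hsθ.ne' heq, ?_⟩
  have hcc : Real.cos θ < Real.cos φ :=
    Real.strictAntiOn_cos ⟨hφ0.le, hφπ.le⟩ ⟨hθ0.le, hθ2.le⟩ hθ1
  have h1 : t * Real.cos θ < -a := by nlinarith
  have h2 : t * Real.sin θ < θ := by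
    nlinarith [mul_lt_mul_of_pos_right h1 hsθ]
  have h3 : (t * Real.cos θ) ^ 2 < a ^ 2 := by
    nlinarith [mul_pos ht0 hcosθpos]
  have h4 : (t * Real.sin θ) ^ 2 < θ ^ 2 := by
    nlinarith [mul_pos ht0 hsθ]
  exact sq_bound a t θ h3 h4

private lemma fwd_pos (a t φ : ℝ) (hA : 0 < a) (ht0 : 0 < t)
    (hφ0 : 0 < φ) (hφπ : φ < Real.pi) (hsφ : 0 < Real.sin φ)
    (htcos : t * Real.cos φ = -a) (hL : t * Real.sin φ < φ) :
    ∃ θ ∈ Set.Ioo (0 : ℝ) Real.pi, θ * Real.cot θ = -a ∧ t ^ 2 < a ^ 2 + θ ^ 2 := by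
  have hcosφneg : Real.cos φ < 0 := by nlinarith
  have hφhalf : Real.pi / 2 < φ := by
    by_contra h
    push_neg at h
    have : 0 ≤ Real.cos φ := Real.cos_nonneg_of_mem_Icc ⟨by linarith [Real.pi_pos], h⟩
    linarith
  have hkφ : φ * Real.cos φ + a * Real.sin φ < 0 := by
    have hh : t * (φ * Real.cos φ + a * Real.sin φ) = a * (t * Real.sin φ - φ) := by
      linear_combination φ * htcos
    have h0 : a * (t * Real.sin φ - φ) < 0 := mul_neg_of_pos_of_neg hA (by linarith)
    nlinarith
  have hkh : 0 < Real.pi / 2 * Real.cos (Real.pi / 2) + a * Real.sin (Real.pi / 2) := by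
    rw [Real.cos_pi_div_two, Real.sin_pi_div_two]
    nlinarith
  obtain ⟨θ, ⟨hθ1, hθ2⟩, hθeq⟩ :=
    intermediate_value_Ioo' hφhalf.le
      ((kcont a).mono (Set.Icc_subset_Icc (by positivity) hφπ.le))
      (Set.mem_Ioo.2 ⟨hkφ, hkh⟩)
  have hθ0 : 0 < θ := lt_trans (by positivity) hθ1
  have hθπ : θ < Real.pi := lt_trans hθ2 hφπ
  have hsθ : 0 < Real.sin θ := Real.sin_pos_of_pos_of_lt_pi hθ0 hθπ
  have heq : θ * Real.cos θ = -a * Real.sin θ := by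
    simp only at hθeq
    linarith
  have hcosθneg : Real.cos θ < 0 := by nlinarith
  refine ⟨θ, ⟨hθ0, hθπ⟩, cot_val a θ hsθ.ne' heq, ?_⟩
  have hcc : Real.cos φ < Real.cos θ :=
    Real.strictAntiOn_cos ⟨hθ0.le, hθπ.le⟩ ⟨hφ0.le, hφπ.le⟩ hθ2
  have h1 : -a < t * Real.cos θ := by nlinarith
  have h2 : t * Real.sin θ < θ := by
    nlinarith [mul_lt_mul_of_pos_right h1 hsθ]
  have h3 : (t * Real.cos θ) ^ 2 < a ^ 2 := by
    nlinarith [mul_neg_of_pos_of_neg ht0 hcosθneg]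
  have h4 : (t * Real.sin θ) ^ 2 < θ ^ 2 := by
    nlinarith [mul_pos ht0 hsθ]
  exact sq_bound a t θ h3 h4

private lemma bwd_ts (a t θ : ℝ) (ht0 : 0 < t) (hθ0 : 0 < θ) (hsθ : 0 < Real.sin θ)
    (heq : θ * Real.cos θ = -a * Real.sin θ) (hlt : t ^ 2 < a ^ 2 + θ ^ 2) :
    t * Real.sin θ < θ := by
  have h1 : a ^ 2 * Real.sin θ ^ 2 = θ ^ 2 * Real.cos θ ^ 2 := by
    linear_combination (a * Real.sin θ - θ * Real.cos θ) * heq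
  have h2 : (t * Real.sin θ) ^ 2 < θ ^ 2 := by
    nlinarith [mul_lt_mul_of_pos_right hlt (mul_pos hsθ hsθ), h1,
      Real.sin_sq_add_cos_sq θ, sq_nonneg θ]
  nlinarith [mul_pos ht0 hsθ, hθ0, h2]

private lemma bwd_neg (a t φ θ : ℝ) (hA : a < 0) (ht0 : 0 < t)
    (hφ0 : 0 < φ) (hφπ : φ < Real.pi) (hsφ : 0 < Real.sin φ)
    (htcos : t * Real.cos φ = -a)
    (hθ0 : 0 < θ) (hθπ : θ < Real.pi) (hsθ : 0 < Real.sin θ)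
    (heq : θ * Real.cos θ = -a * Real.sin θ) (hts : t * Real.sin θ < θ) :
    t * Real.sin φ < φ := by
  have hcosθpos : 0 < Real.cos θ := by nlinarith
  have h1 : t * Real.cos θ < -a := by
    nlinarith [mul_lt_mul_of_pos_right hts hcosθpos]
  have hcc : Real.cos θ < Real.cos φ := by nlinarith
  have hφθ : φ < θ :=
    (Real.strictAntiOn_cos.lt_iff_gt ⟨hθ0.le, hθπ.le⟩ ⟨hφ0.le, hφπ.le⟩).1 hcc
  have hg := gAnti ⟨hφ0, hφπ⟩ ⟨hθ0, hθπ⟩ hφθ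
  simp only at hg
  have hgθ : θ * Real.cos θ / Real.sin θ = -a := by
    rw [heq, mul_div_assoc, div_self hsθ.ne', mul_one]
  rw [hgθ, ← htcos] at hg
  have hcosφpos : 0 < Real.cos φ := by nlinarith
  rw [lt_div_iff₀ hsφ] at hg
  nlinarith

private lemma bwd_pos (a t φ θ : ℝ) (hA : 0 < a) (ht0 : 0 < t)
    (hφ0 : 0 < φ) (hφπ : φ < Real.pi) (hsφ : 0 < Real.sin φ)
    (htcos : t * Real.cos φ = -a)
    (hθ0 : 0 < θ) (hθπ : θ < Real.pi) (hsθ : 0 < Real.sin θ)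
    (heq : θ * Real.cos θ = -a * Real.sin θ) (hts : t * Real.sin θ < θ) :
    t * Real.sin φ < φ := by
  have hcosθneg : Real.cos θ < 0 := by nlinarith
  have h1 : -a < t * Real.cos θ := by
    nlinarith [mul_lt_mul_of_pos_right hts (neg_pos.2 hcosθneg), hsθ]
  have hcc : Real.cos φ < Real.cos θ := by nlinarith
  have hθφ : θ < φ :=
    (Real.strictAntiOn_cos.lt_iff_gt ⟨hφ0.le, hφπ.le⟩ ⟨hθ0.le, hθπ.le⟩).1 hcc
  have hg := gAnti ⟨hθ0, hθπ⟩ ⟨hφ0, hφπ⟩ hθφ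
  simp only at hg
  have hgθ : θ * Real.cos θ / Real.sin θ = -a := by
    rw [heq, mul_div_assoc, div_self hsθ.ne', mul_one]
  rw [hgθ, ← htcos] at hg
  have hcosφneg : Real.cos φ < 0 := by nlinarith
  rw [div_lt_iff₀ hsφ] at hg
  nlinarith

private lemma fwd_a_gt (a t φ : ℝ) (hA : a < 0) (ht0 : 0 < t)
    (hφ0 : 0 < φ) (hφπ : φ < Real.pi) (hsφ : 0 < Real.sin φ)
    (htcos : t * Real.cos φ = -a) (hL : t * Real.sin φ < φ) : a > -1 := by
  have hcosφpos : 0 < Real.cos φ := by nlinarith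
  have hφhalf : φ < Real.pi / 2 := by
    by_contra h
    push_neg at h
    have := Real.cos_nonpos_of_pi_div_two_le_of_le h (by linarith [Real.pi_pos])
    linarith
  have htan : φ < Real.tan φ := Real.lt_tan hφ0 hφhalf
  rw [Real.tan_eq_sin_div_cos, lt_div_iff₀ hcosφpos] at htan
  nlinarith

set_option maxHeartbeats 1000000 in
/-- For real `a, w` with `w < −|a|`, the critical delay `arccos(a/w)/√(w² − a²)` exceeds `1`
iff `a > −1` and there is `θ ∈ (0, π)` with `θ cot θ = −a` and `w² < a² + θ²`. -/
theorem critical_delay_gt_one_real (a w : ℝ) (hw : w < -|a|) :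
    Real.arccos (a / w) / Real.sqrt (w ^ 2 - a ^ 2) > 1 ↔
      (a > -1 ∧ ∃ θ ∈ Set.Ioo (0 : ℝ) Real.pi,
        θ * Real.cot θ = -a ∧ w ^ 2 < a ^ 2 + θ ^ 2) := by
  have habs : |a| < -w := by linarith
  have hwneg : w < 0 := lt_of_lt_of_le hw (by simp [abs_nonneg])
  set t : ℝ := -w with htdef
  have ht0 : 0 < t := lt_of_le_of_lt (abs_nonneg a) habs
  have hratio : |a / w| < 1 := by
    rw [abs_div, abs_of_neg hwneg, div_lt_one ht0]
    exact habs
  obtain ⟨hr1, hr2⟩ := abs_lt.1 hratio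
  set φ := Real.arccos (a / w) with hφdef
  have hcos : Real.cos φ = a / w := Real.cos_arccos hr1.le hr2.le
  have hφ0 : 0 < φ := Real.arccos_pos.2 hr2
  have hφπ : φ < Real.pi :=
    lt_of_le_of_ne (Real.arccos_le_pi _) (fun h => by
      have := Real.arccos_eq_pi.1 h; linarith)
  have hsφ : 0 < Real.sin φ := Real.sin_pos_of_pos_of_lt_pi hφ0 hφπ
  have htcos : t * Real.cos φ = -a := by
    rw [hcos, htdef]
    field_simp
    rw [mul_comm w a, mul_div_assoc, div_self hwneg.ne]
    ring
  have hw2 : w ^ 2 = t ^ 2 := by rw [htdef]; ring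
  have hpyth : Real.sin φ ^ 2 + Real.cos φ ^ 2 = 1 := Real.sin_sq_add_cos_sq φ
  have hkey : (t * Real.sin φ) ^ 2 = w ^ 2 - a ^ 2 := by
    have h1 : (t * Real.cos φ) ^ 2 = a ^ 2 := by rw [htcos]; ring
    linear_combination t ^ 2 * hpyth - h1 - hw2
  have hsqrt : Real.sqrt (w ^ 2 - a ^ 2) = t * Real.sin φ := by
    rw [← hkey, Real.sqrt_sq (by positivity)]
  have hsqpos : 0 < t * Real.sin φ := by positivity
  rw [gt_iff_lt, hsqrt, lt_div_iff₀ hsqpos, one_mul, hw2]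
  constructor
  · intro hL
    rcases lt_trichotomy a 0 with hA | hA | hA
    · exact ⟨fwd_a_gt a t φ hA ht0 hφ0 hφπ hsφ htcos hL,
        fwd_neg a t φ hA ht0 hφ0 hφπ hsφ htcos hL⟩
    · have hφval : φ = Real.pi / 2 := by
        rw [hφdef, hA]
        simp
      refine ⟨by rw [hA]; norm_num, Real.pi / 2,
        ⟨by positivity, by linarith [Real.pi_pos]⟩, ?_, ?_⟩
      · rw [Real.cot_eq_cos_div_sin, Real.cos_pi_div_two, hA]
        ring
      · rw [hφval, Real.sin_pi_div_two, mul_one] at hL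
        rw [hA]
        nlinarith
    · exact ⟨by linarith, fwd_pos a t φ hA ht0 hφ0 hφπ hsφ htcos hL⟩
  · rintro ⟨ha, θ, ⟨hθ0, hθπ⟩, hcot, hlt⟩
    have hsθ : 0 < Real.sin θ := Real.sin_pos_of_pos_of_lt_pi hθ0 hθπ
    have heq : θ * Real.cos θ = -a * Real.sin θ := by
      rw [Real.cot_eq_cos_div_sin] at hcot
      field_simp at hcot
      linarith [hcot]
    have hts : t * Real.sin θ < θ := bwd_ts a t θ ht0 hθ0 hsθ heq hlt
    rcases lt_trichotomy a 0 with hA | hA | hA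
    · exact bwd_neg a t φ θ hA ht0 hφ0 hφπ hsφ htcos hθ0 hθπ hsθ heq hts
    · have hcosθ : Real.cos θ = 0 := by
        have h0 : θ * Real.cos θ = 0 := by rw [heq, hA]; ring
        rcases mul_eq_zero.1 h0 with h | h
        · exact absurd h hθ0.ne'
        · exact h
      have hθval : θ = Real.pi / 2 :=
        Real.injOn_cos ⟨hθ0.le, hθπ.le⟩ ⟨by positivity, by linarith [Real.pi_pos]⟩
          (by rw [hcosθ, Real.cos_pi_div_two])
      have hφval : φ = Real.pi / 2 := by
        rw [hφdef, hA]; simp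
      rw [hφval, Real.sin_pi_div_two, mul_one]
      rw [hθval, Real.sin_pi_div_two, mul_one] at hts
      exact hts
    · exact bwd_pos a t φ θ hA ht0 hφ0 hφπ hsφ htcos hθ0 hθπ hsθ heq hts
end

section
/- Let φ ∈ (0, π/2]. Then the function C(·;φ) : [0, φ) → ℝ defined by C(θ;φ) := θ·cot(θ − φ) is strictly decreasing on [0, φ), and C(θ;φ) tends to −∞ as θ tends to φ from the left. -/
open Real Filter Set

/-- `cot` is strictly decreasing on `[-π/2, 0)`. -/
lemma cot_lt_cot_aux {a b : ℝ} (ha : -(Real.pi/2) ≤ a) (hab : a < b) (hb : b < 0) :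
    Real.cot b < Real.cot a := by
  have hpi := Real.pi_pos
  have hsa : Real.sin a < 0 := by
    apply Real.sin_neg_of_neg_of_neg_pi_lt (lt_of_lt_of_le hab hb.le)
    linarith
  have hsb : Real.sin b < 0 := by
    apply Real.sin_neg_of_neg_of_neg_pi_lt hb
    linarith
  have hsub : 0 < Real.sin (b - a) := by
    apply Real.sin_pos_of_pos_of_lt_pi (by linarith)
    linarith
  rw [Real.cot_eq_cos_div_sin, Real.cot_eq_cos_div_sin, ← sub_pos]
  have key : Real.cos a / Real.sin a - Real.cos b / Real.sin b
      = Real.sin (b - a) / (Real.sin a * Real.sin b) := by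
    have ha' : Real.sin a ≠ 0 := ne_of_lt hsa
    have hb' : Real.sin b ≠ 0 := ne_of_lt hsb
    rw [Real.sin_sub]
    field_simp
  rw [key]
  exact div_pos hsub (mul_pos_of_neg_of_neg hsa hsb)

/-- For `φ ∈ (0, π/2]`, the function `θ ↦ θ cot(θ − φ)` is strictly decreasing on `[0, φ)`
and tends to `−∞` as `θ → φ⁻` within `[0, φ)`. -/
theorem C_strict_anti_small_phi (φ : ℝ) (hφ : φ ∈ Set.Ioc 0 (Real.pi / 2)) :
    StrictAntiOn (fun θ : ℝ => θ * Real.cot (θ - φ)) (Set.Ico 0 φ) ∧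
      Filter.Tendsto (fun θ : ℝ => θ * Real.cot (θ - φ))
        (nhdsWithin φ (Set.Ico 0 φ)) Filter.atBot := by
  obtain ⟨hφ0, hφ2⟩ := hφ
  have hpi := Real.pi_pos
  -- cot (t - φ) is nonpositive on the interval, and negative when t > 0
  have hcotneg : ∀ t : ℝ, 0 < t → t < φ → Real.cot (t - φ) < 0 := by
    intro t ht0 htφ
    have hsin : Real.sin (t - φ) < 0 :=
      Real.sin_neg_of_neg_of_neg_pi_lt (by linarith) (by linarith)
    have hcos : 0 < Real.cos (t - φ) :=
      Real.cos_pos_of_mem_Ioo ⟨by linarith, by linarith⟩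
    rw [Real.cot_eq_cos_div_sin]
    exact div_neg_of_pos_of_neg hcos hsin
  constructor
  · intro x hx y hy hxy
    obtain ⟨hx0, hxφ⟩ := hx
    obtain ⟨hy0, hyφ⟩ := hy
    simp only
    have hycot : Real.cot (y - φ) < 0 := hcotneg y (lt_of_le_of_lt hx0 hxy) hyφ
    rcases eq_or_lt_of_le hx0 with h0 | hx0'
    · rw [← h0]
      simp only [zero_mul]
      exact mul_neg_of_pos_of_neg (h0 ▸ hxy) hycot
    · have hmono : Real.cot (y - φ) < Real.cot (x - φ) :=
        cot_lt_cot_aux (by linarith) (by linarith) (by linarith)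
      calc y * Real.cot (y - φ) < x * Real.cot (y - φ) :=
            (mul_lt_mul_right_of_neg hycot).mpr hxy
        _ ≤ x * Real.cot (x - φ) := by nlinarith
  · -- limit: θ * cot (θ - φ) = -((θ * cos (θ - φ)) * (-sin (θ - φ))⁻¹)
    have hsin : ∀ t ∈ Set.Ico (0:ℝ) φ, 0 < -Real.sin (t - φ) := by
      intro t ht
      have : Real.sin (t - φ) < 0 :=
        Real.sin_neg_of_neg_of_neg_pi_lt (by linarith [ht.2]) (by linarith [ht.1])
      linarith
    have h1 : Filter.Tendsto (fun θ : ℝ => θ * Real.cos (θ - φ))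
        (nhdsWithin φ (Set.Ico 0 φ)) (nhds φ) := by
      have : Filter.Tendsto (fun θ : ℝ => θ * Real.cos (θ - φ)) (nhds φ)
          (nhds (φ * Real.cos (φ - φ))) := by
        exact (continuous_id.mul ((Real.continuous_cos.comp
          (continuous_id.sub continuous_const)))).tendsto φ
      simp only [sub_self, Real.cos_zero, mul_one] at this
      exact this.mono_left nhdsWithin_le_nhds
    have h2 : Filter.Tendsto (fun θ : ℝ => -Real.sin (θ - φ))
        (nhdsWithin φ (Set.Ico 0 φ)) (nhdsWithin 0 (Set.Ioi 0)) := by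
      rw [tendsto_nhdsWithin_iff]
      constructor
      · have : Filter.Tendsto (fun θ : ℝ => -Real.sin (θ - φ)) (nhds φ)
            (nhds (-Real.sin (φ - φ))) :=
          ((Real.continuous_sin.comp (continuous_id.sub continuous_const)).neg).tendsto φ
        simp only [sub_self, Real.sin_zero, neg_zero] at this
        exact this.mono_left nhdsWithin_le_nhds
      · exact eventually_nhdsWithin_of_forall fun t ht => hsin t ht
    have h3 : Filter.Tendsto (fun θ : ℝ => (-Real.sin (θ - φ))⁻¹)
        (nhdsWithin φ (Set.Ico 0 φ)) Filter.atTop :=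
      tendsto_inv_nhdsGT_zero.comp h2
    have h4 : Filter.Tendsto (fun θ : ℝ => (θ * Real.cos (θ - φ)) * (-Real.sin (θ - φ))⁻¹)
        (nhdsWithin φ (Set.Ico 0 φ)) Filter.atTop :=
      Filter.Tendsto.pos_mul_atTop hφ0 h1 h3
    have h5 : Filter.Tendsto (fun θ : ℝ => -((θ * Real.cos (θ - φ)) * (-Real.sin (θ - φ))⁻¹))
        (nhdsWithin φ (Set.Ico 0 φ)) Filter.atBot :=
      Filter.tendsto_neg_atTop_atBot.comp h4
    refine h5.congr' ?_
    filter_upwards [self_mem_nhdsWithin] with t ht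
    rw [Real.cot_eq_cos_div_sin]
    have hs := hsin t ht
    have : Real.sin (t - φ) ≠ 0 := by linarith
    field_simp
end

section
/- Let φ ∈ (π/2, π). Then there exists a unique S ∈ (0, φ) such that sin(2S − 2φ) = 2S. Moreover, for this S: sin(2θ − 2φ) − 2θ > 0 for all θ ∈ [0, S), and sin(2θ − 2φ) − 2θ < 0 for all θ ∈ (S, φ). -/
/-- For `φ ∈ (π/2, π)`, there is a unique `S ∈ (0, φ)` with `sin(2S − 2φ) = 2S`; moreover
`sin(2θ − 2φ) − 2θ > 0` on `[0, S)` and `sin(2θ − 2φ) − 2θ < 0` on `(S, φ)`. -/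
theorem unique_S_phi (φ : ℝ) (hφ : φ ∈ Set.Ioo (Real.pi / 2) Real.pi) :
    (∃! S : ℝ, S ∈ Set.Ioo 0 φ ∧ Real.sin (2 * S - 2 * φ) = 2 * S) ∧
      ∀ S : ℝ, S ∈ Set.Ioo 0 φ → Real.sin (2 * S - 2 * φ) = 2 * S →
        ((∀ θ ∈ Set.Ico (0 : ℝ) S, Real.sin (2 * θ - 2 * φ) - 2 * θ > 0) ∧
          (∀ θ ∈ Set.Ioo S φ, Real.sin (2 * θ - 2 * φ) - 2 * θ < 0)) := by
  obtain ⟨hφ1, hφ2⟩ := hφ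
  have hpi := Real.pi_pos
  have hφpos : 0 < φ := lt_trans (by linarith) hφ1
  set f : ℝ → ℝ := fun θ => Real.sin (2 * θ - 2 * φ) - 2 * θ with hf
  have hcont : Continuous f := by fun_prop
  have hd : ∀ x : ℝ, HasDerivAt f (Real.cos (2 * x - 2 * φ) * 2 - 2) x := by
    intro x
    have h1 : HasDerivAt (fun θ : ℝ => 2 * θ - 2 * φ) 2 x := by
      simpa using ((hasDerivAt_id x).const_mul 2).sub_const (2 * φ)
    have h2 := (Real.hasDerivAt_sin (2 * x - 2 * φ)).comp x h1
    have h3 := h2.sub ((hasDerivAt_id x).const_mul 2)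
    simp only [mul_one, id] at h3
    exact h3
  have hanti : StrictAntiOn f (Set.Icc 0 φ) := by
    apply strictAntiOn_of_deriv_neg (convex_Icc 0 φ) hcont.continuousOn
    intro x hx
    rw [interior_Icc] at hx
    rw [(hd x).deriv]
    have hlt : Real.cos (2 * x - 2 * φ) < 1 := by
      refine lt_of_le_of_ne (Real.cos_le_one _) ?_
      intro h
      have := (Real.cos_eq_one_iff_of_lt_of_lt (x := 2 * x - 2 * φ)
        (by nlinarith [hx.1, hx.2]) (by nlinarith [hx.1, hx.2])).mp h
      nlinarith [hx.2]
    linarith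
  have hf0 : 0 < f 0 := by
    have : Real.sin (2 * φ) < 0 := by
      have h := Real.sin_pos_of_pos_of_lt_pi (x := 2 * φ - Real.pi) (by linarith) (by linarith)
      have : Real.sin (2 * φ - Real.pi) = -Real.sin (2 * φ) := by
        rw [Real.sin_sub, Real.sin_pi, Real.cos_pi]; ring
      linarith [this ▸ h]
    simp only [hf]
    rw [show (2:ℝ) * 0 - 2 * φ = -(2 * φ) by ring, Real.sin_neg]
    linarith
  have hfφ : f φ < 0 := by
    simp only [hf]
    rw [show (2:ℝ) * φ - 2 * φ = 0 by ring, Real.sin_zero]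
    linarith
  -- existence via IVT
  obtain ⟨S, hS, hfS⟩ : ∃ S ∈ Set.Ioo (0:ℝ) φ, f S = 0 := by
    have h := intermediate_value_Ioo' (le_of_lt hφpos) hcont.continuousOn
      (a := 0) (b := φ)
    have h0 : (0:ℝ) ∈ Set.Ioo (f φ) (f 0) := ⟨hfφ, hf0⟩
    obtain ⟨S, hS, hfS⟩ := h h0
    exact ⟨S, hS, hfS⟩
  have key : ∀ S : ℝ, S ∈ Set.Ioo 0 φ → Real.sin (2 * S - 2 * φ) = 2 * S →
        ((∀ θ ∈ Set.Ico (0 : ℝ) S, Real.sin (2 * θ - 2 * φ) - 2 * θ > 0) ∧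
          (∀ θ ∈ Set.Ioo S φ, Real.sin (2 * θ - 2 * φ) - 2 * θ < 0)) := by
    intro T hT hfT
    have hTmem : T ∈ Set.Icc 0 φ := ⟨le_of_lt hT.1, le_of_lt hT.2⟩
    have hfT0 : f T = 0 := by simp [hf, hfT]
    constructor
    · intro θ hθ
      have : f T < f θ := hanti ⟨hθ.1, le_trans (le_of_lt hθ.2) hTmem.2⟩ hTmem hθ.2
      simp only [hf] at this; linarith [hfT]
    · intro θ hθ
      have : f θ < f T := hanti hTmem ⟨le_trans hTmem.1 (le_of_lt hθ.1), le_of_lt hθ.2⟩ hθ.1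
      simp only [hf] at this; linarith [hfT]
  refine ⟨⟨S, ⟨hS, by have := hfS; simp only [hf] at this; linarith⟩, ?_⟩, key⟩
  rintro T ⟨hT, hfT⟩
  have hTmem : T ∈ Set.Icc 0 φ := ⟨le_of_lt hT.1, le_of_lt hT.2⟩
  have hSmem : S ∈ Set.Icc 0 φ := ⟨le_of_lt hS.1, le_of_lt hS.2⟩
  have hfT0 : f T = 0 := by simp [hf, hfT]
  exact hanti.injOn hTmem hSmem (by rw [hfT0, hfS])
end

section
/- Let φ ∈ (π/2, π) and let S ∈ (0, φ) satisfy sin(2S − 2φ) = 2S. Then the function C(·;φ) : [0, φ) → ℝ defined by C(θ;φ) := θ·cot(θ − φ) is strictly increasing on [0, S], strictly decreasing on [S, φ), attains its maximum value cos²(S − φ) at θ = S, and C(θ;φ) tends to −∞ as θ tends to φ from the left. -/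
open Real Filter Set

/-- Auxiliary: derivative of `θ ↦ θ * cos (θ - φ) / sin (θ - φ)`. -/
lemma hasDerivAt_theta_cot (φ θ : ℝ) (h : Real.sin (θ - φ) ≠ 0) :
    HasDerivAt (fun x : ℝ => x * (Real.cos (x - φ) / Real.sin (x - φ)))
      ((Real.sin (θ - φ) * Real.cos (θ - φ) - θ) / Real.sin (θ - φ) ^ 2) θ := by
  have hsub : HasDerivAt (fun x : ℝ => x - φ) 1 θ := by
    simpa using (hasDerivAt_id θ).sub_const φ
  have hcos : HasDerivAt (fun x : ℝ => Real.cos (x - φ))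
      (-Real.sin (θ - φ) * 1) θ := by have := (Real.hasDerivAt_cos (θ - φ)).comp θ hsub; exact this
  have hsin : HasDerivAt (fun x : ℝ => Real.sin (x - φ))
      (Real.cos (θ - φ) * 1) θ := by have := (Real.hasDerivAt_sin (θ - φ)).comp θ hsub; exact this
  have hdiv := hcos.div hsin h
  have := (hasDerivAt_id θ).mul hdiv
  refine this.congr_deriv (Eq.symm ?_)
  simp only [Pi.div_apply, id]
  field_simp
  linear_combination θ * Real.sin_sq_add_cos_sq (θ - φ)

/-- For `φ ∈ (π/2, π)` and `S ∈ (0, φ)` with `sin(2S − 2φ) = 2S`, the function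
`θ ↦ θ cot(θ − φ)` is strictly increasing on `[0, S]`, strictly decreasing on `[S, φ)`,
attains its maximum `cos²(S − φ)` at `S`, and tends to `−∞` as `θ → φ⁻` within `[0, φ)`. -/
theorem C_monotonicity_large_phi (φ : ℝ) (hφ : φ ∈ Set.Ioo (Real.pi / 2) Real.pi)
    (S : ℝ) (hS : S ∈ Set.Ioo 0 φ) (hSeq : Real.sin (2 * S - 2 * φ) = 2 * S) :
    StrictMonoOn (fun θ : ℝ => θ * Real.cot (θ - φ)) (Set.Icc 0 S) ∧
    StrictAntiOn (fun θ : ℝ => θ * Real.cot (θ - φ)) (Set.Ico S φ) ∧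
    S * Real.cot (S - φ) = Real.cos (S - φ) ^ 2 ∧
    (∀ θ ∈ Set.Ico (0 : ℝ) φ, θ * Real.cot (θ - φ) ≤ Real.cos (S - φ) ^ 2) ∧
    Filter.Tendsto (fun θ : ℝ => θ * Real.cot (θ - φ))
      (nhdsWithin φ (Set.Ico 0 φ)) Filter.atBot := by
  obtain ⟨hφ1, hφ2⟩ := hφ
  obtain ⟨hS0, hSφ⟩ := hS
  have hφ0 : 0 < φ := lt_trans (by positivity) hφ1
  -- sin (θ - φ) < 0 on [0, φ)
  have hsinneg : ∀ θ ∈ Set.Ico (0:ℝ) φ, Real.sin (θ - φ) < 0 := by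
    intro θ ⟨h0, h1⟩
    exact Real.sin_neg_of_neg_of_neg_pi_lt (by linarith) (by linarith)
  have hsinne : ∀ θ ∈ Set.Ico (0:ℝ) φ, Real.sin (θ - φ) ≠ 0 := fun θ hθ =>
    ne_of_lt (hsinneg θ hθ)
  -- rewrite cot
  have hfun : (fun θ : ℝ => θ * Real.cot (θ - φ)) =
      fun θ : ℝ => θ * (Real.cos (θ - φ) / Real.sin (θ - φ)) := by
    funext θ; rw [Real.cot_eq_cos_div_sin]
  -- g(θ) = sin(θ-φ)cos(θ-φ) - θ is strictly decreasing on [0, φ]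
  set g : ℝ → ℝ := fun θ => Real.sin (θ - φ) * Real.cos (θ - φ) - θ with hg_def
  have hgderiv : ∀ θ : ℝ, HasDerivAt g (Real.cos (2 * (θ - φ)) - 1) θ := by
    intro θ
    have hsub : HasDerivAt (fun x : ℝ => x - φ) 1 θ := by
      simpa using (hasDerivAt_id θ).sub_const φ
    have hcos : HasDerivAt (fun x : ℝ => Real.cos (x - φ))
        (-Real.sin (θ - φ) * 1) θ := by have := (Real.hasDerivAt_cos (θ - φ)).comp θ hsub; exact this
    have hsin : HasDerivAt (fun x : ℝ => Real.sin (x - φ))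
        (Real.cos (θ - φ) * 1) θ := by have := (Real.hasDerivAt_sin (θ - φ)).comp θ hsub; exact this
    have := (hsin.mul hcos).sub (hasDerivAt_id θ)
    refine this.congr_deriv (Eq.symm ?_)
    rw [Real.cos_two_mul]
    linear_combination Real.sin_sq_add_cos_sq (θ - φ)
  have hganti : StrictAntiOn g (Set.Icc 0 φ) := by
    apply strictAntiOn_of_deriv_neg (convex_Icc 0 φ)
    · exact fun θ _ => (hgderiv θ).continuousAt.continuousWithinAt
    · intro θ hθ
      rw [interior_Icc] at hθ
      rw [(hgderiv θ).deriv]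
      have h1 : Real.cos (2 * (θ - φ)) < 1 := by
        have hne : 2 * (θ - φ) ≠ 0 := by
          have := hθ.2; intro h; nlinarith
        rcases (Real.cos_le_one (2 * (θ - φ))).lt_or_eq with h | h
        · exact h
        · exact absurd ((Real.cos_eq_one_iff_of_lt_of_lt
            (by linarith [hθ.1, Real.pi_pos])
            (by linarith [hθ.2, Real.pi_pos])).mp h) hne
      linarith
  -- g S = 0
  have hgS : g S = 0 := by
    have h2 : Real.sin (2 * (S - φ)) = 2 * Real.sin (S - φ) * Real.cos (S - φ) :=
      Real.sin_two_mul (S - φ)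
    have : Real.sin (2 * S - 2 * φ) = Real.sin (2 * (S - φ)) := by ring_nf
    rw [this, h2] at hSeq
    simp only [hg_def]
    linarith
  -- strict mono on [0, S]
  have hmono : StrictMonoOn (fun θ : ℝ => θ * Real.cot (θ - φ)) (Set.Icc 0 S) := by
    rw [hfun]
    apply strictMonoOn_of_deriv_pos (convex_Icc 0 S)
    · intro θ hθ
      have hθmem : θ ∈ Set.Ico (0:ℝ) φ := ⟨hθ.1, lt_of_le_of_lt hθ.2 hSφ⟩
      exact (hasDerivAt_theta_cot φ θ (hsinne θ hθmem)).continuousAt.continuousWithinAt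
    · intro θ hθ
      rw [interior_Icc] at hθ
      have hθmem : θ ∈ Set.Ico (0:ℝ) φ := ⟨le_of_lt hθ.1, lt_trans hθ.2 hSφ⟩
      rw [(hasDerivAt_theta_cot φ θ (hsinne θ hθmem)).deriv]
      have hgpos : 0 < g θ := by
        have := hganti ⟨le_of_lt hθ.1, by linarith [hθ.2]⟩ ⟨le_of_lt hS0, le_of_lt hSφ⟩ hθ.2
        rw [hgS] at this; linarith
      have hs2 : 0 < Real.sin (θ - φ) ^ 2 := pow_two_pos_of_ne_zero (hsinne θ hθmem)
      exact div_pos (by simpa [hg_def] using hgpos) hs2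
  -- strict anti on [S, φ)
  have hanti : StrictAntiOn (fun θ : ℝ => θ * Real.cot (θ - φ)) (Set.Ico S φ) := by
    rw [hfun]
    apply strictAntiOn_of_deriv_neg (convex_Ico S φ)
    · intro θ hθ
      have hθmem : θ ∈ Set.Ico (0:ℝ) φ := ⟨le_trans (le_of_lt hS0) hθ.1, hθ.2⟩
      exact (hasDerivAt_theta_cot φ θ (hsinne θ hθmem)).continuousAt.continuousWithinAt
    · intro θ hθ
      rw [interior_Ico] at hθ
      have hθmem : θ ∈ Set.Ico (0:ℝ) φ := ⟨by linarith [hθ.1], hθ.2⟩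
      rw [(hasDerivAt_theta_cot φ θ (hsinne θ hθmem)).deriv]
      have hgneg : g θ < 0 := by
        have := hganti ⟨le_of_lt hS0, le_of_lt hSφ⟩
          ⟨by linarith [hθ.1], le_of_lt hθ.2⟩ hθ.1
        rw [hgS] at this; linarith
      have hs2 : 0 < Real.sin (θ - φ) ^ 2 := pow_two_pos_of_ne_zero (hsinne θ hθmem)
      exact div_neg_of_neg_of_pos (by simpa [hg_def] using hgneg) hs2
  -- value at S
  have hSne : Real.sin (S - φ) ≠ 0 := hsinne S ⟨le_of_lt hS0, hSφ⟩
  have hSval : S * Real.cot (S - φ) = Real.cos (S - φ) ^ 2 := by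
    have hSsc : S = Real.sin (S - φ) * Real.cos (S - φ) := by
      simp only [hg_def] at hgS; linarith
    rw [Real.cot_eq_cos_div_sin]
    field_simp
    linear_combination Real.cos (S - φ) * hSsc
  -- maximum
  have hmax : ∀ θ ∈ Set.Ico (0 : ℝ) φ, θ * Real.cot (θ - φ) ≤ Real.cos (S - φ) ^ 2 := by
    intro θ ⟨h0, h1⟩
    rw [← hSval]
    rcases lt_trichotomy θ S with h | rfl | h
    · exact le_of_lt (hmono ⟨h0, le_of_lt h⟩ ⟨le_of_lt hS0, le_refl S⟩ h)
    · exact le_refl _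
    · exact le_of_lt (hanti ⟨le_refl S, hSφ⟩ ⟨le_of_lt h, h1⟩ h)
  -- tendsto atBot
  have htends : Filter.Tendsto (fun θ : ℝ => θ * Real.cot (θ - φ))
      (nhdsWithin φ (Set.Ico 0 φ)) Filter.atBot := by
    rw [hfun]
    have heq : (fun θ : ℝ => θ * (Real.cos (θ - φ) / Real.sin (θ - φ))) =
        fun θ : ℝ => -((θ * Real.cos (θ - φ)) * (-Real.sin (θ - φ))⁻¹) := by
      funext θ; field_simp
    rw [heq]
    rw [← Filter.tendsto_neg_atTop_iff]
    simp only [neg_neg]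
    apply Filter.Tendsto.pos_mul_atTop hφ0
    · have h1 : Filter.Tendsto (fun θ : ℝ => θ * Real.cos (θ - φ))
          (nhds φ) (nhds (φ * Real.cos (φ - φ))) := by
        apply Filter.Tendsto.mul tendsto_id
        exact (Real.continuous_cos.comp (continuous_id.sub continuous_const)).tendsto φ
      simp only [sub_self, Real.cos_zero, mul_one] at h1
      exact h1.mono_left nhdsWithin_le_nhds
    · apply Filter.Tendsto.inv_tendsto_nhdsGT_zero
      rw [tendsto_nhdsWithin_iff]
      constructor
      · have h1 : Filter.Tendsto (fun θ : ℝ => -Real.sin (θ - φ)) (nhds φ)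
            (nhds (-Real.sin (φ - φ))) :=
          ((Real.continuous_sin.comp (continuous_id.sub continuous_const)).neg).tendsto φ
        simp only [sub_self, Real.sin_zero, neg_zero] at h1
        exact h1.mono_left nhdsWithin_le_nhds
      · filter_upwards [self_mem_nhdsWithin] with θ hθ
        exact Set.mem_Ioi.mpr (by linarith [hsinneg θ hθ])
  exact ⟨hmono, hanti, hSval, hmax, htends⟩
end

section
/- Let a ∈ ℝ and let w ∈ ℂ be non-real with Re(w) < a < |w|, and suppose φ := |Arg(w)| ∈ (0, π/2]. Then τ_c(a,w) > 1 if and only if a > 0 and there exists θ ∈ (0, φ) such that θ·cot(θ − φ) = −a and |w|² < a² + θ². -/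
/-!
Write `r = ‖w‖`, `s = √(r² - a²)` and `φ = |Arg w|`; then `τ_c > 1` reads `s + arccos (a / r) < φ`.
Since `φ ≤ π / 2`, this forces `arccos (a / r) < π / 2`, i.e. `a > 0`, and then
`arccos (a / r) = arctan (s / a)`. For `θ ∈ (0, φ)` the equation `θ cot (θ - φ) = -a` says
`g θ = φ` with `g t = t + arctan (t / a)` strictly increasing, and `r² < a² + θ²` says `s < θ`.
So both sides of the equivalence say `g s < φ`: the intermediate value theorem on `[s, φ]`
produces `θ`, and monotonicity of `g` gives the converse.
-/

open Real Set

lemma arccos_div_eq_arctan {a r : ℝ} (ha : 0 < a) (har : a < r) :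
    arccos (a / r) = arctan (√(r ^ 2 - a ^ 2) / a) := by
  have hr : 0 < r := ha.trans har
  rw [arccos_eq_arctan (div_pos ha hr)]
  congr 1
  have h : 1 - (a / r) ^ 2 = (r ^ 2 - a ^ 2) / r ^ 2 := by field_simp
  rw [h, sqrt_div' _ (sq_nonneg r), sqrt_sq hr.le]
  field_simp

lemma mul_cot_sub_eq_neg_iff {a θ φ : ℝ} (ha : a ≠ 0) (hθ : θ ≠ 0)
    (hφθ : φ - θ ∈ Ioo (-(π / 2)) (π / 2)) :
    θ * cot (θ - φ) = -a ↔ φ - θ = arctan (θ / a) := by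
  have harctan : φ - θ = arctan (θ / a) ↔ tan (φ - θ) = θ / a := by
    constructor
    · intro h; rw [h, tan_arctan]
    · intro h; rw [← h, arctan_tan hφθ.1 hφθ.2]
  rw [harctan, ← tan_inv_eq_cot, ← neg_sub, tan_neg, inv_neg, mul_neg, neg_inj,
    ← div_eq_mul_inv]
  by_cases ht : tan (φ - θ) = 0
  · simp [ht, ha, hθ, eq_comm (a := (0 : ℝ))]
  · rw [div_eq_iff ht, eq_div_iff ha, eq_comm, mul_comm a]

lemma strictMono_add_arctan_div {a : ℝ} (ha : 0 < a) :
    StrictMono fun t ↦ t + arctan (t / a) :=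
  strictMono_id.add (arctan_strictMono.comp fun _ _ h ↦ div_lt_div_of_pos_right h ha)

lemma exists_add_arctan_div_eq {a s φ : ℝ} (ha : 0 < a) (hs : 0 ≤ s)
    (h : s + arctan (s / a) < φ) : ∃ θ ∈ Ioo s φ, θ + arctan (θ / a) = φ := by
  have hs_le : s ≤ s + arctan (s / a) :=
    le_add_of_nonneg_right (arctan_nonneg.2 (div_nonneg hs ha.le))
  have hφ_lt : φ < φ + arctan (φ / a) :=
    lt_add_of_pos_right φ (arctan_pos.2 (div_pos (by linarith) ha))
  exact intermediate_value_Ioo (by linarith) (by fun_prop) ⟨h, hφ_lt⟩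

theorem critical_delay_gt_one_small_arg_general (a : ℝ) (w : ℂ)
    (h₁ : w.re < a) (h₂ : a < ‖w‖)
    (hφ : |w.arg| ∈ Set.Ioc 0 (Real.pi / 2)) :
    (|w.arg| - Real.arccos (a / ‖w‖)) /
        Real.sqrt (‖w‖ ^ 2 - a ^ 2) > 1 ↔
      (a > 0 ∧ ∃ θ ∈ Set.Ioo (0 : ℝ) |w.arg|,
        θ * Real.cot (θ - |w.arg|) = -a ∧ ‖w‖ ^ 2 < a ^ 2 + θ ^ 2) := by
  set φ := |w.arg|
  have hra : -‖w‖ < a := by linarith [neg_abs_le w.re, Complex.abs_re_le_norm w]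
  have hs : 0 < √(‖w‖ ^ 2 - a ^ 2) := sqrt_pos.2 (by nlinarith)
  have hφθ {θ : ℝ} (hθ0 : 0 < θ) (hθφ : θ < φ) : φ - θ ∈ Ioo (-(π / 2)) (π / 2) :=
    ⟨by linarith [pi_pos], by linarith [hφ.2]⟩
  rw [gt_iff_lt, one_lt_div hs, lt_sub_iff_add_lt]
  constructor
  · intro h
    have ha : 0 < a := (div_pos_iff_of_pos_right (show 0 < ‖w‖ by linarith)).1
      (arccos_lt_pi_div_two.1 (by linarith [hφ.2]))
    rw [arccos_div_eq_arctan ha h₂] at h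
    obtain ⟨θ, ⟨hsθ, hθφ⟩, hθ⟩ := exists_add_arctan_div_eq ha hs.le h
    have hθ0 : 0 < θ := hs.trans hsθ
    refine ⟨ha, θ, ⟨hθ0, hθφ⟩, ?_, ?_⟩
    · exact (mul_cot_sub_eq_neg_iff ha.ne' hθ0.ne' (hφθ hθ0 hθφ)).2 (by linarith)
    · linarith [(sqrt_lt' hθ0).1 hsθ]
  · rintro ⟨ha, θ, ⟨hθ0, hθφ⟩, hcot, hθ⟩
    rw [arccos_div_eq_arctan ha h₂]
    have hθa := (mul_cot_sub_eq_neg_iff ha.ne' hθ0.ne' (hφθ hθ0 hθφ)).1 hcot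
    have hsθ : √(‖w‖ ^ 2 - a ^ 2) < θ := (sqrt_lt' hθ0).2 (by linarith)
    linarith [strictMono_add_arctan_div ha hsθ]

/-- For real `a` and non-real `w` with `Re w < a < |w|` and `φ := |Arg w| ∈ (0, π/2]`,
the critical delay exceeds `1` iff `a > 0` and there is `θ ∈ (0, φ)` with
`θ cot(θ − φ) = −a` and `|w|² < a² + θ²`. -/
theorem critical_delay_gt_one_small_arg (a : ℝ) (w : ℂ) (hw : w.im ≠ 0)
    (h₁ : w.re < a) (h₂ : a < ‖w‖)
    (hφ : |w.arg| ∈ Set.Ioc 0 (Real.pi / 2)) :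
    (|w.arg| - Real.arccos (a / ‖w‖)) /
        Real.sqrt (‖w‖ ^ 2 - a ^ 2) > 1 ↔
      (a > 0 ∧ ∃ θ ∈ Set.Ioo (0 : ℝ) |w.arg|,
        θ * Real.cot (θ - |w.arg|) = -a ∧ ‖w‖ ^ 2 < a ^ 2 + θ ^ 2) :=
  critical_delay_gt_one_small_arg_general a w h₁ h₂ hφ
end

section
/- Let a ∈ ℝ and let w ∈ ℂ be non-real with Re(w) < a < |w|, suppose φ := |Arg(w)| ∈ (π/2, π), and let S ∈ (0, φ) satisfy sin(2S − 2φ) = 2S. Then τ_c(a,w) > 1 if and only if one of the following holds: (i) a ≥ 0 and there exists θ ∈ (S, φ) such that θ·cot(θ − φ) = −a and |w|² < a² + θ²; (ii) −cos²(S − φ) < a < 0 and there exist θ₁ ∈ (0, S) and θ₂ ∈ (S, φ) such that θ₁·cot(θ₁ − φ) = −a, θ₂·cot(θ₂ − φ) = −a, and a² + θ₁² < |w|² < a² + θ₂². -/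
/-!
Put `r = ‖w‖`, `φ = |arg w|`, `t = √(r² - a²)` and `β = arccos (a / r)`. Then `cot β = a / t`, so
since `cot` is decreasing on `(0, π)`, `τ_c > 1`, i.e. `β < φ - t`, means `t < φ` and
`-a < g t` for `g θ = θ cot (θ - φ)`. The derivative of `g` has the sign of
`sin (2θ - 2φ) - 2θ`, which decreases and vanishes at `S`; so `g` climbs from `g 0 = 0` to its
maximum `g S = cos² (S - φ)` and then drops to `-∞` as `θ → φ⁻`. The intermediate value theorem
turns `-a < g t` into the position of `t` relative to the roots of `g = -a`: one root beyond `S`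
when `a ≥ 0`, and one on each side of `S` when `-g S < a < 0`.
-/

open Real Set Filter Topology

namespace Real

lemma cot_neg (x : ℝ) : cot (-x) = -cot x := by
  simp [cot_eq_cos_div_sin, div_neg]

lemma strictAntiOn_cot : StrictAntiOn cot (Ioo 0 π) := by
  intro x ⟨hx₀, hxπ⟩ y ⟨hy₀, hyπ⟩ hxy
  have hsyx : 0 < sin (y - x) := sin_pos_of_pos_of_lt_pi (by linarith) (by linarith)
  rw [sin_sub] at hsyx
  rw [cot_eq_cos_div_sin, cot_eq_cos_div_sin,
    div_lt_div_iff₀ (sin_pos_of_pos_of_lt_pi hy₀ hyπ) (sin_pos_of_pos_of_lt_pi hx₀ hxπ)]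
  linarith

lemma lt_iff_cot_lt {β x : ℝ} (hβ : β ∈ Ioo 0 π) (hx : x < π) :
    β < x ↔ 0 < x ∧ cot x < cot β := by
  by_cases h : 0 < x
  · simp only [h, true_and]
    exact (strictAntiOn_cot.lt_iff_gt ⟨h, hx⟩ hβ).symm
  · exact iff_of_false (fun hβx => h (hβ.1.trans hβx)) (fun h' => h h'.1)

lemma cot_arccos_div {a r : ℝ} (har : |a| < r) :
    cot (arccos (a / r)) = a / √(r ^ 2 - a ^ 2) := by
  have hr : 0 < r := (abs_nonneg a).trans_lt har
  have h1 : -1 ≤ a / r := by rw [le_div_iff₀ hr]; linarith [neg_abs_le a]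
  have h2 : a / r ≤ 1 := by rw [div_le_iff₀ hr]; linarith [le_abs_self a]
  have hsin : sin (arccos (a / r)) = √(r ^ 2 - a ^ 2) / r := by
    rw [sin_arccos, div_pow, one_sub_div (by positivity), sqrt_div' _ (by positivity), sqrt_sq hr.le]
  rw [cot_eq_cos_div_sin, cos_arccos h1 h2, hsin, div_div_div_cancel_right₀ hr.ne']

lemma hasDerivAt_cot {x : ℝ} (hx : sin x ≠ 0) : HasDerivAt cot (-1 / sin x ^ 2) x := by
  have h := (hasDerivAt_cos x).div (hasDerivAt_sin x) hx
  rw [show cos / sin = cot from funext fun x => (cot_eq_cos_div_sin x).symm] at h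
  refine h.congr_deriv (congrArg (· / sin x ^ 2) ?_)
  linear_combination -sin_sq_add_cos_sq x

lemma tendsto_cot_nhdsLT_zero : Tendsto cot (𝓝[<] 0) atBot := by
  have hsin : Tendsto sin (𝓝[<] 0) (𝓝[<] 0) := by
    refine tendsto_nhdsWithin_iff.2 ⟨?_, ?_⟩
    · simpa using continuous_sin.continuousWithinAt.tendsto (x := 0) (s := Iio 0)
    · filter_upwards [Ioo_mem_nhdsLT (neg_lt_zero.2 pi_pos)] with x hx
      exact sin_neg_of_neg_of_neg_pi_lt hx.2 hx.1
  have hcos : Tendsto cos (𝓝[<] 0) (𝓝 1) := by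
    simpa using continuous_cos.continuousWithinAt.tendsto (x := 0) (s := Iio 0)
  have h := hcos.pos_mul_atBot one_pos (tendsto_inv_nhdsLT_zero.comp hsin)
  convert h using 1
  ext x
  simp [cot_eq_cos_div_sin, div_eq_mul_inv]

lemma strictAntiOn_sin_sub_self : StrictAntiOn (fun x => sin x - x) (Icc (-(2 * π)) 0) := by
  refine strictAntiOn_of_deriv_neg (convex_Icc _ _) (by fun_prop) fun x hx => ?_
  rw [interior_Icc] at hx
  have hcos : cos x ≠ 1 := fun h =>
    hx.2.ne ((cos_eq_one_iff_of_lt_of_lt hx.1 (by linarith [hx.2, pi_pos])).1 h)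
  have hd : HasDerivAt (fun x => sin x - x) (cos x - 1) x :=
    (hasDerivAt_sin x).sub (hasDerivAt_id' x)
  rw [hd.deriv]
  exact sub_neg.2 ((cos_le_one x).lt_of_ne hcos)

end Real

theorem one_lt_critical_delay_iff {a r φ : ℝ} (har : |a| < r) (hφ : φ ≤ π) :
    1 < (φ - arccos (a / r)) / √(r ^ 2 - a ^ 2) ↔
      √(r ^ 2 - a ^ 2) < φ ∧ -a < √(r ^ 2 - a ^ 2) * cot (√(r ^ 2 - a ^ 2) - φ) := by
  obtain ⟨har₁, har₂⟩ := abs_lt.1 har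
  have hr : 0 < r := by linarith
  set t := √(r ^ 2 - a ^ 2)
  have ht : 0 < t := sqrt_pos.2 (sub_pos.2 (sq_lt_sq' har₁ har₂))
  have hβ : arccos (a / r) ∈ Ioo 0 π :=
    ⟨arccos_pos.2 ((div_lt_one hr).2 har₂), arccos_lt_pi.2 ((lt_div_iff₀ hr).2 (by linarith))⟩
  rw [one_lt_div ht, lt_sub_comm, lt_iff_cot_lt hβ (by linarith), cot_arccos_div har, sub_pos,
    lt_div_iff₀' ht, show t - φ = -(φ - t) by ring, cot_neg, mul_neg, neg_lt_neg_iff]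

structure IsUnimodal (g : ℝ → ℝ) (S φ : ℝ) : Prop where
  peak_mem : S ∈ Ioo 0 φ
  continuousOn : ContinuousOn g (Ico 0 φ)
  map_zero : g 0 = 0
  strictMonoOn : StrictMonoOn g (Icc 0 S)
  strictAntiOn : StrictAntiOn g (Ico S φ)
  tendsto_atBot : Tendsto g (𝓝[<] φ) atBot

namespace IsUnimodal

variable {g : ℝ → ℝ} {S φ c p t : ℝ}

lemma le_peak (hg : IsUnimodal g S φ) (ht : t ∈ Ico 0 φ) : g t ≤ g S := by
  rcases le_or_gt t S with h | h
  · exact hg.strictMonoOn.monotoneOn ⟨ht.1, h⟩ ⟨ht.1.trans h, le_rfl⟩ h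
  · exact hg.strictAntiOn.antitoneOn ⟨le_rfl, hg.peak_mem.2⟩ ⟨h.le, ht.2⟩ h.le

lemma pos_of_mem_Ioc (hg : IsUnimodal g S φ) (ht : t ∈ Ioc 0 S) : 0 < g t :=
  hg.map_zero ▸ hg.strictMonoOn ⟨le_rfl, ht.1.le.trans ht.2⟩ ⟨ht.1.le, ht.2⟩ ht.1

lemma exists_eq_of_peak_le (hg : IsUnimodal g S φ) (hSp : S ≤ p) (hp : p < φ) (hc : c < g p) :
    ∃ θ ∈ Ioo p φ, g θ = c := by
  obtain ⟨q, hgq, hq⟩ :=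
    ((hg.tendsto_atBot.eventually (eventually_lt_atBot c)).and (Ioo_mem_nhdsLT hp)).exists
  obtain ⟨θ, hθ, hgθ⟩ := intermediate_value_Ioo' hq.1.le
    (hg.continuousOn.mono (Icc_subset_Ico (hg.peak_mem.1.le.trans hSp) hq.2)) ⟨hgq, hc⟩
  exact ⟨θ, ⟨hθ.1, hθ.2.trans hq.2⟩, hgθ⟩

lemma exists_eq_of_le_peak (hg : IsUnimodal g S φ) (hp : p ∈ Icc 0 S) (hc₀ : 0 < c)
    (hc : c < g p) : ∃ θ ∈ Ioo 0 p, g θ = c :=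
  intermediate_value_Ioo hp.1
    (hg.continuousOn.mono (Icc_subset_Ico_right (hp.2.trans_lt hg.peak_mem.2)))
    ⟨by rwa [hg.map_zero], hc⟩

theorem lt_apply_iff (hg : IsUnimodal g S φ) (ht : 0 < t) :
    (t < φ ∧ c < g t) ↔
      (c ≤ 0 ∧ ∃ θ ∈ Ioo S φ, g θ = c ∧ t < θ) ∨
      (c < g S ∧ 0 < c ∧ ∃ θ₁ ∈ Ioo 0 S, ∃ θ₂ ∈ Ioo S φ,
        g θ₁ = c ∧ g θ₂ = c ∧ θ₁ < t ∧ t < θ₂) := by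
  obtain ⟨hS₀, hSφ⟩ := hg.peak_mem
  constructor
  · rintro ⟨htφ, hct⟩
    have hcS : c < g S := hct.trans_le (hg.le_peak ⟨ht.le, htφ⟩)
    have hc_max : c < g (max t S) := by rcases max_choice t S with h | h <;> rwa [h]
    obtain ⟨θ₂, ⟨hθ₂, hθ₂φ⟩, hgθ₂⟩ :=
      hg.exists_eq_of_peak_le (le_max_right t S) (max_lt htφ hSφ) hc_max
    have hSθ₂ : S < θ₂ := (le_max_right _ _).trans_lt hθ₂
    have htθ₂ : t < θ₂ := (le_max_left _ _).trans_lt hθ₂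
    rcases le_or_gt c 0 with hc₀ | hc₀
    · exact Or.inl ⟨hc₀, θ₂, ⟨hSθ₂, hθ₂φ⟩, hgθ₂, htθ₂⟩
    · have hc_min : c < g (min t S) := by rcases min_choice t S with h | h <;> rwa [h]
      obtain ⟨θ₁, ⟨hθ₁₀, hθ₁⟩, hgθ₁⟩ :=
        hg.exists_eq_of_le_peak ⟨le_min ht.le hS₀.le, min_le_right t S⟩ hc₀ hc_min
      exact Or.inr ⟨hcS, hc₀, θ₁, ⟨hθ₁₀, hθ₁.trans_le (min_le_right _ _)⟩, θ₂, ⟨hSθ₂, hθ₂φ⟩,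
        hgθ₁, hgθ₂, hθ₁.trans_le (min_le_left _ _), htθ₂⟩
  · rintro (⟨hc₀, θ, hθ, rfl, htθ⟩ | ⟨-, -, θ₁, hθ₁, θ₂, hθ₂, rfl, hgθ₂, hθ₁t, htθ₂⟩)
    · refine ⟨htθ.trans hθ.2, ?_⟩
      rcases le_or_gt t S with h | h
      · exact hc₀.trans_lt (hg.pos_of_mem_Ioc ⟨ht, h⟩)
      · exact hg.strictAntiOn ⟨h.le, htθ.trans hθ.2⟩ ⟨hθ.1.le, hθ.2⟩ htθ
    · refine ⟨htθ₂.trans hθ₂.2, ?_⟩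
      rcases le_or_gt t S with h | h
      · exact hg.strictMonoOn ⟨hθ₁.1.le, hθ₁.2.le⟩ ⟨ht.le, h⟩ hθ₁t
      · exact hgθ₂ ▸ hg.strictAntiOn ⟨h.le, htθ₂.trans hθ₂.2⟩ ⟨hθ₂.1.le, hθ₂.2⟩ htθ₂

end IsUnimodal

lemma hasDerivAt_mul_cot_sub {φ θ : ℝ} (h : sin (θ - φ) ≠ 0) :
    HasDerivAt (fun θ => θ * cot (θ - φ))
      ((sin (2 * θ - 2 * φ) - 2 * θ) / (2 * sin (θ - φ) ^ 2)) θ := by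
  have hcot : HasDerivAt (fun θ => cot (θ - φ)) (-1 / sin (θ - φ) ^ 2) θ :=
    (hasDerivAt_cot h).comp_sub_const θ φ
  refine ((hasDerivAt_id' θ).mul hcot).congr_deriv ?_
  rw [show 2 * θ - 2 * φ = 2 * (θ - φ) by ring, sin_two_mul, cot_eq_cos_div_sin]
  field_simp
  ring

lemma strictAntiOn_sin_two_mul_sub_sub {φ : ℝ} (hφ : φ ≤ π) :
    StrictAntiOn (fun θ => sin (2 * θ - 2 * φ) - 2 * θ) (Icc 0 φ) := by
  intro x hx y hy hxy
  have := strictAntiOn_sin_sub_self (a := 2 * x - 2 * φ) (b := 2 * y - 2 * φ)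
    ⟨by linarith [hx.1], by linarith [hx.2]⟩ ⟨by linarith [hy.1], by linarith [hy.2]⟩
    (by linarith)
  simp only at this ⊢
  linarith

lemma mul_cot_sub_of_sin_eq {S φ : ℝ} (hSeq : sin (2 * S - 2 * φ) = 2 * S) (hS : S ≠ 0) :
    S * cot (S - φ) = cos (S - φ) ^ 2 := by
  rw [show 2 * S - 2 * φ = 2 * (S - φ) by ring, sin_two_mul] at hSeq
  have h : sin (S - φ) ≠ 0 := fun h => hS (by rw [h] at hSeq; linarith)
  rw [cot_eq_cos_div_sin]
  field_simp
  linear_combination (-cos (S - φ) / 2) * hSeq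

theorem isUnimodal_mul_cot_sub {S φ : ℝ} (hφ : φ < π) (hS : S ∈ Ioo 0 φ)
    (hSeq : sin (2 * S - 2 * φ) = 2 * S) :
    IsUnimodal (fun θ => θ * cot (θ - φ)) S φ := by
  obtain ⟨hS₀, hSφ⟩ := hS
  have hsin : ∀ θ ∈ Ico 0 φ, sin (θ - φ) < 0 := fun θ hθ =>
    sin_neg_of_neg_of_neg_pi_lt (by linarith [hθ.2]) (by linarith [hθ.1])
  have hderiv θ (hθ : θ ∈ Ico 0 φ) := hasDerivAt_mul_cot_sub (hsin θ hθ).ne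
  have hcont : ContinuousOn (fun θ => θ * cot (θ - φ)) (Ico 0 φ) := fun θ hθ =>
    (hderiv θ hθ).continuousAt.continuousWithinAt
  have hpeak : sin (2 * S - 2 * φ) - 2 * S = 0 := by rw [hSeq, sub_self]
  have hanti := strictAntiOn_sin_two_mul_sub_sub hφ.le
  refine ⟨⟨hS₀, hSφ⟩, hcont, zero_mul _, ?_, ?_, ?_⟩
  · refine strictMonoOn_of_deriv_pos (convex_Icc 0 S) (hcont.mono (Icc_subset_Ico_right hSφ))
      fun θ hθ => ?_
    rw [interior_Icc] at hθ
    have hθ' : θ ∈ Ico 0 φ := ⟨hθ.1.le, hθ.2.trans hSφ⟩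
    rw [(hderiv θ hθ').deriv]
    have hnum : 0 < sin (2 * θ - 2 * φ) - 2 * θ :=
      hpeak ▸ hanti ⟨hθ.1.le, hθ'.2.le⟩ ⟨hS₀.le, hSφ.le⟩ hθ.2
    exact div_pos hnum (mul_pos two_pos (sq_pos_of_neg (hsin θ hθ')))
  · refine strictAntiOn_of_deriv_neg (convex_Ico S φ)
      (hcont.mono (Ico_subset_Ico_left hS₀.le)) fun θ hθ => ?_
    rw [interior_Ico] at hθ
    have hθ' : θ ∈ Ico 0 φ := ⟨(hS₀.trans hθ.1).le, hθ.2⟩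
    rw [(hderiv θ hθ').deriv]
    have hnum : sin (2 * θ - 2 * φ) - 2 * θ < 0 :=
      hpeak ▸ hanti ⟨hS₀.le, hSφ.le⟩ ⟨hθ'.1, hθ.2.le⟩ hθ.1
    exact div_neg_of_neg_of_pos hnum (mul_pos two_pos (sq_pos_of_neg (hsin θ hθ')))
  · have hshift : Tendsto (fun θ => θ - φ) (𝓝[<] φ) (𝓝[<] 0) := by
      refine tendsto_nhdsWithin_iff.2 ⟨?_, ?_⟩
      · simpa using ((continuous_sub_right φ).tendsto φ).mono_left nhdsWithin_le_nhds
      · filter_upwards [self_mem_nhdsWithin] with θ (hθ : θ < φ) using sub_neg.2 hθ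
    exact (tendsto_nhdsWithin_of_tendsto_nhds tendsto_id).pos_mul_atBot (hS₀.trans hSφ)
      (tendsto_cot_nhdsLT_zero.comp hshift)

theorem critical_delay_gt_one_large_arg_general (a : ℝ) (w : ℂ)
    (h₁ : w.re < a) (h₂ : a < ‖w‖)
    (hφ : |w.arg| ∈ Set.Ioo (Real.pi / 2) Real.pi)
    (S : ℝ) (hS : S ∈ Set.Ioo 0 |w.arg|)
    (hSeq : Real.sin (2 * S - 2 * |w.arg|) = 2 * S) :
    (|w.arg| - Real.arccos (a / ‖w‖)) /
        Real.sqrt ((‖w‖) ^ 2 - a ^ 2) > 1 ↔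
      ((a ≥ 0 ∧ ∃ θ ∈ Set.Ioo S |w.arg|,
          θ * Real.cot (θ - |w.arg|) = -a ∧ (‖w‖) ^ 2 < a ^ 2 + θ ^ 2) ∨
        (-Real.cos (S - |w.arg|) ^ 2 < a ∧ a < 0 ∧
          ∃ θ₁ ∈ Set.Ioo (0 : ℝ) S, ∃ θ₂ ∈ Set.Ioo S |w.arg|,
            θ₁ * Real.cot (θ₁ - |w.arg|) = -a ∧
            θ₂ * Real.cot (θ₂ - |w.arg|) = -a ∧
            a ^ 2 + θ₁ ^ 2 < (‖w‖) ^ 2 ∧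
            (‖w‖) ^ 2 < a ^ 2 + θ₂ ^ 2)) := by
  have har : |a| < ‖w‖ :=
    abs_lt.2 ⟨(neg_le_of_abs_le (Complex.abs_re_le_norm w)).trans_lt h₁, h₂⟩
  have hg := isUnimodal_mul_cot_sub hφ.2 hS hSeq
  set r := ‖w‖
  set φ := |w.arg|
  have ht : 0 < √(r ^ 2 - a ^ 2) := sqrt_pos.2 (sub_pos.2 (sq_lt_sq' (abs_lt.1 har).1 h₂))
  have hsqrt_lt {θ : ℝ} (hθ : 0 < θ) : √(r ^ 2 - a ^ 2) < θ ↔ r ^ 2 < a ^ 2 + θ ^ 2 := by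
    rw [sqrt_lt' hθ, sub_lt_iff_lt_add']
  have hlt_sqrt {θ : ℝ} (hθ : 0 < θ) : θ < √(r ^ 2 - a ^ 2) ↔ a ^ 2 + θ ^ 2 < r ^ 2 := by
    rw [lt_sqrt hθ.le, lt_sub_iff_add_lt']
  rw [gt_iff_lt, one_lt_critical_delay_iff har hφ.2.le]
  refine (hg.lt_apply_iff ht).trans (or_congr ?_ ?_)
  · exact and_congr neg_nonpos (exists_congr fun θ => and_congr_right fun hθ =>
      and_congr_right' (hsqrt_lt (hS.1.trans hθ.1)))
  · refine and_congr ?_ (and_congr neg_pos (exists_congr fun θ₁ => and_congr_right fun hθ₁ =>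
      exists_congr fun θ₂ => and_congr_right fun hθ₂ => and_congr_right' (and_congr_right'
        (and_congr (hlt_sqrt hθ₁.1) (hsqrt_lt (hS.1.trans hθ₂.1))))))
    rw [mul_cot_sub_of_sin_eq hSeq hS.1.ne', neg_lt]

/-- For real `a` and non-real `w` with `Re w < a < |w|`, `φ := |Arg w| ∈ (π/2, π)`, and
`S ∈ (0, φ)` with `sin(2S − 2φ) = 2S`, the critical delay exceeds `1` iff either
(i) `a ≥ 0` and there is `θ ∈ (S, φ)` with `θ cot(θ − φ) = −a` and `|w|² < a² + θ²`, or
(ii) `−cos²(S − φ) < a < 0` and there are `θ₁ ∈ (0, S)`, `θ₂ ∈ (S, φ)` with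
`θ₁ cot(θ₁ − φ) = −a`, `θ₂ cot(θ₂ − φ) = −a`, and `a² + θ₁² < |w|² < a² + θ₂²`. -/
theorem critical_delay_gt_one_large_arg (a : ℝ) (w : ℂ) (hw : w.im ≠ 0)
    (h₁ : w.re < a) (h₂ : a < ‖w‖)
    (hφ : |w.arg| ∈ Set.Ioo (Real.pi / 2) Real.pi)
    (S : ℝ) (hS : S ∈ Set.Ioo 0 |w.arg|)
    (hSeq : Real.sin (2 * S - 2 * |w.arg|) = 2 * S) :
    (|w.arg| - Real.arccos (a / ‖w‖)) /
        Real.sqrt ((‖w‖) ^ 2 - a ^ 2) > 1 ↔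
      ((a ≥ 0 ∧ ∃ θ ∈ Set.Ioo S |w.arg|,
          θ * Real.cot (θ - |w.arg|) = -a ∧ (‖w‖) ^ 2 < a ^ 2 + θ ^ 2) ∨
        (-Real.cos (S - |w.arg|) ^ 2 < a ∧ a < 0 ∧
          ∃ θ₁ ∈ Set.Ioo (0 : ℝ) S, ∃ θ₂ ∈ Set.Ioo S |w.arg|,
            θ₁ * Real.cot (θ₁ - |w.arg|) = -a ∧
            θ₂ * Real.cot (θ₂ - |w.arg|) = -a ∧
            a ^ 2 + θ₁ ^ 2 < (‖w‖) ^ 2 ∧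
            (‖w‖) ^ 2 < a ^ 2 + θ₂ ^ 2)) :=
  critical_delay_gt_one_large_arg_general a w h₁ h₂ hφ S hS hSeq
end

section
/- Let ζ ∈ ℂ and σ ∈ ℝ. Then every z ∈ ℂ with z·exp(z) = ζ satisfies Re(z) < σ if and only if one of the following holds: (i) σ·e^σ > |ζ|; (ii) −|ζ| < σ·e^σ ≤ |ζ| and |Arg(ζ)| > arccos(σ·e^σ/|ζ|) + √(|ζ|²·e^{−2σ} − σ²). -/
/-!
For `z = x + iy` with `z eᶻ = ζ` and `r = ‖ζ‖` we have `‖z‖ = r e⁻ˣ`, hence `|x eˣ| ≤ r`,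
`|y| = √(r² e⁻²ˣ - x²)`, `|arg z| = arccos (x eˣ / r)` and `arg ζ ≡ arg z + y (mod 2π)`.
So every solution with real part `x` has `|arg ζ| ≤ g x := arccos (x eˣ / r) + √(r² e⁻²ˣ - x²)`,
and conversely `g x = |arg ζ|` produces a solution with real part `x`. The function `g` is
continuous and antitone on all of `ℝ`: its derivative is `-(1 + 2x + r² e⁻²ˣ) / √(r² e⁻²ˣ - x²) < 0`
where `|x eˣ| < r`, and it is locally constant (`0` or `π`) elsewhere. Hence a solution with
`σ ≤ Re z` exists iff `σ e^σ ≤ r` and `|arg ζ| ≤ g σ` (intermediate value theorem on `[σ, c]`,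
where `c eᶜ = r` and `g c = 0`), which is the negation of the right-hand side.
-/

open Real Set Filter Topology

theorem antitone_of_continuous_of_eventually_deriv_nonpos {f : ℝ → ℝ} (hf : Continuous f)
    (hf' : ∀ x, ∀ᶠ y in 𝓝[>] x, DifferentiableAt ℝ f y ∧ deriv f y ≤ 0) : Antitone f := by
  have local_anti : ∀ x, ∀ᶠ y in 𝓝[>] x, f y ≤ f x := by
    intro x
    obtain ⟨q, hxq, hq⟩ := mem_nhdsGT_iff_exists_Ioo_subset.1 (hf' x)
    filter_upwards [Ioo_mem_nhdsGT hxq] with y hy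
    have hgood : ∀ t ∈ interior (Icc x y), DifferentiableAt ℝ f t ∧ deriv f t ≤ 0 := by
      rw [interior_Icc]
      exact fun t ht ↦ hq ⟨ht.1, ht.2.trans hy.2⟩
    exact antitoneOn_of_deriv_nonpos (convex_Icc x y) hf.continuousOn
      (fun t ht ↦ (hgood t ht).1.differentiableWithinAt) (fun t ht ↦ (hgood t ht).2)
      (left_mem_Icc.2 hy.1.le) (right_mem_Icc.2 hy.1.le) hy.1.le
  intro a b hab
  have hsub : Icc a b ⊆ {y | f y ≤ f a} :=
    IsClosed.Icc_subset_of_forall_mem_nhdsWithin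
      ((isClosed_le hf continuous_const).inter isClosed_Icc) (le_refl (f a))
      fun x hx ↦ (local_anti x).mono fun y hy ↦ hy.trans hx.1
  exact hsub ⟨hab, le_rfl⟩

namespace Real

theorem eventually_mul_exp_ne (x v : ℝ) : ∀ᶠ y in 𝓝[≠] x, y * exp y ≠ v := by
  have han : AnalyticOnNhd ℝ (fun y ↦ y * exp y - v) univ :=
    (analyticOnNhd_id.mul analyticOnNhd_rexp).sub analyticOnNhd_const
  rcases (han x (mem_univ x)).eventually_eq_zero_or_eventually_ne_zero with h | h
  · have hzero := han.eqOn_of_preconnected_of_eventuallyEq analyticOnNhd_const isPreconnected_univ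
      (mem_univ x) h
    have h0 := hzero (mem_univ 0)
    have h1 := hzero (mem_univ 1)
    simp only [zero_mul, one_mul] at h0 h1
    linarith [exp_pos 1]
  · exact h.mono fun y hy ↦ sub_ne_zero.1 hy

theorem exp_neg_two_mul (t : ℝ) : exp (-2 * t) = (exp t ^ 2)⁻¹ := by
  rw [← exp_nat_mul, ← exp_neg]; ring_nf

theorem sq_mul_exp_neg_two_mul_sub_sq (r t : ℝ) :
    r ^ 2 * exp (-2 * t) - t ^ 2 = exp (-2 * t) * (r ^ 2 - (t * exp t) ^ 2) := by
  rw [exp_neg_two_mul]; field_simp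

theorem sq_mul_exp_neg_two_mul_sub_sq_nonneg_iff {r t : ℝ} (hr : 0 ≤ r) :
    0 ≤ r ^ 2 * exp (-2 * t) - t ^ 2 ↔ |t * exp t| ≤ r := by
  rw [sq_mul_exp_neg_two_mul_sub_sq, mul_nonneg_iff_of_pos_left (exp_pos _), sub_nonneg,
    sq_le_sq, abs_of_nonneg hr]

theorem sq_mul_exp_neg_two_mul_sub_sq_pos_iff {r t : ℝ} (hr : 0 ≤ r) :
    0 < r ^ 2 * exp (-2 * t) - t ^ 2 ↔ |t * exp t| < r := by
  rw [sq_mul_exp_neg_two_mul_sub_sq, mul_pos_iff_of_pos_left (exp_pos _), sub_pos,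
    sq_lt_sq, abs_of_nonneg hr]

end Real

/-- Off `|t eᵗ| ≤ r` the junk values of `arccos` and `√` make this `0` (for `r < t eᵗ`) or `π`
(for `t eᵗ < -r`), which keeps it continuous and antitone on all of `ℝ`. -/
noncomputable def lambertArgBound (r t : ℝ) : ℝ :=
  arccos (t * exp t / r) + √(r ^ 2 * exp (-2 * t) - t ^ 2)

theorem continuous_lambertArgBound (r : ℝ) : Continuous (lambertArgBound r) := by
  unfold lambertArgBound
  fun_prop

theorem lambertArgBound_eq_zero_of_le {r t : ℝ} (hr : 0 < r) (h : r ≤ t * exp t) :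
    lambertArgBound r t = 0 := by
  have hrad : r ^ 2 * exp (-2 * t) - t ^ 2 ≤ 0 := by
    rw [← not_lt, sq_mul_exp_neg_two_mul_sub_sq_pos_iff hr.le, not_lt]
    exact h.trans (le_abs_self _)
  rw [lambertArgBound, arccos_eq_zero.2 ((one_le_div hr).2 h), sqrt_eq_zero'.2 hrad, add_zero]

theorem lambertArgBound_eq_pi_of_le {r t : ℝ} (hr : 0 < r) (h : t * exp t ≤ -r) :
    lambertArgBound r t = π := by
  have hrad : r ^ 2 * exp (-2 * t) - t ^ 2 ≤ 0 := by
    rw [← not_lt, sq_mul_exp_neg_two_mul_sub_sq_pos_iff hr.le, not_lt]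
    exact (le_neg.1 h).trans (neg_le_abs _)
  rw [lambertArgBound, arccos_eq_pi.2 ((div_le_iff₀ hr).2 (by linarith)), sqrt_eq_zero'.2 hrad,
    add_zero]

theorem hasDerivAt_lambertArgBound {r t : ℝ} (hr : 0 < r) (h : |t * exp t| < r) :
    HasDerivAt (lambertArgBound r)
      (-(1 + 2 * t + r ^ 2 * exp (-2 * t)) / √(r ^ 2 * exp (-2 * t) - t ^ 2)) t := by
  set V := r ^ 2 * exp (-2 * t) - t ^ 2 with hV
  have hVpos : 0 < V := (sq_mul_exp_neg_two_mul_sub_sq_pos_iff hr.le).2 h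
  have hu := ((hasDerivAt_id' t).mul (hasDerivAt_exp t)).div_const r
  have hu1 : |t * exp t / r| < 1 := by rwa [abs_div, abs_of_pos hr, div_lt_one hr]
  have harccos := (hasDerivAt_arccos (abs_lt.1 hu1).1.ne' (abs_lt.1 hu1).2.ne).comp t hu
  have hV' := ((((hasDerivAt_id' t).const_mul (-2)).exp).const_mul (r ^ 2)).sub (hasDerivAt_pow 2 t)
  have hsqrt : √(1 - (t * exp t / r) ^ 2) = exp t / r * √V := by
    rw [← sqrt_sq (by positivity : 0 ≤ exp t / r), ← sqrt_mul (sq_nonneg _), hV, exp_neg_two_mul]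
    congr 1
    field_simp
  refine (harccos.add ((hasDerivAt_sqrt hVpos.ne').comp t hV')).congr_deriv ?_
  rw [hsqrt]
  field_simp
  ring

theorem lambertArgBound_deriv_nonpos {r t : ℝ} (hr : 0 < r) (hne : t * exp t ≠ r)
    (hne' : t * exp t ≠ -r) :
    DifferentiableAt ℝ (lambertArgBound r) t ∧ deriv (lambertArgBound r) t ≤ 0 := by
  have hcont : Continuous fun t ↦ t * exp t := by fun_prop
  rcases lt_or_gt_of_ne hne with hlt | hgt
  · rcases lt_or_gt_of_ne hne' with hlt' | hgt'
    · have hconst : lambertArgBound r =ᶠ[𝓝 t] fun _ ↦ π :=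
        ((hcont.tendsto t).eventually (gt_mem_nhds hlt')).mono
          fun y hy ↦ lambertArgBound_eq_pi_of_le hr hy.le
      have hd := (hasDerivAt_const t π).congr_of_eventuallyEq hconst
      exact ⟨hd.differentiableAt, hd.deriv.le⟩
    · have hd := hasDerivAt_lambertArgBound hr (abs_lt.2 ⟨hgt', hlt⟩)
      refine ⟨hd.differentiableAt, hd.deriv ▸ div_nonpos_of_nonpos_of_nonneg ?_ (sqrt_nonneg _)⟩
      have hsq : t ^ 2 < r ^ 2 * exp (-2 * t) := by
        linarith [(sq_mul_exp_neg_two_mul_sub_sq_pos_iff hr.le).2 (abs_lt.2 ⟨hgt', hlt⟩)]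
      nlinarith [sq_nonneg (1 + t)]
  · have hconst : lambertArgBound r =ᶠ[𝓝 t] fun _ ↦ 0 :=
      ((hcont.tendsto t).eventually (lt_mem_nhds hgt)).mono
        fun y hy ↦ lambertArgBound_eq_zero_of_le hr hy.le
    have hd := (hasDerivAt_const t (0 : ℝ)).congr_of_eventuallyEq hconst
    exact ⟨hd.differentiableAt, hd.deriv.le⟩

theorem antitone_lambertArgBound {r : ℝ} (hr : 0 < r) : Antitone (lambertArgBound r) := by
  refine antitone_of_continuous_of_eventually_deriv_nonpos (continuous_lambertArgBound r) fun x ↦ ?_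
  have hGT : 𝓝[>] x ≤ 𝓝[≠] x := nhdsWithin_mono x fun y hy ↦ ne_of_gt hy
  filter_upwards [hGT (eventually_mul_exp_ne x r), hGT (eventually_mul_exp_ne x (-r))] with y h h'
  exact lambertArgBound_deriv_nonpos hr h h'

theorem Real.Angle.abs_toReal_coe_le_abs (θ : ℝ) : |(θ : Real.Angle).toReal| ≤ |θ| := by
  by_cases h : θ ∈ Ioc (-π) π
  · rw [Real.Angle.toReal_coe_eq_self_iff_mem_Ioc.2 h]
  · refine (Real.Angle.abs_toReal_le_pi _).trans (le_abs'.2 ?_)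
    simp only [mem_Ioc, not_and_or, not_lt, not_le] at h
    exact h.imp id le_of_lt

namespace Complex

open ComplexConjugate

theorem arg_mul_exp_coe_angle {z : ℂ} (hz : z ≠ 0) :
    (arg (z * exp z) : Real.Angle) = ↑(arg z + z.im) := by
  rw [arg_mul_coe_angle hz (exp_ne_zero z), arg_exp, ← Real.Angle.toReal_coe,
    Real.Angle.coe_toReal, Real.Angle.coe_add]

theorem abs_arg_eq_arccos {z : ℂ} (hz : z ≠ 0) : |arg z| = arccos (z.re / ‖z‖) := by
  rw [← cos_arg hz, ← Real.cos_abs, arccos_cos (abs_nonneg _) (abs_arg_le_pi z)]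

theorem re_lt_of_norm_mul_exp_lt {z : ℂ} {σ : ℝ} (h : ‖z * exp z‖ < σ * Real.exp σ) :
    z.re < σ := by
  by_contra! hσz
  have hσ : 0 < σ := pos_of_mul_pos_left ((norm_nonneg _).trans_lt h) (Real.exp_pos σ).le
  have hz : z.re * Real.exp z.re ≤ ‖z * exp z‖ := by
    rw [norm_mul, norm_exp]
    exact mul_le_mul_of_nonneg_right (re_le_norm z) (Real.exp_pos _).le
  have := mul_le_mul hσz (Real.exp_le_exp.2 hσz) (Real.exp_pos σ).le (hσ.le.trans hσz)
  linarith

theorem abs_arg_mul_exp_le {z : ℂ} (hz : z ≠ 0) :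
    |arg (z * exp z)| ≤ lambertArgBound ‖z * exp z‖ z.re := by
  have hnorm : ‖z * exp z‖ = ‖z‖ * Real.exp z.re := by rw [norm_mul, norm_exp]
  calc |arg (z * exp z)| = |((arg z + z.im : ℝ) : Real.Angle).toReal| := by
        rw [← arg_mul_exp_coe_angle hz, arg_coe_angle_toReal_eq_arg]
    _ ≤ |arg z + z.im| := Real.Angle.abs_toReal_coe_le_abs _
    _ ≤ |arg z| + |z.im| := abs_add_le _ _
    _ = lambertArgBound ‖z * exp z‖ z.re := by
      rw [lambertArgBound, abs_arg_eq_arccos hz, hnorm,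
        mul_div_mul_right _ _ (Real.exp_pos _).ne', ← sqrt_sq_eq_abs, exp_neg_two_mul, mul_pow,
        mul_inv_cancel_right₀ (by positivity), ← normSq_eq_norm_sq, normSq_apply]
      ring_nf

theorem exists_re_eq_mul_exp_eq {ζ : ℂ} {x : ℝ} (hζ : ζ ≠ 0) (hx : |x * Real.exp x| ≤ ‖ζ‖)
    (hg : lambertArgBound ‖ζ‖ x = |arg ζ|) : ∃ z : ℂ, z.re = x ∧ z * exp z = ζ := by
  wlog hθ : 0 ≤ arg ζ generalizing ζ
  · have harg : arg (conj ζ) = -arg ζ := by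
      rw [arg_conj, if_neg (by linarith [pi_pos])]
    obtain ⟨z, hre, hz⟩ := this ((map_ne_zero _).2 hζ) (by rwa [norm_conj])
      (by rwa [norm_conj, harg, abs_neg]) (by rw [harg]; linarith)
    exact ⟨conj z, by rwa [conj_re], by rw [exp_conj, ← map_mul, hz, conj_conj]⟩
  set r := ‖ζ‖
  have hr : 0 < r := norm_pos_iff.2 hζ
  have hrad := (sq_mul_exp_neg_two_mul_sub_sq_nonneg_iff hr.le).2 hx
  set z : ℂ := ⟨x, √(r ^ 2 * Real.exp (-2 * x) - x ^ 2)⟩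
  have hnorm : ‖z‖ = r * Real.exp (-x) := by
    refine (sq_eq_sq₀ (norm_nonneg z) (by positivity)).1 ?_
    rw [← normSq_eq_norm_sq, normSq_mk, mul_self_sqrt hrad, mul_pow, Real.exp_neg, exp_neg_two_mul]
    ring
  have hz0 : z ≠ 0 := norm_ne_zero_iff.1 (by rw [hnorm]; positivity)
  have harg : arg z = arccos (x * Real.exp x / r) := by
    rw [arg_of_im_nonneg_of_ne_zero (sqrt_nonneg _) hz0, hnorm, Real.exp_neg]
    congr 1
    field_simp
    rfl
  refine ⟨z, rfl, ext_norm_arg ?_ ?_⟩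
  · rw [norm_mul, norm_exp, hnorm, mul_assoc, ← Real.exp_add, neg_add_cancel, Real.exp_zero,
      mul_one]
  · rw [← arg_coe_angle_eq_iff, arg_mul_exp_coe_angle hz0, harg, ← abs_of_nonneg hθ, ← hg]
    rfl

theorem exists_re_ge_mul_exp_eq {ζ : ℂ} {σ : ℝ} (hζ : ζ ≠ 0) (hσ : σ * Real.exp σ ≤ ‖ζ‖)
    (hθ : |arg ζ| ≤ lambertArgBound ‖ζ‖ σ) : ∃ z : ℂ, σ ≤ z.re ∧ z * exp z = ζ := by
  set r := ‖ζ‖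
  have hr : 0 < r := norm_pos_iff.2 hζ
  have hcont : Continuous fun t ↦ t * Real.exp t := by fun_prop
  obtain ⟨c, ⟨hc0, -⟩, hc : c * Real.exp c = r⟩ := intermediate_value_Icc hr.le hcont.continuousOn
    (show r ∈ Icc (0 * Real.exp 0) (r * Real.exp r) from
      ⟨by simpa using hr.le, le_mul_of_one_le_right hr.le (Real.one_le_exp hr.le)⟩)
  have hle_c : ∀ t ≤ c, t * Real.exp t ≤ r := fun t ht ↦ by
    rcases le_or_gt t 0 with h | h
    · nlinarith [Real.exp_pos t]
    · rw [← hc]; exact mul_le_mul ht (Real.exp_le_exp.2 ht) (Real.exp_pos t).le hc0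
  have hσc : σ ≤ c := by
    by_contra! h
    have : c * Real.exp c < σ * Real.exp σ :=
      mul_lt_mul'' h (Real.exp_lt_exp.2 h) hc0 (Real.exp_pos c).le
    linarith
  have hθ_mem : |arg ζ| ∈ Icc (lambertArgBound r c) (lambertArgBound r σ) := by
    rw [lambertArgBound_eq_zero_of_le hr hc.ge]
    exact ⟨abs_nonneg _, hθ⟩
  obtain ⟨x, ⟨hσx, hxc⟩, hx⟩ :=
    intermediate_value_Icc' hσc (continuous_lambertArgBound r).continuousOn hθ_mem
  rcases le_or_gt (-r) (x * Real.exp x) with h | h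
  · obtain ⟨z, rfl, hz⟩ := exists_re_eq_mul_exp_eq hζ (abs_le.2 ⟨h, hle_c x hxc⟩) hx
    exact ⟨z, hσx, hz⟩
  -- here `lambertArgBound r x = π`, so `ζ` is a negative real, with a real preimage in `[x, 0]`
  have harg : arg ζ = π := by
    rw [lambertArgBound_eq_pi_of_le hr h.le] at hx
    rcases (abs_eq pi_pos.le).1 hx.symm with h' | h'
    · exact h'
    · linarith [neg_pi_lt_arg ζ]
  have hx0 : x ≤ 0 := nonpos_of_mul_nonpos_left (by linarith) (Real.exp_pos x)
  obtain ⟨w, ⟨hxw, -⟩, hw : w * Real.exp w = -r⟩ := intermediate_value_Icc hx0 hcont.continuousOn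
    (show -r ∈ Icc (x * Real.exp x) (0 * Real.exp 0) from ⟨h.le, by simpa using hr.le⟩)
  refine ⟨w, by simpa using hσx.trans hxw, ?_⟩
  rw [← norm_mul_exp_arg_mul_I ζ, harg, exp_pi_mul_I, ← ofReal_exp, ← ofReal_mul, hw]
  push_cast
  ring

end Complex

/-- All values of the (set-valued) Lambert `W` function at `ζ` have real part `< σ` iff
either `σ e^σ > |ζ|`, or `−|ζ| < σ e^σ ≤ |ζ|` and
`|Arg ζ| > arccos(σ e^σ / |ζ|) + √(|ζ|² e^{−2σ} − σ²)`. -/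
theorem lambertW_re_lt (ζ : ℂ) (σ : ℝ) :
    (∀ z : ℂ, z * Complex.exp z = ζ → z.re < σ) ↔
      (σ * Real.exp σ > ‖ζ‖ ∨
        (-‖ζ‖ < σ * Real.exp σ ∧ σ * Real.exp σ ≤ ‖ζ‖ ∧
          |ζ.arg| > Real.arccos (σ * Real.exp σ / ‖ζ‖) +
            Real.sqrt ((‖ζ‖) ^ 2 * Real.exp (-2 * σ) - σ ^ 2))) := by
  change _ ↔ _ ∨ (_ ∧ _ ∧ |ζ.arg| > lambertArgBound ‖ζ‖ σ)
  constructor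
  · intro H
    by_contra! ⟨hσ, hθ⟩
    obtain ⟨z, hσz, hz⟩ : ∃ z : ℂ, σ ≤ z.re ∧ z * Complex.exp z = ζ := by
      rcases eq_or_ne ζ 0 with rfl | hζ
      · refine ⟨0, ?_, by simp⟩
        simpa using nonpos_of_mul_nonpos_left (by simpa using hσ) (Real.exp_pos σ)
      refine Complex.exists_re_ge_mul_exp_eq hζ hσ ?_
      rcases le_or_gt (σ * Real.exp σ) (-‖ζ‖) with h | h
      · rw [lambertArgBound_eq_pi_of_le (norm_pos_iff.2 hζ) h]
        exact Complex.abs_arg_le_pi ζ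
      · exact hθ h hσ
    exact (H z hz).not_ge hσz
  · rintro (h | ⟨hlo, hhi, hθ⟩) z rfl
    · exact Complex.re_lt_of_norm_mul_exp_lt h
    · have hr : 0 < ‖z * Complex.exp z‖ := by linarith
      by_contra! hσz
      linarith [Complex.abs_arg_mul_exp_le (left_ne_zero_of_mul (norm_pos_iff.1 hr)),
        antitone_lambertArgBound hr hσz]
end
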